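/- arXiv:2202.11219 — 14 statements merged into one kernel-verified Lean document; each statement's English description precedes it below -/
import Mathlib

section
/- Fix α ∈ (0, 1/2), ζ ≥ 0 and η_t ≥ 0. Let w ∈ Δ^m have strictly positive coordinates, and let g ∈ ℝ^m satisfy −ζ/w_i ≤ g_i ≤ ζ for all i ∈ [m]. Suppose w' ∈ Δ^m has strictly positive coordinates and, for some constant c ∈ ℝ, satisfies (w'_i)^{α−1} = (w_i)^{α−1} + η_t g_i − c for all i. Then for every i: (w_i)^{α−1} − (1/w_i + 1) η_t ζ ≤ (w'_i)^{α−1} ≤ (w_i)^{α−1} + (1/(min_k w_k) + 1) η_t ζ. -/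
open Finset

/-!
Both `w` and `w'` sum to one, so some coordinate does not increase and some coordinate does not
decrease under the update. Since `x ↦ x ^ (α - 1)` is antitone, comparing the update at these two
coordinates traps the normalising constant `c` between two entries of `η_t g`, hence in
`[-η_t ζ / min_k w_k, η_t ζ]`; the bounds follow by substituting this into the update at `i`.
-/

theorem exists_le_shift_and_exists_shift_le {ι : Type*} [Fintype ι] [Nonempty ι]
    {p c : ℝ} (hp : p ≤ 0) {w w' u : ι → ℝ} (hw : ∀ i, 0 < w i) (hw' : ∀ i, 0 < w' i)
    (hsum : ∑ i, w' i = ∑ i, w i) (hupd : ∀ i, w' i ^ p = w i ^ p + u i - c) :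
    (∃ k, u k ≤ c) ∧ ∃ j, c ≤ u j := by
  obtain ⟨k, -, hk⟩ := exists_le_of_sum_le univ_nonempty hsum.ge
  obtain ⟨j, -, hj⟩ := exists_le_of_sum_le univ_nonempty hsum.le
  have hk' : w' k ^ p ≤ w k ^ p := Real.rpow_le_rpow_of_nonpos (hw k) hk hp
  have hj' : w j ^ p ≤ w' j ^ p := Real.rpow_le_rpow_of_nonpos (hw' j) hj hp
  exact ⟨⟨k, by linarith [hupd k]⟩, ⟨j, by linarith [hupd j]⟩⟩

/-- Lemma (bounds on the OMD update): if `-ζ/w_i ≤ g_i ≤ ζ` and `w'` is obtained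
from `w` by the mirror-descent update with regularizer `R(w) = -(1/α) ∑ i, w i ^ α`
and step size `η_t` (componentwise `(w'_i)^{α-1} = (w_i)^{α-1} + η_t g_i - c`),
then `(w_i)^{α-1} - (1/w_i + 1) η_t ζ ≤ (w'_i)^{α-1} ≤ (w_i)^{α-1} + (1/min_k w_k + 1) η_t ζ`. -/
theorem stmt2 {m : ℕ} (hm : 0 < m) (α ζ ηt : ℝ)
    (hα : α ∈ Set.Ioo (0:ℝ) (1/2)) (hζ : 0 ≤ ζ) (hηt : 0 ≤ ηt)
    (w w' g : Fin m → ℝ)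
    (hw : w ∈ stdSimplex ℝ (Fin m)) (hwpos : ∀ i, 0 < w i)
    (hg : ∀ i, -ζ / w i ≤ g i ∧ g i ≤ ζ)
    (hw' : w' ∈ stdSimplex ℝ (Fin m)) (hw'pos : ∀ i, 0 < w' i)
    (c : ℝ) (hupd : ∀ i, (w' i) ^ (α - 1) = (w i) ^ (α - 1) + ηt * g i - c) :
    ∀ i, (w i) ^ (α - 1) - (1 / w i + 1) * ηt * ζ ≤ (w' i) ^ (α - 1) ∧
      (w' i) ^ (α - 1) ≤ (w i) ^ (α - 1)
        + (1 / (Finset.univ.inf' (Finset.univ_nonempty_iff.mpr (Fin.pos_iff_nonempty.mp hm)) w)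
            + 1) * ηt * ζ := by
  have : Nonempty (Fin m) := Fin.pos_iff_nonempty.mp hm
  obtain ⟨⟨k, hk⟩, ⟨j, hj⟩⟩ := exists_le_shift_and_exists_shift_le
    (by linarith [hα.2] : α - 1 ≤ 0) hwpos hw'pos (by rw [hw.2, hw'.2]) hupd
  set wmin := univ.inf' _ w
  have hwmin : 0 < wmin := (lt_inf'_iff _).2 fun i _ => hwpos i
  have hg_upper : ∀ i, ηt * g i ≤ ηt * ζ := fun i => mul_le_mul_of_nonneg_left (hg i).2 hηt
  have hg_lower : ∀ i, -(ηt * ζ / w i) ≤ ηt * g i := fun i => by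
    simpa only [neg_div, mul_neg, mul_div_assoc] using mul_le_mul_of_nonneg_left (hg i).1 hηt
  have hk_min : ηt * ζ / w k ≤ ηt * ζ / wmin :=
    div_le_div_of_nonneg_left (by positivity) hwmin (inf'_le w (mem_univ k))
  intro i
  have hsplit : ∀ x ≠ 0, (1 / x + 1) * ηt * ζ = ηt * ζ / x + ηt * ζ := fun x hx => by
    field_simp
  rw [hupd i, hsplit _ (hwpos i).ne', hsplit _ hwmin.ne']
  constructor <;> linarith [hg_lower i, hg_upper i, hg_lower k, hg_upper j]
end

section
/- Fix α ∈ (0, 1/2), ζ ≥ 0 and η_t ≥ 0. Let w ∈ Δ^m have strictly positive coordinates, and let g ∈ ℝ^m satisfy −ζ/w_i ≤ g_i ≤ ζ for all i ∈ [m]. Suppose w' ∈ Δ^m has strictly positive coordinates and, for some constant c ∈ ℝ, satisfies (w'_i)^{α−1} = (w_i)^{α−1} + η_t g_i − c for all i. If additionally η_t ζ ≤ (1−α)² (w_i)^α for all i, then for every i: (w'_i)^{α−1} ≤ (w_i)^{α−1} + (m+1) η_t ζ. -/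
/-!
Write `b = 1 - α` and `s = η_t ζ`. It suffices to show `c ≥ -m s`, since then
`(w'_i)^{-b} = (w_i)^{-b} + η_t g_i - c ≤ (w_i)^{-b} + s + m s`. If instead `c < -m s`, the lower
bound `η_t g_i ≥ -s / w_i` gives `w'_i < F(w_i)` with `F(x) = (x^{-b} + m s - s / x)^{-1/b}`.
The smallness assumption makes `F` concave on `[min w, ∞)`, and `F(1/m) = 1/m`, so Jensen's
inequality yields `∑ F(w_i) ≤ 1 = ∑ w'_i`, a contradiction.
-/

open Real Set

theorem concaveOn_rpow_comp_of_hasDerivAt {D : Set ℝ} (hD : Convex ℝ D) {u u' u'' : ℝ → ℝ}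
    {p : ℝ} (hu : ContinuousOn u D) (hu_pos : ∀ x ∈ D, 0 < u x)
    (hu' : ∀ x ∈ interior D, HasDerivAt u (u' x) x)
    (hu'' : ∀ x ∈ interior D, HasDerivAt u' (u'' x) x)
    (hsign : ∀ x ∈ interior D, p * (u x * u'' x + (p - 1) * u' x ^ 2) ≤ 0) :
    ConcaveOn ℝ D (fun x => u x ^ p) := by
  have hne : ∀ x ∈ interior D, u x ≠ 0 := fun x hx => (hu_pos x (interior_subset hx)).ne'
  refine concaveOn_of_hasDerivWithinAt2_nonpos hD
    (hu.rpow_const fun x hx => Or.inl (hu_pos x hx).ne')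
    (fun x hx => ((hu' x hx).rpow_const (Or.inl (hne x hx))).hasDerivWithinAt)
    (fun x hx => (((hu'' x hx).mul_const p).mul
      ((hu' x hx).rpow_const (p := p - 1) (Or.inl (hne x hx)))).hasDerivWithinAt)
    (fun x hx => ?_)
  have hux := hu_pos x (interior_subset hx)
  have hsplit : u x ^ (p - 1) = u x ^ (p - 1 - 1) * u x := by
    rw [← rpow_add_one hux.ne', sub_add_cancel]
  calc _ = u x ^ (p - 1 - 1) * (p * (u x * u'' x + (p - 1) * u' x ^ 2)) := by
        rw [hsplit]; ring
    _ ≤ 0 := mul_nonpos_of_nonneg_of_nonpos (by positivity) (hsign x hx)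

/-- With `b = 1 - α`, `mirrorShift b s M (w i)` is the value that `(w' i) ^ (-b)` exceeds when
`c < -M` and `η_t g_i ≥ -s / w_i`. -/
noncomputable def mirrorShift (b s M x : ℝ) : ℝ := x ^ (-b) + M - s * x⁻¹

section Concavity

variable {a b s x : ℝ}

lemma mul_rpow_sub_one_le_sq (hb : b ≤ 1) (hs : 0 ≤ s) (ha : 0 < a)
    (hsmall : s ≤ b ^ 2 * a ^ (1 - b)) (hx : a ≤ x) : s * x ^ (b - 1) ≤ b ^ 2 :=
  calc s * x ^ (b - 1) ≤ s * a ^ (b - 1) :=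
        mul_le_mul_of_nonneg_left (rpow_le_rpow_of_nonpos ha hx (by linarith)) hs
    _ ≤ b ^ 2 * a ^ (1 - b) * a ^ (b - 1) := by gcongr
    _ = b ^ 2 := by rw [mul_assoc, ← rpow_add ha]; norm_num

lemma mul_inv_eq_mul_rpow_sub_one_mul (hx : 0 < x) :
    s * x⁻¹ = s * x ^ (b - 1) * x ^ (-b) := by
  rw [mul_assoc, ← rpow_add hx, show b - 1 + -b = -1 by ring, rpow_neg_one]

lemma mirrorShift_pos {M : ℝ} (hb0 : 0 < b) (hb1 : b < 1) (hs : 0 ≤ s) (hM : 0 ≤ M)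
    (ha : 0 < a) (hsmall : s ≤ b ^ 2 * a ^ (1 - b)) (hx : a ≤ x) : 0 < mirrorShift b s M x := by
  have hx0 : 0 < x := ha.trans_le hx
  have ht := mul_rpow_sub_one_le_sq hb1.le hs ha hsmall hx
  have hy : 0 < x ^ (-b) := rpow_pos_of_pos hx0 _
  have hb2 : b ^ 2 < 1 := by nlinarith
  rw [mirrorShift, mul_inv_eq_mul_rpow_sub_one_mul hx0]
  nlinarith [mul_le_mul_of_nonneg_right ht hy.le, mul_lt_mul_of_pos_right hb2 hy]

lemma hasDerivAt_mirrorShift (M : ℝ) (hx : 0 < x) :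
    HasDerivAt (mirrorShift b s M) ((-b * x ^ (-b) + s * x⁻¹) / x) x := by
  refine (((hasDerivAt_rpow_const (p := -b) (Or.inl hx.ne')).add_const M).sub
    ((hasDerivAt_inv hx.ne').const_mul s)).congr_deriv ?_
  rw [rpow_sub_one hx.ne']
  field_simp
  ring

lemma hasDerivAt_mirrorShift_deriv (hx : 0 < x) :
    HasDerivAt (fun y => (-b * y ^ (-b) + s * y⁻¹) / y)
      ((b * (b + 1) * x ^ (-b) - 2 * (s * x⁻¹)) / x ^ 2) x := by
  refine ((((hasDerivAt_rpow_const (p := -b) (Or.inl hx.ne')).const_mul (-b)).add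
    ((hasDerivAt_inv hx.ne').const_mul s)).div (hasDerivAt_id x) hx.ne').congr_deriv ?_
  simp only [Pi.add_apply, id]
  rw [rpow_sub_one hx.ne']
  field_simp
  ring

/-- The concavity criterion of `concaveOn_rpow_comp_of_hasDerivAt` for `mirrorShift ^ (-b⁻¹)`,
written in `y = x ^ (-b)` and `t = s * x ^ (b - 1)`. The `y ^ 2` coefficient is
`(1 - b) * t * (b ^ 2 - t)`, which is where the smallness condition `t ≤ b ^ 2` comes from. -/
lemma mirrorShift_concavity_sign {t y M : ℝ} (hb0 : 0 < b) (hb1 : b < 1) (ht0 : 0 ≤ t)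
    (htb : t ≤ b ^ 2) (hy : 0 ≤ y) (hM : 0 ≤ M) (hx : x ≠ 0) :
    -b⁻¹ * ((y + M - t * y) * ((b * (b + 1) * y - 2 * (t * y)) / x ^ 2)
      + (-b⁻¹ - 1) * ((-b * y + t * y) / x) ^ 2) ≤ 0 := by
  have hexpand : -b⁻¹ * ((y + M - t * y) * ((b * (b + 1) * y - 2 * (t * y)) / x ^ 2)
      + (-b⁻¹ - 1) * ((-b * y + t * y) / x) ^ 2)
      = -((1 - b) * t * y ^ 2 * (b ^ 2 - t) + b * M * y * (b ^ 2 + b - 2 * t))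
        / (b ^ 2 * x ^ 2) := by
    field_simp
    ring
  have h1b : 0 ≤ 1 - b := by linarith
  have hquad : 0 ≤ b ^ 2 - t := by linarith
  have hlin : 0 ≤ b ^ 2 + b - 2 * t := by nlinarith
  rw [hexpand]
  exact div_nonpos_of_nonpos_of_nonneg (neg_nonpos.2 (by positivity)) (by positivity)

theorem concaveOn_Ici_mirrorShift_rpow {M : ℝ} (hb0 : 0 < b) (hb1 : b < 1) (hs : 0 ≤ s)
    (hM : 0 ≤ M) (ha : 0 < a) (hsmall : s ≤ b ^ 2 * a ^ (1 - b)) :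
    ConcaveOn ℝ (Ici a) (fun x => mirrorShift b s M x ^ (-b⁻¹)) := by
  refine concaveOn_rpow_comp_of_hasDerivAt (convex_Ici a)
    (fun x hx => (hasDerivAt_mirrorShift M (ha.trans_le hx)).continuousAt.continuousWithinAt)
    (fun x hx => mirrorShift_pos hb0 hb1 hs hM ha hsmall hx)
    (fun x hx => hasDerivAt_mirrorShift M (ha.trans (interior_Ici.subset hx)))
    (fun x hx => hasDerivAt_mirrorShift_deriv (ha.trans (interior_Ici.subset hx))) ?_
  intro x hx
  have hx0 : 0 < x := ha.trans (interior_Ici.subset hx)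
  rw [mirrorShift, mul_inv_eq_mul_rpow_sub_one_mul hx0]
  exact mirrorShift_concavity_sign hb0 hb1 (by positivity)
    (mul_rpow_sub_one_le_sq hb1.le hs ha hsmall (interior_subset hx)) (by positivity) hM hx0.ne'

end Concavity

section Simplex

variable {ι : Type*} [Fintype ι] [Nonempty ι] {a b s : ℝ}

lemma mirrorShift_inv_card_rpow (hb0 : 0 < b) :
    mirrorShift b s (Fintype.card ι * s) (Fintype.card ι : ℝ)⁻¹ ^ (-b⁻¹)
      = (Fintype.card ι : ℝ)⁻¹ := by
  have hn : (0 : ℝ) < Fintype.card ι := by exact_mod_cast Fintype.card_pos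
  rw [mirrorShift, inv_inv, mul_comm s, add_sub_cancel_right, inv_rpow hn.le, ← rpow_neg hn.le,
    neg_neg, ← rpow_mul hn.le, mul_neg, mul_inv_cancel₀ hb0.ne', rpow_neg_one]

theorem sum_mirrorShift_rpow_le_one {w : ι → ℝ} (hw : w ∈ stdSimplex ℝ ι)
    (hb0 : 0 < b) (hb1 : b < 1) (hs : 0 ≤ s) (ha : 0 < a) (haw : ∀ i, a ≤ w i)
    (hsmall : s ≤ b ^ 2 * a ^ (1 - b)) :
    ∑ i, mirrorShift b s (Fintype.card ι * s) (w i) ^ (-b⁻¹) ≤ 1 := by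
  have hn : (0 : ℝ) < Fintype.card ι := by exact_mod_cast Fintype.card_pos
  have hjensen := (concaveOn_Ici_mirrorShift_rpow (M := Fintype.card ι * s) hb0 hb1 hs
    (by positivity) ha hsmall).le_map_sum (t := Finset.univ)
    (w := fun _ => (Fintype.card ι : ℝ)⁻¹) (p := w)
    (fun _ _ => by positivity) (by simp [hn.ne']) (fun i _ => haw i)
  rw [← Finset.smul_sum, ← Finset.smul_sum, hw.2, smul_eq_mul, smul_eq_mul, mul_one,
    mirrorShift_inv_card_rpow hb0] at hjensen
  simpa [hn.ne'] using (inv_mul_le_iff₀ hn).1 hjensen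

theorem neg_card_mul_le_of_mirror_update {w w' : ι → ℝ} {c : ℝ}
    (hw : w ∈ stdSimplex ℝ ι) (hwpos : ∀ i, 0 < w i)
    (hw' : ∑ i, w' i = 1) (hw'pos : ∀ i, 0 < w' i)
    (hb0 : 0 < b) (hb1 : b < 1) (hs : 0 ≤ s) (hsmall : ∀ i, s ≤ b ^ 2 * w i ^ (1 - b))
    (hupd : ∀ i, w i ^ (-b) - s * (w i)⁻¹ - c ≤ w' i ^ (-b)) :
    -(Fintype.card ι * s) ≤ c := by
  by_contra! hc
  obtain ⟨i₀, hi₀⟩ := Finite.exists_min w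
  have hlt : ∀ i, w' i < mirrorShift b s (Fintype.card ι * s) (w i) ^ (-b⁻¹) := by
    intro i
    calc w' i = (w' i ^ (-b)) ^ (-b⁻¹) := by
          rw [← rpow_mul (hw'pos i).le, neg_mul_neg, mul_inv_cancel₀ hb0.ne', rpow_one]
      _ < _ := rpow_lt_rpow_of_neg
          (mirrorShift_pos hb0 hb1 hs (by positivity) (hwpos i₀) (hsmall i₀) (hi₀ i))
          (by rw [mirrorShift]; linarith [hupd i]) (by simpa using hb0)
  have hsum_lt := Finset.sum_lt_sum_of_nonempty Finset.univ_nonempty fun i _ => hlt i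
  have hsum_le := sum_mirrorShift_rpow_le_one hw hb0 hb1 hs (hwpos i₀) hi₀ (hsmall i₀)
  linarith

end Simplex

/-- Lemma (refined upper bound on the OMD update): if `-ζ/w_i ≤ g_i ≤ ζ`, `w'` is
obtained from `w` by the mirror-descent update with regularizer
`R(w) = -(1/α) ∑ i, w i ^ α` and step size `η_t` (componentwise
`(w'_i)^{α-1} = (w_i)^{α-1} + η_t g_i - c`), and additionally
`η_t ζ ≤ (1-α)² (w_i)^α` for all `i`, then
`(w'_i)^{α-1} ≤ (w_i)^{α-1} + (m+1) η_t ζ` for every `i`. -/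
theorem stmt3 {m : ℕ} (hm : 0 < m) (α ζ ηt : ℝ)
    (hα : α ∈ Set.Ioo (0:ℝ) (1/2)) (hζ : 0 ≤ ζ) (hηt : 0 ≤ ηt)
    (w w' g : Fin m → ℝ)
    (hw : w ∈ stdSimplex ℝ (Fin m)) (hwpos : ∀ i, 0 < w i)
    (hg : ∀ i, -ζ / w i ≤ g i ∧ g i ≤ ζ)
    (hw' : w' ∈ stdSimplex ℝ (Fin m)) (hw'pos : ∀ i, 0 < w' i)
    (c : ℝ) (hupd : ∀ i, (w' i) ^ (α - 1) = (w i) ^ (α - 1) + ηt * g i - c)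
    (hsmall : ∀ i, ηt * ζ ≤ (1 - α) ^ 2 * (w i) ^ α) :
    ∀ i, (w' i) ^ (α - 1) ≤ (w i) ^ (α - 1) + ((m : ℝ) + 1) * ηt * ζ := by
  have : Nonempty (Fin m) := ⟨⟨0, hm⟩⟩
  have hexp : α - 1 = -(1 - α) := by ring
  have hg_low : ∀ i, -(ηt * ζ * (w i)⁻¹) ≤ ηt * g i := fun i => by
    simpa [neg_div, div_eq_mul_inv, mul_assoc] using mul_le_mul_of_nonneg_left (hg i).1 hηt
  have hc : -(m * (ηt * ζ)) ≤ c := by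
    simpa using neg_card_mul_le_of_mirror_update (b := 1 - α) hw hwpos hw'.2 hw'pos
      (by linarith [hα.2]) (by linarith [hα.1]) (mul_nonneg hηt hζ)
      (by simpa only [sub_sub_cancel] using hsmall)
      (fun i => by rw [← hexp, hupd i]; linarith [hg_low i])
  intro i
  have hg_up := mul_le_mul_of_nonneg_left (hg i).2 hηt
  rw [hupd i]
  linarith
end

section
/- Fix α ∈ (0, 1/2) and positive integers m, n. There exists T₀ (depending on m, n, α) such that for all integers T ≥ T₀ the following holds. Set γ = 12 n ln T and η = 1/(12 m^{(1+α)/2} n √T ln T). Let w^1 = (1/m, …, 1/m), and suppose for each t ∈ [T]: g^t ∈ ℝ^m satisfies −γ/w^t_i ≤ g^t_i ≤ γ for all i (the small gradient assumption), and w^{t+1} ∈ Δ^m has strictly positive coordinates and satisfies, for some constant c_t ∈ ℝ, (w^{t+1}_i)^{α−1} = (w^t_i)^{α−1} + η g^t_i − c_t for all i. Then for all i ∈ [m] and t ∈ [T]: (w^t_i)^α ≥ 4ηγ and w^t_i ≥ (1/(10√m)) · T^{1/(2(α−1))}. -/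
/-!
Write `u = w ^ (α - 1)`. While every `w_i ^ α ≥ 100 η γ`, the small gradient assumption gives
`η g_i ≥ -u_i / 100`, and a coordinate whose weight does not grow shows `c ≤ η γ`; so a step lowers
each `u_i` by at most 2%, i.e. raises each weight by at most a factor `1.05`. Convexity of
`x ↦ x ^ (α - 1)` at `w'_i`, weighted by `w'_i ^ (2 - α)` and summed over the simplex, together
with the power-mean inequalities, then gives `-c ≤ 1.11 m η γ`. Hence `u` grows by at most
`3 m η γ` per step and stays below `m ^ (1 - α) + 3 T m η γ`, which for the given `η`, `γ` and
large `T` is at most `B ^ (α - 1)` with `B = T ^ (1 / (2 (α - 1))) / (10 √m)`. So `w ≥ B` and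
`w ^ α ≥ B ^ α ≥ 100 η γ`, which closes the induction.
-/

open Finset

lemma sub_rpow_sub_one_mul_rpow_two_sub_le {α w w' : ℝ} (hα : α < 1) (hw : 0 < w) (hw' : 0 < w') :
    (w' ^ (α - 1) - w ^ (α - 1)) * w' ^ (2 - α) ≤ (1 - α) * (w - w') := by
  have bernoulli : w + (2 - α) * (w' - w) ≤ w ^ (α - 1) * w' ^ (2 - α) := by
    have h := one_add_mul_self_le_rpow_one_add (s := w' / w - 1) (p := 2 - α)
      (by linarith [div_pos hw' hw]) (by linarith)
    rw [add_sub_cancel] at h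
    calc w + (2 - α) * (w' - w) = w * (1 + (2 - α) * (w' / w - 1)) := by field_simp
      _ ≤ w * (w' / w) ^ (2 - α) := by gcongr
      _ = w ^ (α - 1) * w' ^ (2 - α) := by
        rw [Real.div_rpow hw'.le hw.le, show α - 1 = 1 - (2 - α) by ring,
          Real.rpow_sub hw 1, Real.rpow_one]
        ring
  have hw'_pow : w' ^ (α - 1) * w' ^ (2 - α) = w' := by
    rw [← Real.rpow_add hw', show α - 1 + (2 - α) = 1 by ring, Real.rpow_one]
  linarith [sub_mul (w' ^ (α - 1)) (w ^ (α - 1)) (w' ^ (2 - α))]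

lemma Fintype.card_pos_of_sum_eq_one {ι : Type*} [Fintype ι] {v : ι → ℝ} (hv1 : ∑ i, v i = 1) :
    0 < Fintype.card ι :=
  have := univ_nonempty_iff.mp (nonempty_of_sum_ne_zero (hv1.trans_ne one_ne_zero))
  Fintype.card_pos

lemma card_rpow_one_sub_le_sum_rpow {ι : Type*} [Fintype ι] {p : ℝ} (hp : 1 ≤ p) {v : ι → ℝ}
    (hv : ∀ i, 0 ≤ v i) (hv1 : ∑ i, v i = 1) : (Fintype.card ι : ℝ) ^ (1 - p) ≤ ∑ i, v i ^ p := by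
  have hcard : (0 : ℝ) < Fintype.card ι := Nat.cast_pos.mpr (Fintype.card_pos_of_sum_eq_one hv1)
  have h := Real.rpow_sum_le_const_mul_sum_rpow_of_nonneg univ hp (fun i _ => hv i)
  rw [hv1, Real.one_rpow, card_univ] at h
  calc (Fintype.card ι : ℝ) ^ (1 - p)
      ≤ (Fintype.card ι : ℝ) ^ (1 - p) * ((Fintype.card ι : ℝ) ^ (p - 1) * ∑ i, v i ^ p) :=
        le_mul_of_one_le_right (by positivity) h
    _ = ∑ i, v i ^ p := by
        rw [← mul_assoc, ← Real.rpow_add hcard, sub_add_sub_cancel', sub_self, Real.rpow_zero,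
          one_mul]

lemma sum_rpow_le_card_rpow_one_sub {ι : Type*} [Fintype ι] {q : ℝ} (hq₀ : 0 ≤ q) (hq₁ : q ≤ 1)
    {v : ι → ℝ} (hv : ∀ i, 0 ≤ v i) (hv1 : ∑ i, v i = 1) :
    ∑ i, v i ^ q ≤ (Fintype.card ι : ℝ) ^ (1 - q) := by
  have hcard : (0 : ℝ) < Fintype.card ι := Nat.cast_pos.mpr (Fintype.card_pos_of_sum_eq_one hv1)
  have h := (Real.concaveOn_rpow hq₀ hq₁).le_map_sum (t := univ)
    (w := fun _ => (Fintype.card ι : ℝ)⁻¹) (p := v) (fun _ _ => by positivity)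
    (by simp [hcard.ne']) (fun i _ => hv i)
  simp only [smul_eq_mul, ← mul_sum, hv1, mul_one] at h
  rw [Real.inv_rpow hcard.le, inv_mul_le_iff₀ hcard, ← div_eq_mul_inv] at h
  rwa [Real.rpow_sub hcard, Real.rpow_one]

lemma le_mul_of_mul_rpow_sub_one_le {α w w' : ℝ} (hα : α ≤ 1 / 2) (hw : 0 < w) (hw' : 0 < w')
    (h : 0.98 * w ^ (α - 1) ≤ w' ^ (α - 1)) : w' ≤ 1.05 * w := by
  have hpow : (1.05 : ℝ) ^ (α - 1) ≤ 0.98 :=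
    calc (1.05 : ℝ) ^ (α - 1) ≤ 1.05 ^ (-(1 / 2) : ℝ) :=
          Real.rpow_le_rpow_of_exponent_le (by norm_num) (by linarith)
      _ = (√1.05)⁻¹ := by rw [Real.rpow_neg (by norm_num), Real.sqrt_eq_rpow]
      _ ≤ 0.98 := by
          rw [inv_le_comm₀ (by positivity) (by norm_num)]
          exact Real.le_sqrt_of_sq_le (by norm_num)
  refine (Real.rpow_le_rpow_iff_of_neg (by positivity) hw' (by linarith : α - 1 < 0)).mp ?_
  calc (1.05 * w) ^ (α - 1) = 1.05 ^ (α - 1) * w ^ (α - 1) := Real.mul_rpow (by norm_num) hw.le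
    _ ≤ 0.98 * w ^ (α - 1) := by gcongr
    _ ≤ w' ^ (α - 1) := h

lemma sum_sub_mul_rpow_two_sub_nonpos {ι : Type*} [Fintype ι] {α : ℝ} (hα : α < 1)
    {w w' : ι → ℝ} (hw : ∀ i, 0 < w i) (hw' : ∀ i, 0 < w' i) (hsum : ∑ i, w' i = ∑ i, w i) :
    ∑ i, (w' i ^ (α - 1) - w i ^ (α - 1)) * w' i ^ (2 - α) ≤ 0 :=
  calc ∑ i, (w' i ^ (α - 1) - w i ^ (α - 1)) * w' i ^ (2 - α)
      ≤ ∑ i, (1 - α) * (w i - w' i) :=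
        sum_le_sum fun i _ => sub_rpow_sub_one_mul_rpow_two_sub_le hα (hw i) (hw' i)
    _ = 0 := by rw [← mul_sum, sum_sub_distrib, hsum, sub_self, mul_zero]

namespace OMD

lemma mul_rpow_sub_one_le {α e c w w' δ : ℝ} (hw : 0 < w) (hw1 : w ≤ 1)
    (hstep : w' ^ (α - 1) = w ^ (α - 1) + δ - c) (hc : c ≤ e) (hδ : -e / w ≤ δ)
    (he : 100 * e ≤ w ^ α) : 0.98 * w ^ (α - 1) ≤ w' ^ (α - 1) := by
  have hpow : w ^ α ≤ w ^ (α - 1) := Real.rpow_le_rpow_of_exponent_ge hw hw1 (by linarith)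
  have hew : e / w ≤ w ^ (α - 1) / 100 := by
    rw [Real.rpow_sub_one hw.ne', div_right_comm]
    gcongr
    linarith
  have hc' : c ≤ w ^ (α - 1) / 100 := by linarith
  rw [neg_div] at hδ
  linarith

lemma neg_mul_rpow_two_sub_le {α e w w' δ : ℝ} (hα₀ : 0 ≤ α) (hα₂ : α ≤ 2) (he₀ : 0 ≤ e)
    (hw : 0 < w) (hw' : 0 < w') (hgrowth : w' ≤ 1.05 * w) (hδ : -e / w ≤ δ) :
    -δ * w' ^ (2 - α) ≤ 1.11 * e * w ^ (1 - α) := by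
  have hpow : (1.05 : ℝ) ^ (2 - α) ≤ 1.11 :=
    calc (1.05 : ℝ) ^ (2 - α) ≤ 1.05 ^ (2 : ℝ) :=
          Real.rpow_le_rpow_of_exponent_le (by norm_num) (by linarith)
      _ ≤ 1.11 := by rw [Real.rpow_two]; norm_num
  have hw'_pow : w' ^ (2 - α) ≤ 1.11 * (w * w ^ (1 - α)) :=
    calc w' ^ (2 - α) ≤ (1.05 * w) ^ (2 - α) := Real.rpow_le_rpow hw'.le hgrowth (by linarith)
      _ = 1.05 ^ (2 - α) * (w * w ^ (1 - α)) := by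
        rw [Real.mul_rpow (by norm_num) hw.le, show 2 - α = 1 + (1 - α) by ring,
          Real.rpow_add hw, Real.rpow_one]
      _ ≤ 1.11 * (w * w ^ (1 - α)) := by gcongr
  calc -δ * w' ^ (2 - α) ≤ e / w * (1.11 * (w * w ^ (1 - α))) := by
        gcongr
        linarith [neg_div w e]
    _ = 1.11 * e * w ^ (1 - α) := by field_simp

variable {ι : Type*} [Fintype ι] {α e c : ℝ} {w w' δ : ι → ℝ}

lemma normalizer_le (hα : α < 1) (hw' : ∀ i, 0 < w' i) (hw1 : ∑ i, w i = 1)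
    (hw'1 : ∑ i, w' i = 1) (hstep : ∀ i, w' i ^ (α - 1) = w i ^ (α - 1) + δ i - c)
    (hδ : ∀ i, δ i ≤ e) : c ≤ e := by
  obtain ⟨i, -, hi⟩ := exists_le_of_sum_le (nonempty_of_sum_ne_zero (hw1.trans_ne one_ne_zero))
    (hw'1.trans hw1.symm).le
  have := Real.rpow_le_rpow_of_nonpos (hw' i) hi (by linarith : α - 1 ≤ 0)
  linarith [hstep i, hδ i]

lemma neg_normalizer_mul_sum_le (hα₀ : 0 ≤ α) (hα : α ≤ 1 / 2) (hw : ∀ i, 0 < w i)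
    (hw' : ∀ i, 0 < w' i) (hw1 : ∑ i, w i = 1) (hw'1 : ∑ i, w' i = 1)
    (hstep : ∀ i, w' i ^ (α - 1) = w i ^ (α - 1) + δ i - c)
    (hδ : ∀ i, -e / w i ≤ δ i ∧ δ i ≤ e) (he₀ : 0 ≤ e) (he : ∀ i, 100 * e ≤ w i ^ α) :
    -c * ∑ i, w' i ^ (2 - α) ≤ 1.11 * e * Fintype.card ι ^ α := by
  have hc := normalizer_le (by linarith) hw' hw1 hw'1 hstep fun i => (hδ i).2
  have hw_le_one : ∀ i, w i ≤ 1 := fun i =>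
    hw1 ▸ single_le_sum (fun j _ => (hw j).le) (mem_univ i)
  have hgrowth : ∀ i, w' i ≤ 1.05 * w i := fun i =>
    le_mul_of_mul_rpow_sub_one_le hα (hw i) (hw' i)
      (mul_rpow_sub_one_le (hw i) (hw_le_one i) (hstep i) hc (hδ i).1 (he i))
  have hterm : ∀ i, -δ i * w' i ^ (2 - α) ≤ 1.11 * e * w i ^ (1 - α) := fun i =>
    neg_mul_rpow_two_sub_le hα₀ (by linarith) he₀ (hw i) (hw' i) (hgrowth i) (hδ i).1
  have hdiff : ∀ i, w' i ^ (α - 1) - w i ^ (α - 1) = δ i - c := fun i => by rw [hstep i]; ring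
  have htangent :=
    sum_sub_mul_rpow_two_sub_nonpos (by linarith : α < 1) hw hw' (hw'1.trans hw1.symm)
  simp only [hdiff] at htangent
  have hpower_mean := sum_rpow_le_card_rpow_one_sub (by linarith : (0 : ℝ) ≤ 1 - α)
    (by linarith) (fun i => (hw i).le) hw1
  rw [sub_sub_cancel] at hpower_mean
  calc -c * ∑ i, w' i ^ (2 - α)
      = ∑ i, (δ i - c) * w' i ^ (2 - α) + ∑ i, -δ i * w' i ^ (2 - α) := by
        rw [mul_sum, ← sum_add_distrib]; exact sum_congr rfl fun i _ => by ring
    _ ≤ 0 + ∑ i, 1.11 * e * w i ^ (1 - α) := add_le_add htangent (sum_le_sum fun i _ => hterm i)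
    _ ≤ 1.11 * e * Fintype.card ι ^ α := by rw [zero_add, ← mul_sum]; gcongr

lemma neg_normalizer_le (hα₀ : 0 ≤ α) (hα : α ≤ 1 / 2) (hw : ∀ i, 0 < w i) (hw' : ∀ i, 0 < w' i)
    (hw1 : ∑ i, w i = 1) (hw'1 : ∑ i, w' i = 1)
    (hstep : ∀ i, w' i ^ (α - 1) = w i ^ (α - 1) + δ i - c)
    (hδ : ∀ i, -e / w i ≤ δ i ∧ δ i ≤ e) (he₀ : 0 ≤ e) (he : ∀ i, 100 * e ≤ w i ^ α) :
    -c ≤ 1.11 * Fintype.card ι * e := by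
  have hcard : (0 : ℝ) < Fintype.card ι := Nat.cast_pos.mpr (Fintype.card_pos_of_sum_eq_one hw1)
  rcases le_or_gt 0 c with hc₀ | hc₀
  · linarith [(by positivity : 0 ≤ 1.11 * (Fintype.card ι : ℝ) * e)]
  have key := neg_normalizer_mul_sum_le hα₀ hα hw hw' hw1 hw'1 hstep hδ he₀ he
  have hpower_mean :=
    card_rpow_one_sub_le_sum_rpow (by linarith : (1 : ℝ) ≤ 2 - α) (fun i => (hw' i).le) hw'1
  rw [show 1 - (2 - α) = α - 1 by ring] at hpower_mean
  rw [← div_mul_cancel₀ ((Fintype.card ι : ℝ) ^ α) hcard.ne', ← Real.rpow_sub_one hcard.ne'] at key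
  refine le_of_mul_le_mul_right ?_ (Real.rpow_pos_of_pos hcard (α - 1))
  calc -c * Fintype.card ι ^ (α - 1) ≤ -c * ∑ i, w' i ^ (2 - α) := by gcongr; linarith
    _ ≤ 1.11 * Fintype.card ι * e * Fintype.card ι ^ (α - 1) := by linarith

lemma rpow_sub_one_le_add (hα₀ : 0 ≤ α) (hα : α ≤ 1 / 2) (hw : ∀ i, 0 < w i)
    (hw' : ∀ i, 0 < w' i) (hw1 : ∑ i, w i = 1) (hw'1 : ∑ i, w' i = 1)
    (hstep : ∀ i, w' i ^ (α - 1) = w i ^ (α - 1) + δ i - c)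
    (hδ : ∀ i, -e / w i ≤ δ i ∧ δ i ≤ e) (he₀ : 0 ≤ e) (he : ∀ i, 100 * e ≤ w i ^ α) (i : ι) :
    w' i ^ (α - 1) ≤ w i ^ (α - 1) + 3 * Fintype.card ι * e := by
  have hc := neg_normalizer_le hα₀ hα hw hw' hw1 hw'1 hstep hδ he₀ he
  have hcard : (1 : ℝ) ≤ Fintype.card ι := Nat.one_le_cast.mpr (Fintype.card_pos_of_sum_eq_one hw1)
  linarith [hstep i, (hδ i).2, le_mul_of_one_le_left he₀ hcard,
    (by positivity : (0 : ℝ) ≤ Fintype.card ι * e)]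

lemma le_iterate {T : ℕ} {B : ℝ} {w δ : ℕ → ι → ℝ} [Nonempty ι] (hα₀ : 0 ≤ α) (hα : α ≤ 1 / 2)
    (hw₀ : w 0 = fun _ => (Fintype.card ι : ℝ)⁻¹)
    (hw : ∀ t < T, (∀ i, 0 < w (t + 1) i) ∧ ∑ i, w (t + 1) i = 1 ∧
      ∃ c, ∀ i, w (t + 1) i ^ (α - 1) = w t i ^ (α - 1) + δ t i - c)
    (hδ : ∀ t < T, ∀ i, -e / w t i ≤ δ t i ∧ δ t i ≤ e) (he₀ : 0 ≤ e) (hB : 0 < B)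
    (hBα : 100 * e ≤ B ^ α)
    (hBT : (Fintype.card ι : ℝ) ^ (1 - α) + T * (3 * Fintype.card ι * e) ≤ B ^ (α - 1)) :
    ∀ t ≤ T, ∀ i, B ≤ w t i := by
  have hcard : (0 : ℝ) < Fintype.card ι := Nat.cast_pos.mpr Fintype.card_pos
  have hdrift : 0 ≤ 3 * Fintype.card ι * e := by positivity
  have le_of_potential : ∀ t ≤ T, ∀ i, 0 < w t i →
      w t i ^ (α - 1) ≤ Fintype.card ι ^ (1 - α) + t * (3 * Fintype.card ι * e) → B ≤ w t i :=
    fun t ht i hpos hpot => (Real.rpow_le_rpow_iff_of_neg hpos hB (by linarith)).mp <|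
      hpot.trans <| le_trans (by gcongr) hBT
  have invariant : ∀ t ≤ T, (∀ i, 0 < w t i) ∧ ∑ i, w t i = 1 ∧
      ∀ i, w t i ^ (α - 1) ≤ Fintype.card ι ^ (1 - α) + t * (3 * Fintype.card ι * e) := by
    intro t
    induction t with
    | zero =>
      intro _
      refine ⟨fun i => by simp [hw₀, hcard], by simp [hw₀, hcard.ne'], fun i => ?_⟩
      rw [hw₀, Real.inv_rpow hcard.le, ← Real.rpow_neg hcard.le, neg_sub]
      simp
    | succ t ih =>
      intro ht
      obtain ⟨hpos, hsum, hpot⟩ := ih (by omega)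
      obtain ⟨hpos', hsum', c, hstep⟩ := hw t (by omega)
      have he : ∀ i, 100 * e ≤ w t i ^ α := fun i =>
        hBα.trans (Real.rpow_le_rpow hB.le (le_of_potential t (by omega) i (hpos i) (hpot i)) hα₀)
      refine ⟨hpos', hsum', fun i => ?_⟩
      have := rpow_sub_one_le_add hα₀ hα hpos hpos' hsum hsum' hstep (hδ t (by omega)) he₀ he i
      push_cast
      linarith [hpot i]
  intro t ht i
  obtain ⟨hpos, -, hpot⟩ := invariant t ht
  exact le_of_potential t ht i (hpos i) (hpot i)

end OMD

lemma hundred_mul_inv_le_rpow {α m T : ℝ} (hα : α < 1) (hm : 1 ≤ m) (hT : 0 < T)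
    (hTE : 1000 ≤ T ^ (1 / 2 + α / (2 * (α - 1)))) :
    100 * (m ^ ((1 + α) / 2) * √T)⁻¹ ≤ (1 / (10 * √m) * T ^ (1 / (2 * (α - 1)))) ^ α := by
  have hsm : 0 < √m := Real.sqrt_pos.mpr (by linarith)
  have hM : (10 * √m) ^ α ≤ 10 * m ^ ((1 + α) / 2) := by
    rw [Real.mul_rpow (by norm_num) hsm.le, Real.sqrt_eq_rpow, ← Real.rpow_mul (by linarith)]
    exact mul_le_mul
      ((Real.rpow_le_rpow_of_exponent_le (by norm_num) hα.le).trans_eq (Real.rpow_one 10))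
      (Real.rpow_le_rpow_of_exponent_le hm (by linarith)) (by positivity) (by norm_num)
  have hexp : T ^ (1 / 2 + α / (2 * (α - 1))) = T ^ (1 / (2 * (α - 1)) * α) * √T := by
    rw [Real.sqrt_eq_rpow, ← Real.rpow_add hT]
    ring_nf
  rw [hexp] at hTE
  rw [one_div (10 * √m), Real.mul_rpow (by positivity) (by positivity),
    Real.inv_rpow (by positivity), ← Real.rpow_mul hT.le, inv_mul_eq_div, ← div_eq_mul_inv,
    div_le_div_iff₀ (by positivity) (by positivity)]
  linarith [mul_le_mul_of_nonneg_left hTE (by positivity : (0 : ℝ) ≤ m ^ ((1 + α) / 2))]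

lemma rpow_add_mul_inv_le_rpow_sub_one {α m T : ℝ} (hα₀ : 0 ≤ α) (hα : α ≤ 1 / 2) (hm : 1 ≤ m)
    (hT : 100 * m ≤ T) :
    m ^ (1 - α) + T * (3 * m * (m ^ ((1 + α) / 2) * √T)⁻¹) ≤
      (1 / (10 * √m) * T ^ (1 / (2 * (α - 1)))) ^ (α - 1) := by
  have hm₀ : 0 < m := by linarith
  have hT₀ : 0 < T := by linarith
  set X := m ^ ((1 - α) / 2) with hX
  have hX₀ : 0 < X := by positivity
  have hXsq : m ^ (1 - α) = X * X := by rw [hX, ← Real.rpow_add hm₀]; ring_nf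
  have hXm : m ^ ((1 + α) / 2) * X = m := by
    rw [hX, ← Real.rpow_add hm₀, show (1 + α) / 2 + (1 - α) / 2 = 1 by ring, Real.rpow_one]
  have hXT : 10 * X ≤ √T :=
    calc 10 * X ≤ 10 * √m := by
          rw [hX, Real.sqrt_eq_rpow]
          gcongr 10 * ?_
          exact Real.rpow_le_rpow_of_exponent_le hm (by linarith)
      _ = √(100 * m) := by rw [Real.sqrt_mul (by norm_num), show (100 : ℝ) = 10 ^ 2 by norm_num,
            Real.sqrt_sq (by norm_num)]
      _ ≤ √T := Real.sqrt_le_sqrt hT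
  have hB : (1 / (10 * √m) * T ^ (1 / (2 * (α - 1)))) ^ (α - 1) = 10 ^ (1 - α) * X * √T := by
    rw [Real.mul_rpow (by positivity) (by positivity), one_div, Real.inv_rpow (by positivity),
      ← Real.rpow_neg (by positivity), neg_sub, Real.mul_rpow (by norm_num) (by positivity),
      Real.sqrt_eq_rpow, Real.sqrt_eq_rpow, ← Real.rpow_mul hm₀.le, ← Real.rpow_mul hT₀.le,
      show 1 / (2 * (α - 1)) * (α - 1) = 1 / 2 by field_simp [show α - 1 ≠ 0 by linarith], hX]
    ring_nf
  have h10 : (3.1 : ℝ) ≤ 10 ^ (1 - α) := by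
    calc (3.1 : ℝ) ≤ √10 := Real.le_sqrt_of_sq_le (by norm_num)
      _ = 10 ^ (1 / 2 : ℝ) := Real.sqrt_eq_rpow 10
      _ ≤ 10 ^ (1 - α) := Real.rpow_le_rpow_of_exponent_le (by norm_num) (by linarith)
  have hdrift : T * (3 * m * (m ^ ((1 + α) / 2) * √T)⁻¹) = 3 * X * √T := by
    have hsT := Real.sq_sqrt hT₀.le
    have : 0 < √T := by positivity
    field_simp
    linear_combination -√T ^ 2 * hXm - m * hsT
  rw [hB, hdrift, hXsq]
  linarith [mul_le_mul_of_nonneg_left hXT hX₀.le,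
    mul_le_mul_of_nonneg_right h10 (by positivity : 0 ≤ X * √T)]

lemma one_half_add_div_pos {α : ℝ} (hα : α < 1 / 2) : 0 < 1 / 2 + α / (2 * (α - 1)) := by
  have h : α / (2 * (1 - α)) < 1 / 2 := by rw [div_lt_iff₀ (by linarith)]; linarith
  rw [show 2 * (α - 1) = -(2 * (1 - α)) by ring, div_neg]
  linarith

lemma eta_mul_gamma_le {M n s L : ℝ} (hM : 0 < M) (hs : 0 < s) (hn : 0 ≤ n) (hL : 0 < L) :
    1 / (12 * M * n * s * L) * (12 * n * L) ≤ (M * s)⁻¹ := by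
  rcases hn.eq_or_lt with rfl | hn
  · simp only [mul_zero, zero_mul]
    positivity
  · exact le_of_eq (by field_simp)

theorem stmt4_general {m n : ℕ} (α : ℝ)
    (hα : α ∈ Set.Ioo (0:ℝ) (1/2)) :
    ∃ T₀ : ℕ, ∀ T : ℕ, T₀ ≤ T →
      ∀ γ η : ℝ,
        γ = 12 * n * Real.log T →
        η = 1 / (12 * (m : ℝ) ^ ((1 + α) / 2) * n * Real.sqrt T * Real.log T) →
        ∀ w g : ℕ → Fin m → ℝ,
          w 0 = (fun _ => (m : ℝ)⁻¹) →
          (∀ t < T, ∀ i, -γ / w t i ≤ g t i ∧ g t i ≤ γ) →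
          (∀ t < T, w (t+1) ∈ stdSimplex ℝ (Fin m) ∧ (∀ i, 0 < w (t+1) i) ∧
            ∃ c : ℝ, ∀ i, (w (t+1) i) ^ (α - 1) = (w t i) ^ (α - 1) + η * g t i - c) →
          ∀ t < T, ∀ i, 4 * η * γ ≤ (w t i) ^ α ∧
            (1 / (10 * Real.sqrt m)) * (T : ℝ) ^ (1 / (2 * (α - 1))) ≤ w t i := by
  obtain ⟨hα₀, hα⟩ := hα
  have hlarge : ∀ᶠ T : ℕ in Filter.atTop,
      1000 ≤ (T : ℝ) ^ (1 / 2 + α / (2 * (α - 1))) ∧ 100 * m ≤ T ∧ 2 ≤ T :=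
    ((tendsto_rpow_atTop (one_half_add_div_pos hα)).comp tendsto_natCast_atTop_atTop
      |>.eventually_ge_atTop 1000).and
      ((Filter.eventually_ge_atTop _).and (Filter.eventually_ge_atTop _))
  obtain ⟨T₀, hT₀⟩ := Filter.eventually_atTop.mp hlarge
  refine ⟨T₀, fun T hT γ η hγ hη w g hw₀ hg hw t ht i => ?_⟩
  obtain ⟨hTE, hTm, hT2⟩ := hT₀ T hT
  have : Nonempty (Fin m) := ⟨i⟩
  have hm : (1 : ℝ) ≤ m := Nat.one_le_cast.mpr i.pos
  have hlog : 0 < Real.log T := Real.log_pos (by exact_mod_cast hT2)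
  have hη₀ : 0 ≤ η := by rw [hη]; positivity
  have he₀ : 0 ≤ η * γ := by rw [hγ]; positivity
  have he : η * γ ≤ ((m : ℝ) ^ ((1 + α) / 2) * √T)⁻¹ := by
    rw [hη, hγ]
    exact eta_mul_gamma_le (by positivity) (by positivity) n.cast_nonneg hlog
  set B := 1 / (10 * √(m : ℝ)) * (T : ℝ) ^ (1 / (2 * (α - 1)))
  have hBα : 100 * (η * γ) ≤ B ^ α :=
    le_trans (by gcongr) (hundred_mul_inv_le_rpow (by linarith) hm (by positivity) hTE)
  have hBT : (Fintype.card (Fin m) : ℝ) ^ (1 - α) + T * (3 * Fintype.card (Fin m) * (η * γ)) ≤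
      B ^ (α - 1) := by
    rw [Fintype.card_fin]
    exact le_trans (by gcongr)
      (rpow_add_mul_inv_le_rpow_sub_one hα₀.le hα.le hm (by exact_mod_cast hTm))
  have hδ : ∀ t < T, ∀ i, -(η * γ) / w t i ≤ η * g t i ∧ η * g t i ≤ η * γ := fun t ht i =>
    ⟨(mul_le_mul_of_nonneg_left (hg t ht i).1 hη₀).trans_eq' (by ring),
      mul_le_mul_of_nonneg_left (hg t ht i).2 hη₀⟩
  have hwB : B ≤ w t i := OMD.le_iterate hα₀.le hα.le (by rw [Fintype.card_fin]; exact hw₀)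
    (fun t ht => ⟨(hw t ht).2.1, (hw t ht).1.2, (hw t ht).2.2⟩) hδ he₀ (by positivity) hBα hBT
    t ht.le i
  refine ⟨?_, hwB⟩
  calc 4 * η * γ ≤ 100 * (η * γ) := by linarith
    _ ≤ B ^ α := hBα
    _ ≤ w t i ^ α := Real.rpow_le_rpow (by positivity) hwB hα₀.le

/-- Corollary (#1): under the small gradient assumption, for `T` sufficiently large,
the OMD iterates with regularizer `R(w) = -(1/α) ∑ i, w i ^ α`, `γ = 12 n ln T` and
`η = 1/(12 m^{(1+α)/2} n √T ln T)` satisfy `(w^t_i)^α ≥ 4ηγ` and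
`w^t_i ≥ (1/(10√m)) T^{1/(2(α-1))}` for all `i`, `t`.
(Time is 0-indexed: `w 0` is the uniform initial weight vector.) -/
theorem stmt4 {m n : ℕ} (hm : 0 < m) (hn : 0 < n) (α : ℝ)
    (hα : α ∈ Set.Ioo (0:ℝ) (1/2)) :
    ∃ T₀ : ℕ, ∀ T : ℕ, T₀ ≤ T →
      ∀ γ η : ℝ,
        γ = 12 * n * Real.log T →
        η = 1 / (12 * (m : ℝ) ^ ((1 + α) / 2) * n * Real.sqrt T * Real.log T) →
        ∀ w g : ℕ → Fin m → ℝ,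
          w 0 = (fun _ => (m : ℝ)⁻¹) →
          (∀ t < T, ∀ i, -γ / w t i ≤ g t i ∧ g t i ≤ γ) →
          (∀ t < T, w (t+1) ∈ stdSimplex ℝ (Fin m) ∧ (∀ i, 0 < w (t+1) i) ∧
            ∃ c : ℝ, ∀ i, (w (t+1) i) ^ (α - 1) = (w t i) ^ (α - 1) + η * g t i - c) →
          ∀ t < T, ∀ i, 4 * η * γ ≤ (w t i) ^ α ∧
            (1 / (10 * Real.sqrt m)) * (T : ℝ) ^ (1 / (2 * (α - 1))) ≤ w t i :=
  stmt4_general α hα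
end

section
/- Fix α ∈ (0, 1/2) and positive integers m, n. There exists T₀ (depending on m, n, α) such that for all integers T ≥ T₀ the following holds. Set γ = 12 n ln T and η = 1/(12 m^{(1+α)/2} n √T ln T). Let w^1 = (1/m, …, 1/m), and suppose for each t ∈ [T]: g^t ∈ ℝ^m satisfies −γ/w^t_i ≤ g^t_i ≤ γ for all i (the small gradient assumption), and w^{t+1} ∈ Δ^m has strictly positive coordinates and satisfies, for some constant c_t ∈ ℝ, (w^{t+1}_i)^{α−1} = (w^t_i)^{α−1} + η g^t_i − c_t for all i. Then for all i ∈ [m] and t ∈ [T]: −32 (w^t_i)^{1−α} η γ ≤ w^t_i − w^{t+1}_i ≤ 2 (w^t_i)^{2−α} (m+1) η γ. -/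
/-!
Write `ε = ηγ = 1 / (m^{(1+α)/2} √T)` and look at one step `x = w^t`, `y = w^{t+1}`,
`G = η g^t`, so that `y_i^{α-1} = x_i^{α-1} + G_i - c` with `-ε/x_i ≤ G_i ≤ ε`.

Since `∑ y = ∑ x`, some coordinate does not increase, which forces `c ≤ ε`. Conversely, if
`c ≤ -Kε` with `K = (2-2α)(m+1) - 1`, then `y_i ≤ x_i (1 + v_i)^{-1/(1-α)}` with
`v_i = ε (K x_i^{1-α} - x_i^{-α})`. A second-order expansion turns `∑ y = 1` into
`∑ x v ≤ 4 ∑ x v²`; but Chebyshev's sum inequality gives `m ∑ x v ≥ ε (K - m)`, while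
`∑ x v² ≤ m ε² (K² + 1)`, which is absurd for small `ε`. Hence
`-2ε/x_i ≤ y_i^{α-1} - x_i^{α-1} ≤ (2-2α)(m+1)ε`, and Bernoulli's inequality for the exponent
`-1/(1-α)` converts this into the two bounds on `x_i - y_i`.

The smallness needed in each step is `ε x_i^{-α} ≤ 1/8`. Along the trajectory
`(w^t_i)^{α-1} ≤ m + 2(m+1)tε ≤ 3(m+1)√T`, so `ε (w^t_i)^{-α} ≤ (3(m+1))^s (√T)^{s-1}` with
`s = α/(1-α) < 1`, which tends to `0` as `T → ∞`.
-/

open Finset Real Filter Topology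

lemma inv_one_add_le {u : ℝ} (hu : -(1 / 2) ≤ u) : (1 + u)⁻¹ ≤ 1 - u + 2 * u ^ 2 := by
  rw [inv_le_iff_one_le_mul₀' (by linarith)]
  nlinarith [mul_nonneg (sq_nonneg u) (by linarith : (0 : ℝ) ≤ 1 + 2 * u)]

lemma rpow_neg_le_inv_one_add_mul {q v : ℝ} (hq : 1 ≤ q) (hv : -1 ≤ v) (hqv : 0 < 1 + q * v) :
    (1 + v) ^ (-q) ≤ (1 + q * v)⁻¹ := by
  rw [rpow_neg (by linarith)]
  exact inv_anti₀ hqv (one_add_mul_self_le_rpow_one_add hv hq)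

lemma rpow_neg_le_quadratic {q v : ℝ} (hq1 : 1 ≤ q) (hq2 : q ≤ 2) (hv : -(1 / 8) ≤ v) :
    (1 + v) ^ (-q) ≤ 1 - q * v + 2 * q ^ 2 * v ^ 2 := by
  have hqv : -(1 / 2) ≤ q * v := by
    rcases le_total 0 v with h | h <;> nlinarith
  calc (1 + v) ^ (-q) ≤ (1 + q * v)⁻¹ :=
        rpow_neg_le_inv_one_add_mul hq1 (by linarith) (by linarith)
    _ ≤ 1 - q * v + 2 * q ^ 2 * v ^ 2 := by linarith [inv_one_add_le hqv]

lemma one_sub_mul_le_rpow_neg {q u : ℝ} (hq : 1 ≤ q) (hu : 0 ≤ u) :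
    1 - q * u ≤ (1 + u) ^ (-q) := by
  have hu1 : 0 < 1 + u := by linarith
  have hinv : 1 - u ≤ (1 + u)⁻¹ := by
    rw [← one_div, le_div_iff₀ hu1]; nlinarith
  have h := one_add_mul_self_le_rpow_one_add (s := (1 + u)⁻¹ - 1)
    (by linarith [inv_pos.2 hu1]) hq
  rw [add_sub_cancel, inv_rpow hu1.le, ← rpow_neg hu1.le] at h
  nlinarith

lemma one_le_inv_one_sub {α : ℝ} (hα0 : 0 ≤ α) (hα1 : α < 1) : 1 ≤ (1 - α)⁻¹ :=
  one_le_inv₀ (by linarith) |>.2 (by linarith)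

lemma inv_one_sub_le_two {α : ℝ} (hα : α ≤ 1 / 2) : (1 - α)⁻¹ ≤ 2 := by
  rw [inv_le_comm₀ (by linarith) (by norm_num)]; linarith

lemma rpow_sub_one_eq_inv_rpow_one_sub {x : ℝ} (hx : 0 ≤ x) (α : ℝ) :
    x ^ (α - 1) = (x ^ (1 - α))⁻¹ := by
  rw [← rpow_neg hx, neg_sub]

lemma rpow_neg_eq_rpow_one_sub_div {x : ℝ} (hx : 0 < x) (α : ℝ) :
    x ^ (-α) = x ^ (1 - α) / x := by
  rw [← rpow_sub_one hx.ne']; ring_nf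

lemma mul_rpow_neg_inv_rpow {α x a : ℝ} (hα : α < 1) (hx : 0 ≤ x) (ha : 0 ≤ a) :
    (x * a ^ (-(1 - α)⁻¹)) ^ (α - 1) = x ^ (α - 1) * a := by
  have h : -(1 - α)⁻¹ * (α - 1) = 1 := by
    field_simp [(by linarith : (1 - α) ≠ 0)]; ring
  rw [mul_rpow hx (rpow_nonneg ha _), ← rpow_mul ha, h, rpow_one]

lemma le_mul_rpow_of_rpow_mul_le {α x y a : ℝ} (hα : α < 1) (hx : 0 < x) (hy : 0 < y)
    (ha : 0 < a) (h : x ^ (α - 1) * a ≤ y ^ (α - 1)) : y ≤ x * a ^ (-(1 - α)⁻¹) := by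
  rwa [← rpow_le_rpow_iff_of_neg (z := α - 1) (by positivity) hy (by linarith),
    mul_rpow_neg_inv_rpow hα hx.le ha.le]

lemma mul_rpow_le_of_le_rpow_mul {α x y a : ℝ} (hα : α < 1) (hx : 0 < x) (hy : 0 < y)
    (ha : 0 < a) (h : y ^ (α - 1) ≤ x ^ (α - 1) * a) : x * a ^ (-(1 - α)⁻¹) ≤ y := by
  rwa [← rpow_le_rpow_iff_of_neg (z := α - 1) hy (by positivity) (by linarith),
    mul_rpow_neg_inv_rpow hα hx.le ha.le]

lemma rpow_neg_le_of_rpow_sub_one_le {α x D : ℝ} (hα0 : 0 ≤ α) (hα1 : α < 1) (hx : 0 < x)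
    (h : x ^ (α - 1) ≤ D) : x ^ (-α) ≤ D ^ (α / (1 - α)) := by
  have hexp : (α - 1) * (α / (1 - α)) = -α := by
    field_simp [(by linarith : (1 - α) ≠ 0)]; ring
  rw [← hexp, rpow_mul hx.le]
  exact rpow_le_rpow (rpow_nonneg hx.le _) h (div_nonneg hα0 (by linarith))

lemma sub_le_of_rpow_sub_one_le_add {α δ x y : ℝ} (hα0 : 0 ≤ α) (hα1 : α < 1)
    (hδ : 0 ≤ δ) (hx : 0 < x) (hy : 0 < y) (h : y ^ (α - 1) ≤ x ^ (α - 1) + δ) :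
    x - y ≤ (1 - α)⁻¹ * δ * x ^ (2 - α) := by
  set a := x ^ (1 - α)
  have ha : 0 < a := rpow_pos_of_pos hx _
  have hxa : x ^ (α - 1) = a⁻¹ := rpow_sub_one_eq_inv_rpow_one_sub hx.le α
  have hx2 : x ^ (2 - α) = a * x := by rw [← rpow_add_one hx.ne']; ring_nf
  have hy' : x * (1 + δ * a) ^ (-(1 - α)⁻¹) ≤ y := by
    refine mul_rpow_le_of_le_rpow_mul hα1 hx hy (by positivity) (h.trans_eq ?_)
    rw [hxa]; field_simp
  have hbern := one_sub_mul_le_rpow_neg (one_le_inv_one_sub hα0 hα1)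
    (by positivity : 0 ≤ δ * a)
  rw [hx2]
  nlinarith [mul_le_mul_of_nonneg_left hbern hx.le]

lemma sub_le_of_sub_div_le_rpow_sub_one {α δ x y : ℝ} (hα0 : 0 ≤ α) (hα1 : α < 1)
    (hδ : 0 ≤ δ) (hx : 0 < x) (hy : 0 < y) (hsmall : δ * x ^ (-α) ≤ (1 - α) / 2)
    (h : x ^ (α - 1) - δ / x ≤ y ^ (α - 1)) :
    y - x ≤ 2 * (1 - α)⁻¹ * δ * x ^ (1 - α) := by
  set q := (1 - α)⁻¹ with hq_def
  set a := x ^ (1 - α)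
  have hq : 1 ≤ q := one_le_inv_one_sub hα0 hα1
  have ha : 0 < a := rpow_pos_of_pos hx _
  have hxa : x ^ (α - 1) = a⁻¹ := rpow_sub_one_eq_inv_rpow_one_sub hx.le α
  rw [rpow_neg_eq_rpow_one_sub_div hx] at hsmall
  have hu : 0 ≤ δ * (a / x) := by positivity
  have hqu : q * (δ * (a / x)) ≤ 1 / 2 := by
    calc q * (δ * (a / x)) ≤ q * ((1 - α) / 2) := by gcongr
      _ = 1 / 2 := by rw [hq_def]; field_simp [(by linarith : (1 - α) ≠ 0)]
  have hy' : y ≤ x * (1 + -(δ * (a / x))) ^ (-q) := by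
    refine le_mul_rpow_of_rpow_mul_le hα1 hx hy (by nlinarith) (h.trans_eq' ?_)
    rw [hxa]; field_simp; ring
  have hu' : (1 + -(δ * (a / x))) ^ (-q) ≤ 1 + 2 * q * (δ * (a / x)) := by
    calc (1 + -(δ * (a / x))) ^ (-q) ≤ (1 + q * -(δ * (a / x)))⁻¹ :=
          rpow_neg_le_inv_one_add_mul hq (by nlinarith) (by nlinarith)
      _ ≤ 1 - q * -(δ * (a / x)) + 2 * (q * -(δ * (a / x))) ^ 2 :=
          inv_one_add_le (by nlinarith)
      _ ≤ 1 + 2 * q * (δ * (a / x)) := by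
          nlinarith [mul_nonneg (mul_nonneg (by linarith : (0 : ℝ) ≤ q) hu)
            (by linarith : 0 ≤ 1 / 2 - q * (δ * (a / x)))]
  have hxu : x * (δ * (a / x)) = δ * a := by field_simp
  nlinarith [mul_le_mul_of_nonneg_left hu' hx.le]

lemma mul_sq_sub_rpow_le {α K x : ℝ} (hα : α ≤ 1 / 2) (hK : 0 ≤ K) (hx0 : 0 < x)
    (hx1 : x ≤ 1) : x * (K * x ^ (1 - α) - x ^ (-α)) ^ 2 ≤ K ^ 2 + 1 := by
  set a := x ^ (1 - α)
  have hxα : x ^ (-α) = a / x := rpow_neg_eq_rpow_one_sub_div hx0 α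
  have ha1 : a ≤ 1 := rpow_le_one hx0.le hx1 (by linarith)
  have hxa : x * a ^ 2 ≤ 1 := by nlinarith [rpow_nonneg hx0.le (1 - α)]
  have ha2 : a ^ 2 / x ≤ 1 := by
    rw [← rpow_natCast, ← rpow_mul hx0.le, ← rpow_sub_one hx0.ne']
    exact rpow_le_one hx0.le hx1 (by push_cast; linarith)
  have hexp : x * (K * a - a / x) ^ 2 = K ^ 2 * (x * a ^ 2) - 2 * K * a ^ 2 + a ^ 2 / x := by
    field_simp; ring
  rw [hxα, hexp]
  nlinarith [mul_le_mul_of_nonneg_left hxa (sq_nonneg K), mul_nonneg hK (sq_nonneg a)]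

section Simplex

variable {ι : Type*} [Fintype ι]

lemma le_one_of_sum_eq_one {x : ι → ℝ} (hx : ∀ i, 0 ≤ x i) (hs : ∑ i, x i = 1) (i : ι) :
    x i ≤ 1 :=
  hs ▸ single_le_sum (fun j _ => hx j) (mem_univ i)

lemma sum_rpow_mul_sum_le_card_mul_sum_rpow_add_one {x : ι → ℝ} (hx : ∀ i, 0 < x i) {a : ℝ}
    (ha : 0 ≤ a) : (∑ i, x i ^ a) * ∑ i, x i ≤ Fintype.card ι * ∑ i, x i ^ (a + 1) := by
  have hmono : Monovary (fun i => x i ^ a) x := fun i j hij => rpow_le_rpow (hx _).le hij.le ha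
  simpa only [rpow_add_one (hx _).ne'] using hmono.sum_mul_sum_le_card_mul_sum

lemma sub_card_le_card_mul_sum_mul_sub_rpow {x : ι → ℝ} (hx : ∀ i, 0 < x i)
    (hs : ∑ i, x i = 1) {α K : ℝ} (hα0 : 0 ≤ α) (hα1 : α ≤ 1)
    (hK : Fintype.card ι ≤ K) :
    K - Fintype.card ι ≤
      Fintype.card ι * ∑ i, x i * (K * x i ^ (1 - α) - x i ^ (-α)) := by
  have hterm : ∀ i, x i * (K * x i ^ (1 - α) - x i ^ (-α)) =
      K * x i ^ (1 - α + 1) - x i ^ (1 - α) := fun i => by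
    rw [rpow_add_one (hx i).ne', show -α = 1 - α - 1 by ring, rpow_sub_one (hx i).ne']
    field_simp [(hx i).ne']
  have hcheb := sum_rpow_mul_sum_le_card_mul_sum_rpow_add_one hx (a := 1 - α) (by linarith)
  have hone : 1 ≤ ∑ i, x i ^ (1 - α) := hs.symm.trans_le <| sum_le_sum fun i _ => by
    simpa using rpow_le_rpow_of_exponent_ge (hx i) (le_one_of_sum_eq_one (fun j => (hx j).le) hs i)
      (by linarith : 1 - α ≤ 1)
  rw [hs, mul_one] at hcheb
  simp only [hterm, sum_sub_distrib, ← mul_sum]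
  nlinarith [Nat.cast_nonneg (α := ℝ) (Fintype.card ι)]

lemma sum_mul_le_four_mul_sum_mul_sq {x v : ι → ℝ} {q : ℝ} (hx : ∀ i, 0 ≤ x i)
    (hs : ∑ i, x i = 1) (hq1 : 1 ≤ q) (hq2 : q ≤ 2) (hv : ∀ i, -(1 / 8) ≤ v i)
    (h : 1 ≤ ∑ i, x i * (1 + v i) ^ (-q)) : ∑ i, x i * v i ≤ 4 * ∑ i, x i * v i ^ 2 := by
  have hquad : ∑ i, x i * (1 + v i) ^ (-q) ≤
      ∑ i, x i * (1 - q * v i + 2 * q ^ 2 * v i ^ 2) :=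
    sum_le_sum fun i _ => mul_le_mul_of_nonneg_left (rpow_neg_le_quadratic hq1 hq2 (hv i)) (hx i)
  have hexp : ∑ i, x i * (1 - q * v i + 2 * q ^ 2 * v i ^ 2) =
      1 - q * ∑ i, x i * v i + 2 * q ^ 2 * ∑ i, x i * v i ^ 2 := by
    calc _ = ∑ i, (x i - q * (x i * v i) + 2 * q ^ 2 * (x i * v i ^ 2)) :=
          sum_congr rfl fun i _ => by ring
      _ = _ := by rw [sum_add_distrib, sum_sub_distrib, ← mul_sum, ← mul_sum, hs]
  have hB : 0 ≤ ∑ i, x i * v i ^ 2 := sum_nonneg fun i _ => by have := hx i; positivity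
  have hA : ∑ i, x i * v i ≤ 2 * q * ∑ i, x i * v i ^ 2 := by
    have : q * (∑ i, x i * v i) ≤ q * (2 * q * ∑ i, x i * v i ^ 2) := by nlinarith
    exact le_of_mul_le_mul_left this (by linarith)
  nlinarith

end Simplex

namespace TsallisOMD

variable {ι : Type*} [Fintype ι]

lemma normalizer_le [Nonempty ι] {α ε c : ℝ} {x y G : ι → ℝ} (hα : α < 1)
    (hy : ∀ i, 0 < y i) (hsum : ∑ i, y i = ∑ i, x i)
    (hupd : ∀ i, y i ^ (α - 1) = x i ^ (α - 1) + G i - c) (hG : ∀ i, G i ≤ ε) : c ≤ ε := by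
  obtain ⟨i, -, hi⟩ := exists_le_of_sum_le univ_nonempty hsum.le
  have := rpow_le_rpow_of_nonpos (hy i) hi (by linarith : α - 1 ≤ 0)
  linarith [hupd i, hG i]

lemma neg_mul_lt_normalizer {α ε c K : ℝ} {x y G : ι → ℝ} (hα0 : 0 ≤ α)
    (hα : α ≤ 1 / 2) (hε : 0 < ε) (hx : ∀ i, 0 < x i) (hxs : ∑ i, x i = 1) (hy : ∀ i, 0 < y i)
    (hys : ∑ i, y i = 1) (hupd : ∀ i, y i ^ (α - 1) = x i ^ (α - 1) + G i - c)
    (hG : ∀ i, -(ε / x i) ≤ G i) (hsmall : ∀ i, ε * x i ^ (-α) ≤ 1 / 8)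
    (hK : 4 * (Fintype.card ι : ℝ) ^ 2 * (K ^ 2 + 1) * ε < K - Fintype.card ι) :
    -(K * ε) < c := by
  by_contra! hc
  set m : ℝ := ((Fintype.card ι : ℕ) : ℝ)
  have hmK : m ≤ K := by
    have : 0 ≤ 4 * m ^ 2 * (K ^ 2 + 1) * ε := by positivity
    linarith
  have hK0 : 0 ≤ K := (Nat.cast_nonneg _).trans hmK
  set v : ι → ℝ := fun i => ε * (K * x i ^ (1 - α) - x i ^ (-α)) with hv_def
  have hv : ∀ i, -(1 / 8) ≤ v i := fun i => by
    have : 0 ≤ ε * (K * x i ^ (1 - α)) := by have := hx i; positivity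
    nlinarith [hsmall i]
  have hyv : ∀ i, y i ≤ x i * (1 + v i) ^ (-(1 - α)⁻¹) := fun i => by
    refine le_mul_rpow_of_rpow_mul_le (by linarith) (hx i) (hy i) (by linarith [hv i]) ?_
    have hexp : x i ^ (α - 1) * (1 + v i) = x i ^ (α - 1) + K * ε - ε / x i := by
      dsimp only [v]
      rw [rpow_sub_one_eq_inv_rpow_one_sub (hx i).le, rpow_neg_eq_rpow_one_sub_div (hx i)]
      have := rpow_pos_of_pos (hx i) (1 - α)
      field_simp
      ring
    rw [hexp, hupd i]
    linarith [hG i]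
  have hfirst := sum_mul_le_four_mul_sum_mul_sq (fun i => (hx i).le) hxs
    (one_le_inv_one_sub hα0 (by linarith)) (inv_one_sub_le_two hα) hv
    (hys.symm.trans_le (sum_le_sum fun i _ => hyv i))
  have hA : ε * (K - m) ≤ m * ∑ i, x i * v i := by
    have := sub_card_le_card_mul_sum_mul_sub_rpow hx hxs hα0 (by linarith) hmK
    simp only [hv_def, mul_left_comm (x _) ε, ← mul_sum]
    nlinarith
  have hB : ∑ i, x i * v i ^ 2 ≤ m * (ε ^ 2 * (K ^ 2 + 1)) := by
    have := sum_le_card_nsmul univ (fun i => x i * v i ^ 2) (ε ^ 2 * (K ^ 2 + 1)) fun i _ => by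
      simpa only [hv_def, mul_pow, mul_left_comm (x i)] using mul_le_mul_of_nonneg_left
        (mul_sq_sub_rpow_le hα hK0 (hx i) (le_one_of_sum_eq_one (fun j => (hx j).le) hxs i))
        (sq_nonneg ε)
    simpa using this
  nlinarith [Nat.cast_nonneg (α := ℝ) (Fintype.card ι)]

lemma step_bounds {α ε c : ℝ} {x y G : ι → ℝ} (hα0 : 0 ≤ α) (hα : α ≤ 1 / 2)
    (hε : 0 < ε) (hx : ∀ i, 0 < x i) (hxs : ∑ i, x i = 1) (hy : ∀ i, 0 < y i)
    (hys : ∑ i, y i = 1) (hupd : ∀ i, y i ^ (α - 1) = x i ^ (α - 1) + G i - c)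
    (hG : ∀ i, -(ε / x i) ≤ G i ∧ G i ≤ ε) (hsmall : ∀ i, ε * x i ^ (-α) ≤ 1 / 8)
    (hε_small : 4 * (Fintype.card ι : ℝ) ^ 2 *
      (((2 - 2 * α) * (Fintype.card ι + 1) - 1) ^ 2 + 1) * ε <
        (1 - 2 * α) * (Fintype.card ι + 1)) (i : ι) :
    y i ^ (α - 1) ≤ x i ^ (α - 1) + (2 - 2 * α) * (Fintype.card ι + 1) * ε ∧
      -(8 * ε * x i ^ (1 - α)) ≤ x i - y i ∧
      x i - y i ≤ 2 * x i ^ (2 - α) * (Fintype.card ι + 1) * ε := by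
  have : Nonempty ι := ⟨i⟩
  set m : ℝ := ((Fintype.card ι : ℕ) : ℝ)
  have hc_lb := neg_mul_lt_normalizer hα0 hα hε hx hxs hy hys hupd (fun j => (hG j).1) hsmall
    (K := (2 - 2 * α) * (m + 1) - 1) (by linarith)
  have hc_ub := normalizer_le (by linarith) hy (hys.trans hxs.symm) hupd (fun j => (hG j).2)
  have hx1 := le_one_of_sum_eq_one (fun j => (hx j).le) hxs i
  have hup : y i ^ (α - 1) ≤ x i ^ (α - 1) + (2 - 2 * α) * (m + 1) * ε := by
    linarith [hupd i, (hG i).2]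
  refine ⟨hup, ?_, ?_⟩
  · have hε_div : ε ≤ ε / x i := le_div_self hε.le (hx i) hx1
    have hlow := sub_le_of_sub_div_le_rpow_sub_one hα0 (by linarith) (by positivity : 0 ≤ 2 * ε)
      (hx i) (hy i) (by linarith [hsmall i])
      (by linarith [hupd i, (hG i).1, mul_div_assoc 2 ε (x i)])
    have := mul_le_mul_of_nonneg_right (inv_one_sub_le_two hα)
      (mul_nonneg (by positivity) (rpow_nonneg (hx i).le _) : 0 ≤ 4 * ε * x i ^ (1 - α))
    linarith
  · have hδ : 0 ≤ (2 - 2 * α) * (m + 1) * ε := by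
      have : (0 : ℝ) ≤ m := Nat.cast_nonneg _
      have : 0 ≤ 2 - 2 * α := by linarith
      positivity
    have hcoef : (1 - α)⁻¹ * ((2 - 2 * α) * (m + 1) * ε) = 2 * (m + 1) * ε := by
      field_simp [(by linarith : (1 - α) ≠ 0)]
    have := sub_le_of_rpow_sub_one_le_add hα0 (by linarith) hδ (hx i) (hy i) hup
    rw [hcoef] at this
    linarith

theorem trajectory_bounds [Nonempty ι] {α ε : ℝ} {T : ℕ} (hα0 : 0 ≤ α)
    (hα : α ≤ 1 / 2) (hε : 0 < ε) (w G : ℕ → ι → ℝ) (hw0 : w 0 = fun _ => (Fintype.card ι : ℝ)⁻¹)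
    (hG : ∀ t < T, ∀ i, -(ε / w t i) ≤ G t i ∧ G t i ≤ ε)
    (hupd : ∀ t < T, w (t + 1) ∈ stdSimplex ℝ ι ∧ (∀ i, 0 < w (t + 1) i) ∧
      ∃ c : ℝ, ∀ i, w (t + 1) i ^ (α - 1) = w t i ^ (α - 1) + G t i - c)
    (hε_small : 4 * (Fintype.card ι : ℝ) ^ 2 *
      (((2 - 2 * α) * (Fintype.card ι + 1) - 1) ^ 2 + 1) * ε <
        (1 - 2 * α) * (Fintype.card ι + 1))
    (hε_small' :
      ε * (Fintype.card ι + 2 * (Fintype.card ι + 1) * T * ε) ^ (α / (1 - α)) ≤ 1 / 8) :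
    ∀ t < T, ∀ i, -(8 * ε * w t i ^ (1 - α)) ≤ w t i - w (t + 1) i ∧
      w t i - w (t + 1) i ≤ 2 * w t i ^ (2 - α) * (Fintype.card ι + 1) * ε := by
  set m : ℝ := ((Fintype.card ι : ℕ) : ℝ)
  have hm : 1 ≤ m := Nat.one_le_cast.2 Fintype.card_pos
  have hstep : ∀ t < T, (∀ i, 0 < w t i) → ∑ i, w t i = 1 →
      (∀ i, w t i ^ (α - 1) ≤ m + 2 * (m + 1) * T * ε) → ∀ i,
        w (t + 1) i ^ (α - 1) ≤ w t i ^ (α - 1) + (2 - 2 * α) * (m + 1) * ε ∧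
          -(8 * ε * w t i ^ (1 - α)) ≤ w t i - w (t + 1) i ∧
          w t i - w (t + 1) i ≤ 2 * w t i ^ (2 - α) * (m + 1) * ε := by
    intro t ht hpos hsum hbound
    obtain ⟨hsimplex, hpos', c, hc⟩ := hupd t ht
    refine step_bounds hα0 hα hε hpos hsum hpos' hsimplex.2 hc (hG t ht) (fun i => ?_) hε_small
    calc ε * w t i ^ (-α) ≤ ε * (m + 2 * (m + 1) * T * ε) ^ (α / (1 - α)) := by
          gcongr
          exact rpow_neg_le_of_rpow_sub_one_le hα0 (by linarith) (hpos i) (hbound i)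
      _ ≤ 1 / 8 := hε_small'
  have hinv : ∀ t ≤ T, (∀ i, 0 < w t i) ∧ ∑ i, w t i = 1 ∧
      ∀ i, w t i ^ (α - 1) ≤ m + 2 * (m + 1) * t * ε := by
    intro t
    induction t with
    | zero =>
      intro _
      simp only [hw0, sum_const, card_univ, nsmul_eq_mul, CharP.cast_eq_zero]
      refine ⟨fun _ => by positivity, mul_inv_cancel₀ (by positivity), fun _ => ?_⟩
      rw [inv_rpow (by positivity), ← rpow_neg (by positivity), neg_sub]
      calc m ^ (1 - α) ≤ m ^ (1 : ℝ) := rpow_le_rpow_of_exponent_le hm (by linarith)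
        _ = m + 2 * (m + 1) * 0 * ε := by simp
    | succ t ih =>
      intro ht
      obtain ⟨hpos, hsum, hbound⟩ := ih (by omega)
      obtain ⟨hsimplex, hpos', -⟩ := hupd t (by omega)
      refine ⟨hpos', hsimplex.2, fun i => ?_⟩
      have hT : 2 * (m + 1) * t * ε ≤ 2 * (m + 1) * T * ε := by
        gcongr; exact_mod_cast (by omega : t ≤ T)
      have := (hstep t (by omega) hpos hsum (fun j => (hbound j).trans (by linarith)) i).1
      have : (2 - 2 * α) * (m + 1) * ε ≤ 2 * (m + 1) * ε := by
        have : 0 ≤ α * (m + 1) * ε := by positivity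
        linarith
      push_cast
      linarith [hbound i]
  intro t ht i
  obtain ⟨hpos, hsum, hbound⟩ := hinv t ht.le
  have hT : 2 * (m + 1) * t * ε ≤ 2 * (m + 1) * T * ε := by gcongr
  exact (hstep t ht hpos hsum (fun j => (hbound j).trans (by linarith)) i).2

lemma tendsto_one_div_mul_sqrt_natCast (b : ℝ) :
    Tendsto (fun T : ℕ => 1 / (b * √T)) atTop (𝓝 0) := by
  have h := (tendsto_inv_atTop_zero.comp (tendsto_sqrt_atTop.comp
    tendsto_natCast_atTop_atTop)).const_mul b⁻¹
  simpa only [Function.comp_def, one_div, mul_inv, mul_zero] using h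

lemma one_div_mul_mul_rpow_le {b m r s : ℝ} (hb : 1 ≤ b) (hm : 0 ≤ m) (hr : 1 ≤ r)
    (hs : 0 ≤ s) :
    1 / (b * r) * (m + 2 * (m + 1) * r ^ 2 * (1 / (b * r))) ^ s ≤
      (3 * (m + 1)) ^ s * r ^ (s - 1) := by
  have hr0 : 0 < r := by linarith
  have hD : m + 2 * (m + 1) * r ^ 2 * (1 / (b * r)) ≤ 3 * (m + 1) * r := by
    have : r ^ 2 * (1 / (b * r)) ≤ r := by
      rw [show r ^ 2 * (1 / (b * r)) = r / b by field_simp]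
      exact div_le_self hr0.le hb
    nlinarith
  calc 1 / (b * r) * (m + 2 * (m + 1) * r ^ 2 * (1 / (b * r))) ^ s
      ≤ r⁻¹ * (3 * (m + 1) * r) ^ s := by
        gcongr
        · rw [one_div]; exact inv_anti₀ hr0 (le_mul_of_one_le_left hr0.le hb)
    _ = (3 * (m + 1)) ^ s * r ^ (s - 1) := by
        rw [mul_rpow (by positivity) hr0.le, rpow_sub_one hr0.ne']; ring

lemma eventually_one_div_mul_sqrt_mul_rpow_le {b m s : ℝ} (hb : 1 ≤ b) (hm : 0 ≤ m)
    (hs0 : 0 ≤ s) (hs1 : s < 1) : ∀ᶠ T : ℕ in atTop,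
      1 / (b * √T) * (m + 2 * (m + 1) * T * (1 / (b * √T))) ^ s ≤ 1 / 8 := by
  have hlim : Tendsto (fun T : ℕ => (3 * (m + 1)) ^ s * (√T) ^ (s - 1)) atTop (𝓝 0) := by
    have := ((tendsto_rpow_neg_atTop (by linarith : 0 < 1 - s)).comp
      (tendsto_sqrt_atTop.comp tendsto_natCast_atTop_atTop)).const_mul ((3 * (m + 1)) ^ s)
    simpa [neg_sub] using this
  filter_upwards [hlim.eventually_lt_const (by norm_num : (0 : ℝ) < 1 / 8),
    eventually_ge_atTop 1] with T hT hT1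
  have hr : 1 ≤ √(T : ℝ) := one_le_sqrt.2 (by exact_mod_cast hT1)
  have := one_div_mul_mul_rpow_le hb hm hr hs0
  rw [sq_sqrt (Nat.cast_nonneg _)] at this
  linarith

end TsallisOMD

/-- Corollary (#2): under the small gradient assumption, for `T` sufficiently large,
consecutive OMD iterates with regularizer `R(w) = -(1/α) ∑ i, w i ^ α`,
`γ = 12 n ln T` and `η = 1/(12 m^{(1+α)/2} n √T ln T)` satisfy
`-32 (w^t_i)^{1-α} η γ ≤ w^t_i - w^{t+1}_i ≤ 2 (w^t_i)^{2-α} (m+1) η γ`.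
(Time is 0-indexed: `w 0` is the uniform initial weight vector.) -/
theorem stmt5 {m n : ℕ} (hm : 0 < m) (hn : 0 < n) (α : ℝ)
    (hα : α ∈ Set.Ioo (0:ℝ) (1/2)) :
    ∃ T₀ : ℕ, ∀ T : ℕ, T₀ ≤ T →
      ∀ γ η : ℝ,
        γ = 12 * n * Real.log T →
        η = 1 / (12 * (m : ℝ) ^ ((1 + α) / 2) * n * Real.sqrt T * Real.log T) →
        ∀ w g : ℕ → Fin m → ℝ,
          w 0 = (fun _ => (m : ℝ)⁻¹) →
          (∀ t < T, ∀ i, -γ / w t i ≤ g t i ∧ g t i ≤ γ) →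
          (∀ t < T, w (t+1) ∈ stdSimplex ℝ (Fin m) ∧ (∀ i, 0 < w (t+1) i) ∧
            ∃ c : ℝ, ∀ i, (w (t+1) i) ^ (α - 1) = (w t i) ^ (α - 1) + η * g t i - c) →
          ∀ t < T, ∀ i,
            -32 * (w t i) ^ (1 - α) * η * γ ≤ w t i - w (t+1) i ∧
            w t i - w (t+1) i ≤ 2 * (w t i) ^ (2 - α) * ((m : ℝ) + 1) * η * γ := by
  obtain ⟨hα0, hα⟩ := hα
  have : Nonempty (Fin m) := ⟨⟨0, hm⟩⟩
  set b : ℝ := (m : ℝ) ^ ((1 + α) / 2)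
  have hb : 1 ≤ b := one_le_rpow (by exact_mod_cast hm) (by linarith)
  have hσ : 0 < (1 - 2 * α) * ((m : ℝ) + 1) := mul_pos (by linarith) (by linarith)
  obtain ⟨T₀, hT₀⟩ := eventually_atTop.1 <| (eventually_gt_atTop 1).and <|
    (((TsallisOMD.tendsto_one_div_mul_sqrt_natCast b).const_mul
      (4 * (m : ℝ) ^ 2 * (((2 - 2 * α) * (m + 1) - 1) ^ 2 + 1))).eventually_lt_const
        (by simpa using hσ)).and <|
    TsallisOMD.eventually_one_div_mul_sqrt_mul_rpow_le (s := α / (1 - α)) hb (Nat.cast_nonneg m)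
      (div_nonneg hα0.le (by linarith)) ((div_lt_one (by linarith)).2 (by linarith))
  refine ⟨T₀, fun T hT γ η hγ hη w g hw0 hg hupd t ht i => ?_⟩
  obtain ⟨hT1, hε_small, hε_small'⟩ := hT₀ T hT
  have hlog : 0 < Real.log T := log_pos (by exact_mod_cast hT1)
  have hηγ : η * γ = 1 / (b * √T) := by rw [hη, hγ]; field_simp
  have hη0 : 0 ≤ η := by rw [hη]; positivity
  have hε : 0 < η * γ := by rw [hηγ]; positivity
  have hG : ∀ t < T, ∀ i, -(η * γ / w t i) ≤ η * g t i ∧ η * g t i ≤ η * γ :=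
    fun t ht i =>
    ⟨by linarith [mul_le_mul_of_nonneg_left (hg t ht i).1 hη0,
      show η * (-γ / w t i) = -(η * γ / w t i) by ring],
      mul_le_mul_of_nonneg_left (hg t ht i).2 hη0⟩
  obtain ⟨hlow, hup⟩ := TsallisOMD.trajectory_bounds hα0.le hα.le hε w _
    (by simpa using hw0) hG hupd (by simpa [hηγ] using hε_small)
    (by simpa [hηγ] using hε_small') t ht i
  simp only [Fintype.card_fin] at hup
  have hw : 0 ≤ w t i := by
    cases t with
    | zero => rw [hw0]; positivity
    | succ s => exact ((hupd s (by omega)).2.1 i).le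
  have := mul_nonneg (rpow_nonneg hw (1 - α)) hε.le
  constructor <;> linarith
end

section
/- Fix α ∈ (0, 1/2) and positive integers m, n. There exists T₀ (depending on m, n, α) such that for all integers T ≥ T₀ the following holds. Set γ = 12 n ln T and η = 1/(12 m^{(1+α)/2} n √T ln T). Let w^1 = (1/m, …, 1/m), and suppose for each t ∈ [T]: g^t ∈ ℝ^m satisfies −γ/w^t_i ≤ g^t_i ≤ γ for all i (the small gradient assumption), and w^{t+1} ∈ Δ^m has strictly positive coordinates and satisfies, for some constant c_t ∈ ℝ, (w^{t+1}_i)^{α−1} = (w^t_i)^{α−1} + η g^t_i − c_t for all i. Define, for t ∈ {0, 1, …, T}, φ(t) = ∑_{s=1}^t g^s · (w^s − w^{s+1}) + 19 m² γ² η (T − t) − 4 γ ∑_{i=1}^m ln w^{t+1}_i. Then φ(t) ≤ φ(t−1) for every t ∈ [T]. -/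
/-!
Write `a = x ^ (α - 1)` and `b = y ^ (α - 1)` for two consecutive iterates, so that
`b - a = η g - c`. Convexity of `b ↦ b ^ (1 / (α - 1))` gives
`(1 - α) (x - y) ≤ x ^ (2 - α) (b - a)` and its mirror image, and summing these over the simplex
pins the multiplier: `-(27/20) m η γ ≤ c ≤ η γ`. The lower bound needs the invariant
`30 η γ ≤ x ^ α`, which makes a step shrink `a` by at most the factor `14/15`; then `y ≤ (15/14)² x`
and `y ^ (2 - α) ≤ 27/20 · x ^ (2 - α)`. Each step raises `a` by at most `3 m η γ`, so over `T`
steps `a ≤ m + 3 m η γ T`, and as `η γ = 1 / (m ^ ((1 + α) / 2) √T)` this keeps the invariant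
alive once `T` is large.

Per coordinate, `g (x - y) + 4 γ (log x - log y)` is at most `10 γ (b - a)` when `a ≤ b` and at
most `0` otherwise. With `b - a ≤ (1 + 27/20 m) η γ`, summing gives `19 m² γ² η`, which is exactly
the slack by which the potential decreases.
-/

open Finset Real Filter

lemma one_add_mul_self_le_rpow_one_add_of_le_neg_one {s p : ℝ} (hs : -1 < s) (hp : p ≤ -1) :
    1 + p * s ≤ (1 + s) ^ p := by
  have hs1 : 0 < 1 + s := by linarith
  have h := one_add_mul_self_le_rpow_one_add (s := (1 + s)⁻¹ - 1)
    (by linarith [inv_pos.2 hs1]) (show 1 ≤ -p by linarith)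
  rw [add_sub_cancel, inv_rpow hs1.le, ← rpow_neg hs1.le, neg_neg] at h
  have hsq : 0 ≤ -p * s ^ 2 / (1 + s) := div_nonneg (by nlinarith [sq_nonneg s]) hs1.le
  have hid : 1 + -p * ((1 + s)⁻¹ - 1) = 1 + p * s + -p * s ^ 2 / (1 + s) := by
    field_simp; ring
  linarith

lemma rpow_two_sub_eq_div {α x : ℝ} (hx : 0 < x) : x ^ (2 - α) = x / x ^ (α - 1) := by
  rw [show 2 - α = 1 - (α - 1) by ring, rpow_sub hx, rpow_one]

/-- The tangent line at `x ^ (α - 1)` of the convex function `b ↦ b ^ (1 / (α - 1))`. -/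
lemma one_sub_mul_sub_le_rpow_mul_rpow_sub {α x y : ℝ} (hα0 : 0 ≤ α) (hα1 : α < 1)
    (hx : 0 < x) (hy : 0 < y) :
    (1 - α) * (x - y) ≤ x ^ (2 - α) * (y ^ (α - 1) - x ^ (α - 1)) := by
  have hp : α - 1 < 0 := by linarith
  have ha : 0 < x ^ (α - 1) := rpow_pos_of_pos hx _
  have hq : (α - 1)⁻¹ ≤ -1 := by
    rw [← one_div, div_le_iff_of_neg hp]; linarith
  have h := one_add_mul_self_le_rpow_one_add_of_le_neg_one
    (s := y ^ (α - 1) / x ^ (α - 1) - 1)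
    (by linarith [div_pos (rpow_pos_of_pos hy (α - 1)) ha]) hq
  rw [add_sub_cancel, div_rpow (rpow_pos_of_pos hy _).le ha.le, rpow_rpow_inv hy.le hp.ne,
    rpow_rpow_inv hx.le hp.ne, le_div_iff₀ hx] at h
  have e : (1 + (α - 1)⁻¹ * (y ^ (α - 1) / x ^ (α - 1) - 1)) * x
      = x - x ^ (2 - α) * (y ^ (α - 1) - x ^ (α - 1)) / (1 - α) := by
    rw [rpow_two_sub_eq_div hx, show 1 - α = -(α - 1) by ring]
    field_simp
    ring
  rw [e, sub_le_iff_le_add, ← sub_le_iff_le_add', le_div_iff₀ (by linarith)] at h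
  linarith

lemma one_sub_mul_log_sub_log_le {α x y : ℝ} (hx : 0 < x) (hy : 0 < y) :
    (1 - α) * (log x - log y) ≤ (y ^ (α - 1) - x ^ (α - 1)) / x ^ (α - 1) := by
  have ha : 0 < x ^ (α - 1) := rpow_pos_of_pos hx _
  have h := log_le_sub_one_of_pos (div_pos (rpow_pos_of_pos hy (α - 1)) ha)
  rw [log_div (rpow_pos_of_pos hy _).ne' ha.ne', log_rpow hx, log_rpow hy,
    div_sub_one ha.ne'] at h
  linarith

lemma sq_mul_le_of_mul_rpow_sub_one_le {α k x y : ℝ} (hα : α ≤ 1 / 2)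
    (hx : 0 < x) (hy : 0 < y) (hk0 : 0 < k) (hk1 : k ≤ 1)
    (h : k * x ^ (α - 1) ≤ y ^ (α - 1)) : k ^ 2 * y ≤ x := by
  have hp : α - 1 < 0 := by linarith
  have h1 := rpow_le_rpow_of_nonpos (mul_pos hk0 (rpow_pos_of_pos hx _)) h (inv_nonpos.2 hp.le)
  rw [rpow_rpow_inv hy.le hp.ne, mul_rpow hk0.le (rpow_pos_of_pos hx _).le,
    rpow_rpow_inv hx.le hp.ne] at h1
  have h2 : k ^ (α - 1)⁻¹ ≤ k ^ (-2 : ℝ) := by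
    apply rpow_le_rpow_of_exponent_ge hk0 hk1
    rw [le_inv_of_neg (by norm_num) hp]; linarith
  rw [rpow_neg hk0.le, rpow_two] at h2
  calc k ^ 2 * y ≤ k ^ 2 * ((k ^ 2)⁻¹ * x) := by gcongr; nlinarith
    _ = x := by field_simp

lemma rpow_le_rpow_of_rpow_sub_one_le {α x B : ℝ} (hα0 : 0 ≤ α) (hα1 : α < 1) (hx : 0 < x)
    (h : x ^ (α - 1) ≤ B) : B ^ (α / (α - 1)) ≤ x ^ α := by
  have hα : α - 1 < 0 := by linarith
  have := rpow_le_rpow_of_nonpos (rpow_pos_of_pos hx _) h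
    (div_nonpos_of_nonneg_of_nonpos hα0 hα.le)
  rwa [← rpow_mul hx.le, mul_div_cancel₀ _ hα.ne] at this

section PowerSums

variable {ι : Type*} [Fintype ι] {x : ι → ℝ}

lemma univ_nonempty_of_sum_eq_one (hxs : ∑ i, x i = 1) : (univ : Finset ι).Nonempty :=
  nonempty_of_sum_ne_zero (hxs ▸ one_ne_zero)

lemma card_pos_of_sum_eq_one (hxs : ∑ i, x i = 1) : 0 < Fintype.card ι :=
  (univ_nonempty_of_sum_eq_one hxs).card_pos

lemma sum_rpow_le_card_rpow {p : ℝ} (hp0 : 0 ≤ p) (hp1 : p ≤ 1) (hx : ∀ i, 0 ≤ x i)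
    (hxs : ∑ i, x i = 1) : ∑ i, x i ^ p ≤ (Fintype.card ι : ℝ) ^ (1 - p) := by
  have hm : (0 : ℝ) < Fintype.card ι := mod_cast card_pos_of_sum_eq_one hxs
  have h := (concaveOn_rpow hp0 hp1).le_map_sum (t := univ)
    (w := fun _ => (Fintype.card ι : ℝ)⁻¹) (p := x)
    (fun _ _ => by positivity) (by simp [hm.ne']) (fun i _ => hx i)
  simp only [smul_eq_mul, ← mul_sum, hxs, mul_one] at h
  rw [inv_rpow hm.le, ← rpow_neg hm.le, inv_mul_le_iff₀ hm] at h
  rwa [sub_eq_add_neg, rpow_add hm, rpow_one]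

lemma card_rpow_le_sum_rpow {p : ℝ} (hp : 1 ≤ p) (hx : ∀ i, 0 ≤ x i)
    (hxs : ∑ i, x i = 1) : (Fintype.card ι : ℝ) ^ (1 - p) ≤ ∑ i, x i ^ p := by
  have hm : (0 : ℝ) < Fintype.card ι := mod_cast card_pos_of_sum_eq_one hxs
  have h := rpow_arith_mean_le_arith_mean_rpow univ (fun _ => (Fintype.card ι : ℝ)⁻¹) x
    (fun _ _ => by positivity) (by simp [hm.ne']) (fun i _ => hx i) hp
  simp only [← mul_sum, hxs, mul_one] at h
  rw [inv_rpow hm.le, ← rpow_neg hm.le, le_inv_mul_iff₀ hm] at h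
  rwa [sub_eq_add_neg, rpow_add hm, rpow_one]

end PowerSums

section OneCoordinate

variable {α γ η c x y g : ℝ}

lemma mul_rpow_sub_one_le_update (hx : 0 < x) (hx1 : x ≤ 1) (hη : 0 ≤ η) (hγ : 0 ≤ γ)
    (hg : -γ / x ≤ g) (hc : c ≤ η * γ) (hinv : 30 * (η * γ) ≤ x ^ α) :
    14 / 15 * x ^ (α - 1) ≤ x ^ (α - 1) + η * g - c := by
  have hg' : -(η * γ / x) ≤ η * g := by
    have := mul_le_mul_of_nonneg_left hg hη
    rwa [mul_div_assoc', mul_neg, neg_div] at this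
  have hc' : η * γ ≤ η * γ / x := le_div_self (mul_nonneg hη hγ) hx hx1
  have hinv' : 30 * (η * γ / x) ≤ x ^ (α - 1) := by
    rw [rpow_sub_one hx.ne', mul_div_assoc']
    exact div_le_div_of_nonneg_right hinv hx.le
  linarith

lemma rpow_two_sub_le_of_mul_rpow_sub_one_le (hα : α ≤ 1 / 2) (hx : 0 < x) (hy : 0 < y)
    (h : 14 / 15 * x ^ (α - 1) ≤ y ^ (α - 1)) : y ^ (2 - α) ≤ 27 / 20 * x ^ (2 - α) := by
  have hyx := sq_mul_le_of_mul_rpow_sub_one_le hα hx hy (by norm_num) (by norm_num) h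
  have ha := rpow_pos_of_pos hx (α - 1)
  have hb := rpow_pos_of_pos hy (α - 1)
  rw [rpow_two_sub_eq_div hx, rpow_two_sub_eq_div hy, mul_div_assoc', div_le_div_iff₀ hb ha]
  nlinarith [mul_le_mul_of_nonneg_left h hy.le, mul_le_mul_of_nonneg_right hyx hb.le]

lemma mul_sub_add_log_sub_log_le_of_rpow_le (hα0 : 0 ≤ α) (hα1 : α ≤ 1 / 2) (hx : 0 < x)
    (hx1 : x ≤ 1) (hy : 0 < y) (hγ : 0 ≤ γ) (hg : g ≤ γ) (hxy : x ^ (α - 1) ≤ y ^ (α - 1)) :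
    g * (x - y) + 4 * γ * (log x - log y) ≤ 10 * γ * (y ^ (α - 1) - x ^ (α - 1)) := by
  have hD : 0 ≤ y ^ (α - 1) - x ^ (α - 1) := sub_nonneg.2 hxy
  have hyx : y ≤ x := (rpow_le_rpow_iff_of_neg hx hy (by linarith)).1 hxy
  have hL : 0 ≤ log x - log y := sub_nonneg.2 (log_le_log hy hyx)
  have htan := one_sub_mul_sub_le_rpow_mul_rpow_sub hα0 (by linarith) hx hy
  have hx2 : x ^ (2 - α) ≤ 1 := rpow_le_one hx.le hx1 (by linarith)
  have hlog := one_sub_mul_log_sub_log_le (α := α) hx hy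
  have hDa := div_le_self hD
    (one_le_rpow_of_pos_of_le_one_of_nonpos hx hx1 (by linarith : α - 1 ≤ 0))
  have hxy2 : x - y ≤ 2 * (y ^ (α - 1) - x ^ (α - 1)) := by
    nlinarith [mul_le_mul_of_nonneg_right hx2 hD]
  have hL2 : log x - log y ≤ 2 * (y ^ (α - 1) - x ^ (α - 1)) := by nlinarith
  nlinarith [mul_le_mul_of_nonneg_right hg (sub_nonneg.2 hyx)]

lemma mul_sub_add_log_sub_log_nonpos_of_rpow_le (hα0 : 0 ≤ α) (hα1 : α ≤ 1 / 2) (hx : 0 < x)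
    (hy : 0 < y) (hγ : 0 ≤ γ) (hg : -γ / x ≤ g) (hyx : y ^ (α - 1) ≤ x ^ (α - 1))
    (hratio : y ^ (2 - α) ≤ 2 * x ^ (2 - α)) :
    g * (x - y) + 4 * γ * (log x - log y) ≤ 0 := by
  have ha := rpow_pos_of_pos hx (α - 1)
  set e := (x ^ (α - 1) - y ^ (α - 1)) / x ^ (α - 1) with he
  have he0 : 0 ≤ e := div_nonneg (sub_nonneg.2 hyx) ha.le
  have hxy : x ≤ y := (rpow_le_rpow_iff_of_neg hy hx (by linarith)).1 hyx
  have htan := one_sub_mul_sub_le_rpow_mul_rpow_sub hα0 (by linarith) hy hx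
  have hxe : x ^ (2 - α) * (x ^ (α - 1) - y ^ (α - 1)) = x * e := by
    rw [rpow_two_sub_eq_div hx, he]; field_simp
  have hyx4 : y - x ≤ 4 * (x * e) := by
    nlinarith [mul_le_mul_of_nonneg_right hratio (sub_nonneg.2 hyx)]
  have hgrad : g * (x - y) ≤ 4 * γ * e :=
    calc g * (x - y) = -g * (y - x) := by ring
      _ ≤ γ / x * (y - x) :=
        mul_le_mul_of_nonneg_right (by rw [neg_div] at hg; linarith) (sub_nonneg.2 hxy)
      _ ≤ γ / x * (4 * (x * e)) := mul_le_mul_of_nonneg_left hyx4 (div_nonneg hγ hx.le)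
      _ = 4 * γ * e := by field_simp
  have hlog := one_sub_mul_log_sub_log_le (α := α) hx hy
  rw [show (y ^ (α - 1) - x ^ (α - 1)) / x ^ (α - 1) = -e by rw [he]; ring] at hlog
  have hL : log x - log y ≤ 0 := sub_nonpos.2 (log_le_log hx hxy)
  have hL2 : log x - log y ≤ -e := by nlinarith
  nlinarith [mul_le_mul_of_nonneg_left hL2 hγ]

lemma mul_sub_add_log_sub_log_le_max (hα0 : 0 ≤ α) (hα1 : α ≤ 1 / 2) (hx : 0 < x)
    (hx1 : x ≤ 1) (hy : 0 < y) (hγ : 0 ≤ γ) (hg : -γ / x ≤ g ∧ g ≤ γ)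
    (hratio : y ^ (2 - α) ≤ 2 * x ^ (2 - α)) :
    g * (x - y) + 4 * γ * (log x - log y) ≤ 10 * γ * max (y ^ (α - 1) - x ^ (α - 1)) 0 := by
  rcases le_total (x ^ (α - 1)) (y ^ (α - 1)) with hxy | hyx
  · exact (mul_sub_add_log_sub_log_le_of_rpow_le hα0 hα1 hx hx1 hy hγ hg.2 hxy).trans
      (by gcongr; exact le_max_left _ _)
  · exact (mul_sub_add_log_sub_log_nonpos_of_rpow_le hα0 hα1 hx hy hγ hg.1 hyx hratio).trans
      (by positivity)

end OneCoordinate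

section OneStep

variable {ι : Type*} [Fintype ι] {α γ η c : ℝ} {x y g : ι → ℝ}

lemma sum_rpow_mul_rpow_sub_nonneg (hα0 : 0 ≤ α) (hα1 : α < 1) (hx : ∀ i, 0 < x i)
    (hy : ∀ i, 0 < y i) (hxy : ∑ i, x i = ∑ i, y i) :
    0 ≤ ∑ i, x i ^ (2 - α) * (y i ^ (α - 1) - x i ^ (α - 1)) :=
  calc (0 : ℝ) = ∑ i, (1 - α) * (x i - y i) := by
        rw [← mul_sum, sum_sub_distrib, hxy, sub_self, mul_zero]
    _ ≤ _ := sum_le_sum fun i _ => one_sub_mul_sub_le_rpow_mul_rpow_sub hα0 hα1 (hx i) (hy i)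

lemma multiplier_le (hα0 : 0 ≤ α) (hα1 : α < 1) (hη : 0 ≤ η) (hx : ∀ i, 0 < x i)
    (hxs : ∑ i, x i = 1) (hy : ∀ i, 0 < y i) (hys : ∑ i, y i = 1) (hg : ∀ i, g i ≤ γ)
    (hup : ∀ i, y i ^ (α - 1) = x i ^ (α - 1) + η * g i - c) : c ≤ η * γ := by
  have hP : 0 < ∑ i, x i ^ (2 - α) :=
    sum_pos (fun i _ => rpow_pos_of_pos (hx i) _) (univ_nonempty_of_sum_eq_one hxs)
  have h := (sum_rpow_mul_rpow_sub_nonneg hα0 hα1 hx hy (hxs.trans hys.symm)).trans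
    (show _ ≤ (∑ i, x i ^ (2 - α)) * (η * γ - c) by
      rw [sum_mul]
      refine sum_le_sum fun i _ => mul_le_mul_of_nonneg_left ?_ (rpow_pos_of_pos (hx i) _).le
      linarith [hup i, mul_le_mul_of_nonneg_left (hg i) hη])
  nlinarith

lemma neg_mul_card_le_multiplier (hα0 : 0 ≤ α) (hα1 : α ≤ 1 / 2) (hη : 0 ≤ η) (hγ : 0 ≤ γ)
    (hx : ∀ i, 0 < x i) (hxs : ∑ i, x i = 1) (hy : ∀ i, 0 < y i) (hys : ∑ i, y i = 1)
    (hg : ∀ i, -γ / x i ≤ g i) (hratio : ∀ i, y i ^ (2 - α) ≤ 27 / 20 * x i ^ (2 - α))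
    (hup : ∀ i, y i ^ (α - 1) = x i ^ (α - 1) + η * g i - c) :
    -(27 / 20 * Fintype.card ι * (η * γ)) ≤ c := by
  have hm : (0 : ℝ) < Fintype.card ι := mod_cast card_pos_of_sum_eq_one hxs
  set m : ℝ := (Fintype.card ι : ℝ)
  rcases le_or_gt 0 c with hc | hc
  · have : 0 ≤ 27 / 20 * m * (η * γ) := by positivity
    linarith
  have hdual : η * ∑ i, y i ^ (2 - α) * g i ≤ c * ∑ i, y i ^ (2 - α) := by
    have h := sum_rpow_mul_rpow_sub_nonneg hα0 (by linarith) hy hx (hys.trans hxs.symm)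
    simp only [hup, show ∀ i, x i ^ (α - 1) - (x i ^ (α - 1) + η * g i - c) = c - η * g i
      from fun i => by ring, mul_sub, sum_sub_distrib, ← sum_mul, mul_left_comm _ η,
      ← mul_sum] at h
    linarith
  have hgrad : -(27 / 20 * γ * m ^ α) ≤ ∑ i, y i ^ (2 - α) * g i := by
    have hJ := sum_rpow_le_card_rpow (p := 1 - α) (by linarith) (by linarith)
      (fun i => (hx i).le) hxs
    rw [sub_sub_cancel] at hJ
    calc -(27 / 20 * γ * m ^ α) ≤ ∑ i, -(27 / 20 * γ * x i ^ (1 - α)) := by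
          rw [sum_neg_distrib, ← mul_sum]
          gcongr
      _ ≤ ∑ i, y i ^ (2 - α) * g i := by
          gcongr with i
          have hxa : x i ^ (2 - α) = x i ^ (1 - α) * x i := by
            rw [← rpow_add_one (hx i).ne']; ring_nf
          have h1 : y i ^ (2 - α) / x i ≤ 27 / 20 * x i ^ (1 - α) := by
            rw [div_le_iff₀ (hx i)]; linarith [hratio i]
          calc -(27 / 20 * γ * x i ^ (1 - α)) ≤ -γ * (y i ^ (2 - α) / x i) := by nlinarith
            _ = y i ^ (2 - α) * (-γ / x i) := by ring
            _ ≤ y i ^ (2 - α) * g i :=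
              mul_le_mul_of_nonneg_left (hg i) (rpow_pos_of_pos (hy i) _).le
  have hJ : m ^ (α - 1) ≤ ∑ i, y i ^ (2 - α) := by
    have h := card_rpow_le_sum_rpow (p := 2 - α) (by linarith) (fun i => (hy i).le) hys
    rwa [show 1 - (2 - α) = α - 1 by ring] at h
  have key : -(27 / 20 * m * (η * γ)) * m ^ (α - 1) ≤ c * m ^ (α - 1) :=
    calc -(27 / 20 * m * (η * γ)) * m ^ (α - 1) = η * -(27 / 20 * γ * m ^ α) := by
          rw [rpow_sub_one hm.ne']; field_simp
      _ ≤ η * ∑ i, y i ^ (2 - α) * g i := mul_le_mul_of_nonneg_left hgrad hη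
      _ ≤ c * ∑ i, y i ^ (2 - α) := hdual
      _ ≤ c * m ^ (α - 1) := mul_le_mul_of_nonpos_left hJ hc.le
  exact le_of_mul_le_mul_right key (rpow_pos_of_pos hm _)

lemma sum_mul_sub_add_log_sub_log_le (hα0 : 0 ≤ α) (hα1 : α ≤ 1 / 2) (hη : 0 ≤ η) (hγ : 0 ≤ γ)
    (hx : ∀ i, 0 < x i) (hxs : ∑ i, x i = 1) (hy : ∀ i, 0 < y i) (hys : ∑ i, y i = 1)
    (hg : ∀ i, -γ / x i ≤ g i ∧ g i ≤ γ)
    (hratio : ∀ i, y i ^ (2 - α) ≤ 27 / 20 * x i ^ (2 - α))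
    (hc : -(27 / 20 * Fintype.card ι * (η * γ)) ≤ c)
    (hup : ∀ i, y i ^ (α - 1) = x i ^ (α - 1) + η * g i - c) :
    ∑ i, g i * (x i - y i) + 4 * γ * (∑ i, log (x i) - ∑ i, log (y i))
      ≤ 19 * (Fintype.card ι : ℝ) ^ 2 * γ ^ 2 * η := by
  rcases le_or_gt (Fintype.card ι) 1 with hm | hm
  · have := Fintype.card_le_one_iff_subsingleton.1 hm
    obtain rfl : x = y := funext fun i => by
      rw [← Fintype.sum_subsingleton x i, ← Fintype.sum_subsingleton y i, hxs, hys]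
    simp only [sub_self, mul_zero, sum_const_zero, add_zero]
    positivity
  have hm2 : (2 : ℝ) ≤ Fintype.card ι := by exact_mod_cast hm
  set m : ℝ := (Fintype.card ι : ℝ)
  have hterm : ∀ i, g i * (x i - y i) + 4 * γ * (log (x i) - log (y i))
      ≤ 10 * γ * ((1 + 27 / 20 * m) * (η * γ)) := by
    intro i
    have hx1 : x i ≤ 1 := hxs ▸ single_le_sum (fun j _ => (hx j).le) (mem_univ i)
    have hratio' : y i ^ (2 - α) ≤ 2 * x i ^ (2 - α) := by
      linarith [hratio i, rpow_pos_of_pos (hx i) (2 - α)]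
    refine (mul_sub_add_log_sub_log_le_max hα0 hα1 (hx i) hx1 (hy i) hγ (hg i) hratio').trans ?_
    gcongr
    refine max_le ?_ (by positivity)
    linarith [hup i, mul_le_mul_of_nonneg_left (hg i).2 hη]
  calc ∑ i, g i * (x i - y i) + 4 * γ * (∑ i, log (x i) - ∑ i, log (y i))
      = ∑ i, (g i * (x i - y i) + 4 * γ * (log (x i) - log (y i))) := by
        rw [sum_add_distrib, ← mul_sum, sum_sub_distrib]
    _ ≤ ∑ _i : ι, 10 * γ * ((1 + 27 / 20 * m) * (η * γ)) := sum_le_sum fun i _ => hterm i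
    _ = m * (10 * γ * ((1 + 27 / 20 * m) * (η * γ))) := by
        rw [sum_const, nsmul_eq_mul, card_univ]
    _ ≤ 19 * m ^ 2 * γ ^ 2 * η := by
        have : 0 ≤ γ ^ 2 * η := by positivity
        nlinarith [mul_nonneg this (mul_nonneg (by linarith : (0 : ℝ) ≤ m)
          (by linarith : (0 : ℝ) ≤ 11 * m - 20))]

end OneStep

lemma eventually_mul_le_rpow {K m q : ℝ} (hK : 0 ≤ K) (hm : 1 ≤ m) (hq0 : -1 < q)
    (hq1 : q ≤ 0) :
    ∀ᶠ T : ℕ in atTop, ∀ E, 0 ≤ E → E * √T ≤ 1 → K * E ≤ (m + 3 * m * E * T) ^ q := by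
  have hS : Tendsto (fun T : ℕ => √(T : ℝ)) atTop atTop :=
    tendsto_sqrt_atTop.comp tendsto_natCast_atTop_atTop
  filter_upwards [hS.eventually_ge_atTop 1,
    ((tendsto_rpow_atTop (by linarith : 0 < 1 + q)).comp hS).eventually_ge_atTop (4 * m * K)]
    with T hS1 hSq E hE0 hE
  simp only [Function.comp_apply] at hSq
  set S := √(T : ℝ)
  have hS0 : 0 < S := by linarith
  have hT : (T : ℝ) = S * S := (mul_self_sqrt (Nat.cast_nonneg T)).symm
  have hB : m + 3 * m * E * T ≤ 4 * m * S := by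
    have h3 : 0 ≤ 3 * m * S := by positivity
    rw [hT]; nlinarith [mul_le_mul_of_nonneg_left hE h3]
  calc K * E ≤ K / S := by rw [le_div_iff₀ hS0]; nlinarith
    _ ≤ S ^ q / (4 * m) := by
        rw [div_le_div_iff₀ hS0 (by linarith), ← rpow_add_one hS0.ne', add_comm]
        linarith
    _ ≤ (4 * m) ^ q * S ^ q := by
        rw [div_eq_inv_mul, ← rpow_neg_one]
        gcongr
        linarith
    _ = (4 * m * S) ^ q := (mul_rpow (by linarith) hS0.le).symm
    _ ≤ (m + 3 * m * E * T) ^ q := rpow_le_rpow_of_nonpos (by positivity) hB hq1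

/-- One step of online mirror descent with the regularizer `-(1/α) ∑ i, w i ^ α`; `c` is the
Lagrange multiplier of the constraint `∑ i, y i = 1`. -/
def IsMirrorStep {ι : Type*} [Fintype ι] (α η : ℝ) (x g y : ι → ℝ) : Prop :=
  y ∈ stdSimplex ℝ ι ∧ (∀ i, 0 < y i) ∧ ∃ c : ℝ, ∀ i, y i ^ (α - 1) = x i ^ (α - 1) + η * g i - c

section Trajectory

variable {ι : Type*} [Fintype ι] {α γ η : ℝ}

theorem IsMirrorStep.rpow_sub_one_le_add_and_potential_le {x g y : ι → ℝ}
    (h : IsMirrorStep α η x g y) (hα0 : 0 ≤ α) (hα1 : α ≤ 1 / 2) (hη : 0 ≤ η) (hγ : 0 ≤ γ)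
    (hx : ∀ i, 0 < x i) (hxs : ∑ i, x i = 1) (hg : ∀ i, -γ / x i ≤ g i ∧ g i ≤ γ)
    (hinv : ∀ i, 30 * (η * γ) ≤ x i ^ α) :
    (∀ i, y i ^ (α - 1) ≤ x i ^ (α - 1) + 3 * Fintype.card ι * (η * γ)) ∧
      ∑ i, g i * (x i - y i) + 4 * γ * (∑ i, log (x i) - ∑ i, log (y i))
        ≤ 19 * (Fintype.card ι : ℝ) ^ 2 * γ ^ 2 * η := by
  obtain ⟨⟨-, hys⟩, hy, c, hup⟩ := h
  have hc_le := multiplier_le hα0 (by linarith) hη hx hxs hy hys (fun i => (hg i).2) hup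
  have hratio i : y i ^ (2 - α) ≤ 27 / 20 * x i ^ (2 - α) := by
    refine rpow_two_sub_le_of_mul_rpow_sub_one_le hα1 (hx i) (hy i) ?_
    rw [hup i]
    exact mul_rpow_sub_one_le_update (hx i)
      (hxs ▸ single_le_sum (fun j _ => (hx j).le) (mem_univ i)) hη hγ (hg i).1 hc_le (hinv i)
  have hc := neg_mul_card_le_multiplier hα0 hα1 hη hγ hx hxs hy hys (fun i => (hg i).1) hratio hup
  refine ⟨fun i => ?_, sum_mul_sub_add_log_sub_log_le hα0 hα1 hη hγ hx hxs hy hys hg hratio hc hup⟩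
  have hm : (1 : ℝ) ≤ Fintype.card ι := Nat.one_le_cast.2 (card_pos_of_sum_eq_one hxs)
  nlinarith [hup i, mul_le_mul_of_nonneg_left (hg i).2 hη,
    mul_le_mul_of_nonneg_right hm (mul_nonneg hη hγ)]

variable [Nonempty ι] {T : ℕ} {w g : ℕ → ι → ℝ}

lemma pos_and_sum_eq_one_of_isMirrorStep (hw0 : w 0 = fun _ => (Fintype.card ι : ℝ)⁻¹)
    (hstep : ∀ t < T, IsMirrorStep α η (w t) (g t) (w (t + 1))) :
    ∀ t ≤ T, (∀ i, 0 < w t i) ∧ ∑ i, w t i = 1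
  | 0, _ => by simp [hw0, Fintype.card_pos]
  | t + 1, ht => ⟨(hstep t ht).2.1, (hstep t ht).1.2⟩

lemma rpow_sub_one_le_of_isMirrorStep (hα0 : 0 ≤ α) (hα1 : α ≤ 1 / 2) (hη : 0 ≤ η)
    (hγ : 0 ≤ γ) (hw0 : w 0 = fun _ => (Fintype.card ι : ℝ)⁻¹)
    (hg : ∀ t < T, ∀ i, -γ / w t i ≤ g t i ∧ g t i ≤ γ)
    (hstep : ∀ t < T, IsMirrorStep α η (w t) (g t) (w (t + 1)))
    (hinv : 30 * (η * γ) ≤ (Fintype.card ι + 3 * Fintype.card ι * (η * γ) * T) ^ (α / (α - 1))) :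
    ∀ t ≤ T, ∀ i, w t i ^ (α - 1) ≤ Fintype.card ι + 3 * Fintype.card ι * (η * γ) * t := by
  have hm : (1 : ℝ) ≤ Fintype.card ι := Nat.one_le_cast.2 Fintype.card_pos
  have hE : 0 ≤ 3 * (Fintype.card ι : ℝ) * (η * γ) := by have := mul_nonneg hη hγ; positivity
  intro t
  induction t with
  | zero =>
    intro _ i
    simp only [hw0, Nat.cast_zero, mul_zero, add_zero]
    rw [inv_rpow (by positivity), ← rpow_neg (by positivity), neg_sub]
    exact (rpow_le_rpow_of_exponent_le hm (by linarith)).trans_eq (rpow_one _)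
  | succ t ih =>
    intro ht i
    have hbound := ih (by omega)
    obtain ⟨hx, hxs⟩ := pos_and_sum_eq_one_of_isMirrorStep hw0 hstep t (by omega)
    have hinv_t j : 30 * (η * γ) ≤ w t j ^ α :=
      hinv.trans (rpow_le_rpow_of_rpow_sub_one_le hα0 (by linarith) (hx j) ((hbound j).trans
        (by gcongr; exact_mod_cast (show t ≤ T by omega))))
    have := ((hstep t ht).rpow_sub_one_le_add_and_potential_le hα0 hα1 hη hγ hx hxs
      (hg t ht) hinv_t).1 i
    push_cast
    linarith [hbound i]

theorem potential_le_of_isMirrorStep (hα0 : 0 ≤ α) (hα1 : α ≤ 1 / 2) (hη : 0 ≤ η)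
    (hγ : 0 ≤ γ) (hw0 : w 0 = fun _ => (Fintype.card ι : ℝ)⁻¹)
    (hg : ∀ t < T, ∀ i, -γ / w t i ≤ g t i ∧ g t i ≤ γ)
    (hstep : ∀ t < T, IsMirrorStep α η (w t) (g t) (w (t + 1)))
    (hinv : 30 * (η * γ) ≤ (Fintype.card ι + 3 * Fintype.card ι * (η * γ) * T) ^ (α / (α - 1)))
    {t : ℕ} (ht : t < T) :
    ∑ i, g t i * (w t i - w (t + 1) i) + 4 * γ * (∑ i, log (w t i) - ∑ i, log (w (t + 1) i))
      ≤ 19 * (Fintype.card ι : ℝ) ^ 2 * γ ^ 2 * η := by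
  have hE : 0 ≤ 3 * (Fintype.card ι : ℝ) * (η * γ) := by have := mul_nonneg hη hγ; positivity
  obtain ⟨hx, hxs⟩ := pos_and_sum_eq_one_of_isMirrorStep hw0 hstep t ht.le
  have hbound := rpow_sub_one_le_of_isMirrorStep hα0 hα1 hη hγ hw0 hg hstep hinv t ht.le
  have hinv_t j : 30 * (η * γ) ≤ w t j ^ α :=
    hinv.trans (rpow_le_rpow_of_rpow_sub_one_le hα0 (by linarith) (hx j) ((hbound j).trans
      (by gcongr)))
  exact ((hstep t ht).rpow_sub_one_le_add_and_potential_le hα0 hα1 hη hγ hx hxs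
    (hg t ht) hinv_t).2

end Trajectory

/-- Time is 0-indexed: `w 0` is the uniform start, and `φ(t) ≤ φ(t-1)` for `t ∈ [T]` reads
`φ(t+1) ≤ φ(t)` for `t < T`. -/
theorem stmt6_general {m n : ℕ} (hm : 0 < m) (α : ℝ)
    (hα : α ∈ Set.Ioo (0:ℝ) (1/2)) :
    ∃ T₀ : ℕ, ∀ T : ℕ, T₀ ≤ T →
      ∀ γ η : ℝ,
        γ = 12 * n * Real.log T →
        η = 1 / (12 * (m : ℝ) ^ ((1 + α) / 2) * n * Real.sqrt T * Real.log T) →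
        ∀ w g : ℕ → Fin m → ℝ,
          w 0 = (fun _ => (m : ℝ)⁻¹) →
          (∀ t < T, ∀ i, -γ / w t i ≤ g t i ∧ g t i ≤ γ) →
          (∀ t < T, w (t+1) ∈ stdSimplex ℝ (Fin m) ∧ (∀ i, 0 < w (t+1) i) ∧
            ∃ c : ℝ, ∀ i, (w (t+1) i) ^ (α - 1) = (w t i) ^ (α - 1) + η * g t i - c) →
          ∀ t < T,
            (∑ s ∈ Finset.range (t+1), ∑ i, g s i * (w s i - w (s+1) i))
                + 19 * (m : ℝ)^2 * γ^2 * η * ((T : ℝ) - (t+1))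
                - 4 * γ * ∑ i, Real.log (w (t+1) i)
              ≤ (∑ s ∈ Finset.range t, ∑ i, g s i * (w s i - w (s+1) i))
                + 19 * (m : ℝ)^2 * γ^2 * η * ((T : ℝ) - t)
                - 4 * γ * ∑ i, Real.log (w t i) := by
  obtain ⟨hα0, hα1⟩ := hα
  have : NeZero m := ⟨hm.ne'⟩
  have hm1 : (1 : ℝ) ≤ m := by exact_mod_cast hm
  have hq0 : -1 < α / (α - 1) := by rw [lt_div_iff_of_neg (by linarith)]; linarith
  have hq1 : α / (α - 1) ≤ 0 := div_nonpos_of_nonneg_of_nonpos hα0.le (by linarith)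
  obtain ⟨T₀, hT₀⟩ :=
    eventually_atTop.1 (eventually_mul_le_rpow (K := 30) (by norm_num) hm1 hq0 hq1)
  refine ⟨T₀, fun T hT γ η hγ hη w g hw0 hg hstep t ht => ?_⟩
  have hL := log_natCast_nonneg T
  have hγ0 : 0 ≤ γ := hγ ▸ by positivity
  have hη0 : 0 ≤ η := hη ▸ by positivity
  have hE : η * γ * √T ≤ 1 :=
    calc η * γ * √T
        = 12 * n * log T * √T / (12 * (m : ℝ) ^ ((1 + α) / 2) * n * √T * log T) := by
          rw [hη, hγ]; ring
      _ ≤ 1 := by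
          refine div_le_one_of_le₀ ?_ (by positivity)
          have : 0 ≤ 12 * n * log T * √T := by positivity
          nlinarith [one_le_rpow hm1 (by linarith : 0 ≤ (1 + α) / 2)]
  have hpot := potential_le_of_isMirrorStep (ι := Fin m) hα0.le hα1.le hη0 hγ0
    (by simpa using hw0) hg hstep
    (by simpa using hT₀ T hT (η * γ) (mul_nonneg hη0 hγ0) hE) ht
  rw [Fintype.card_fin] at hpot
  rw [sum_range_succ]
  linarith

/-- Lemma (the potential function decreases): under the small gradient assumption,
for `T` sufficiently large, the potential
`φ(t) = ∑_{s=1}^t g^s · (w^s - w^{s+1}) + 19 m² γ² η (T - t) - 4γ ∑_i ln w^{t+1}_i`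
is decreasing in `t`, i.e. `φ(t) ≤ φ(t-1)` for every `t ∈ [T]`.
(Time is 0-indexed: `w 0` is the uniform initial weight vector, the update at step
`t` produces `w (t+1)`, and `φ` below is expressed with 0-indexed sums, so the
claim `φ(t) ≤ φ(t-1)` for `t ∈ [T]` reads `φ(t+1) ≤ φ(t)` for `t < T`.) -/
theorem stmt6 {m n : ℕ} (hm : 0 < m) (hn : 0 < n) (α : ℝ)
    (hα : α ∈ Set.Ioo (0:ℝ) (1/2)) :
    ∃ T₀ : ℕ, ∀ T : ℕ, T₀ ≤ T →
      ∀ γ η : ℝ,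
        γ = 12 * n * Real.log T →
        η = 1 / (12 * (m : ℝ) ^ ((1 + α) / 2) * n * Real.sqrt T * Real.log T) →
        ∀ w g : ℕ → Fin m → ℝ,
          w 0 = (fun _ => (m : ℝ)⁻¹) →
          (∀ t < T, ∀ i, -γ / w t i ≤ g t i ∧ g t i ≤ γ) →
          (∀ t < T, w (t+1) ∈ stdSimplex ℝ (Fin m) ∧ (∀ i, 0 < w (t+1) i) ∧
            ∃ c : ℝ, ∀ i, (w (t+1) i) ^ (α - 1) = (w t i) ^ (α - 1) + η * g t i - c) →
          ∀ t < T,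
            (∑ s ∈ Finset.range (t+1), ∑ i, g s i * (w s i - w (s+1) i))
                + 19 * (m : ℝ)^2 * γ^2 * η * ((T : ℝ) - (t+1))
                - 4 * γ * ∑ i, Real.log (w (t+1) i)
              ≤ (∑ s ∈ Finset.range t, ∑ i, g s i * (w s i - w (s+1) i))
                + 19 * (m : ℝ)^2 * γ^2 * η * ((T : ℝ) - t)
                - 4 * γ * ∑ i, Real.log (w t i) :=
  stmt6_general hm α hα
end

section
/- Let p^1, …, p^m be measurable random variables taking values in Δ^n whose coordinates are almost surely strictly positive, and let J be a measurable random variable taking values in [n], on a common probability space; assume every expert is calibrated. Fix a weight vector w ∈ Δ^m, an index i ∈ [m], and ζ ≥ 0, and let G_i denote the random variable ∑_{ℓ=1}^n p*_ℓ(w) ln p^i_ℓ − ln p^i_J, where p*(w) is the logarithmic pool of the random forecasts p^1, …, p^m with weights w. Then P(G_i ≥ ζ) ≤ n e^{−ζ}. -/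
/-!
On the event `G_i ≥ ζ` the forecast of expert `i` for the realised outcome is at most `e^{-ζ}`,
because `∑ ℓ p*_ℓ ln p^i_ℓ ≤ 0`. For a calibrated forecaster,
`P(J = j, p^i_j ≤ t) = E[p^i_j ; p^i_j ≤ t] ≤ t`, and a union bound over the `n` outcomes finishes.
-/

open Finset MeasureTheory

/-- The logarithmic pool of forecasts `p 1, …, p m` over `n` outcomes,
with weight vector `w`, evaluated at outcome `l`. -/
noncomputable def logPool {m n : ℕ} (p : Fin m → Fin n → ℝ) (w : Fin m → ℝ) (l : Fin n) : ℝ :=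
  (∏ k, (p k l) ^ (w k)) / (∑ l', ∏ k, (p k l') ^ (w k))

open Real

theorem logPool_nonneg {m n : ℕ} {p : Fin m → Fin n → ℝ} (hp : ∀ k l, 0 ≤ p k l)
    (w : Fin m → ℝ) (l : Fin n) : 0 ≤ logPool p w l :=
  div_nonneg (prod_nonneg fun k _ => rpow_nonneg (hp k l) _)
    (sum_nonneg fun l' _ => prod_nonneg fun k _ => rpow_nonneg (hp k l') _)

theorem le_exp_neg_of_le_sum_mul_log_sub_log {ι : Type*} [Fintype ι] {q v : ι → ℝ}
    (hq : ∀ l, 0 ≤ q l) (hv : v ∈ stdSimplex ℝ ι) {ζ : ℝ} (j : ι)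
    (h : ζ ≤ ∑ l, q l * log (v l) - log (v j)) : v j ≤ exp (-ζ) := by
  have hsum : ∑ l, q l * log (v l) ≤ 0 := sum_nonpos fun l _ =>
    mul_nonpos_of_nonneg_of_nonpos (hq l)
      (log_nonpos (mem_Icc_of_mem_stdSimplex hv l).1 (mem_Icc_of_mem_stdSimplex hv l).2)
  calc v j ≤ exp (log (v j)) := le_exp_log _
    _ ≤ exp (-ζ) := exp_le_exp.2 (by linarith)

section Calibration

variable {Ω : Type*} {m m₀ : MeasurableSpace Ω} {μ : Measure Ω} {E : Set Ω} {g : Ω → ℝ}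

theorem measureReal_inter_le_mul_of_condExp_indicator_eq [IsFiniteMeasure μ] (hm : m ≤ m₀)
    (hE : MeasurableSet E) (hg : Measurable[m] g) (hcal : μ[E.indicator 1 | m] =ᵐ[μ] g)
    (t : ℝ) : μ.real (E ∩ {ω | g ω ≤ t}) ≤ t * μ.real {ω | g ω ≤ t} := by
  set A := {ω | g ω ≤ t}
  have hA : MeasurableSet[m] A := measurableSet_le hg measurable_const
  have hE_int : Integrable (E.indicator (1 : Ω → ℝ)) μ := (integrable_const 1).indicator hE
  calc μ.real (E ∩ A) = ∫ ω in A, E.indicator 1 ω ∂μ := by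
        rw [setIntegral_indicator hE, Set.inter_comm, Pi.one_def, setIntegral_const, smul_eq_mul,
          mul_one]
    _ = ∫ ω in A, g ω ∂μ := by
        rw [← setIntegral_condExp hm hE_int hA]
        exact setIntegral_congr_ae (hm A hA) (hcal.mono fun ω h _ => h)
    _ ≤ ∫ _ in A, t ∂μ :=
        setIntegral_mono_on (integrable_condExp.congr hcal).integrableOn
          (integrable_const t).integrableOn (hm A hA) fun _ hω => hω
    _ = t * μ.real A := by rw [setIntegral_const, smul_eq_mul, mul_comm]

theorem measureReal_inter_le_of_condExp_indicator_eq [IsProbabilityMeasure μ] (hm : m ≤ m₀)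
    (hE : MeasurableSet E) (hg : Measurable[m] g) (hcal : μ[E.indicator 1 | m] =ᵐ[μ] g)
    {t : ℝ} (ht : 0 ≤ t) : μ.real (E ∩ {ω | g ω ≤ t}) ≤ t :=
  calc μ.real (E ∩ {ω | g ω ≤ t}) ≤ t * μ.real {ω | g ω ≤ t} :=
        measureReal_inter_le_mul_of_condExp_indicator_eq hm hE hg hcal t
    _ ≤ t * 1 := mul_le_mul_of_nonneg_left measureReal_le_one ht
    _ = t := mul_one t

end Calibration

theorem stmt8_general {m n : ℕ}
    {Ω : Type*} [MeasurableSpace Ω] (μ : Measure Ω) [IsProbabilityMeasure μ]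
    (p : Fin m → Ω → Fin n → ℝ) (hpm : ∀ i, Measurable (p i))
    (J : Ω → Fin n) (hJ : Measurable J)
    (hsimplex : ∀ i ω, p i ω ∈ stdSimplex ℝ (Fin n))
    (hcal : ∀ (i : Fin m) (j : Fin n),
      (μ[(fun ω => if J ω = j then (1:ℝ) else 0) |
          MeasurableSpace.comap (p i) inferInstance]) =ᵐ[μ] fun ω => p i ω j)
    (w : Fin m → ℝ)
    (i : Fin m) (ζ : ℝ) :
    (μ {ω | ζ ≤ (∑ l, logPool (fun k => p k ω) w l * Real.log (p i ω l))
        - Real.log (p i ω (J ω))}).toReal ≤ n * Real.exp (-ζ) := by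
  set t := exp (-ζ)
  have hbad : {ω | ζ ≤ (∑ l, logPool (fun k => p k ω) w l * log (p i ω l))
      - log (p i ω (J ω))} ⊆ ⋃ j, {ω | J ω = j} ∩ {ω | p i ω j ≤ t} := fun ω hω =>
    Set.mem_iUnion.2 ⟨J ω, rfl, le_exp_neg_of_le_sum_mul_log_sub_log
      (logPool_nonneg (fun k => (hsimplex k ω).1) w) (hsimplex i ω) (J ω) hω⟩
  have hcell : ∀ j, μ.real ({ω | J ω = j} ∩ {ω | p i ω j ≤ t}) ≤ t := fun j => by
    have hind : {ω | J ω = j}.indicator (1 : Ω → ℝ) = fun ω => if J ω = j then 1 else 0 := by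
      ext ω; simp [Set.indicator_apply]
    exact measureReal_inter_le_of_condExp_indicator_eq (hpm i).comap_le
      (hJ (measurableSet_singleton j)) ((measurable_pi_apply j).comp (comap_measurable (p i)))
      (hind ▸ hcal i j) (exp_pos _).le
  calc μ.real _ ≤ μ.real (⋃ j, {ω | J ω = j} ∩ {ω | p i ω j ≤ t}) := measureReal_mono hbad
    _ ≤ ∑ j, μ.real ({ω | J ω = j} ∩ {ω | p i ω j ≤ t}) := measureReal_iUnion_fintype_le _
    _ ≤ ∑ _j : Fin n, t := sum_le_sum fun j _ => hcell j
    _ = n * t := by simp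

/-- Lemma (upper tail of the gradient): if every expert is calibrated, then for any
weight vector `w`, expert `i` and `ζ ≥ 0`, the probability that
`G_i = ∑ ℓ, p*_ℓ(w) ln p^i_ℓ - ln p^i_J` is at least `ζ` is at most `n e^{-ζ}`. -/
theorem stmt8 {m n : ℕ} (hm : 0 < m) (hn : 0 < n)
    {Ω : Type*} [MeasurableSpace Ω] (μ : Measure Ω) [IsProbabilityMeasure μ]
    (p : Fin m → Ω → Fin n → ℝ) (hpm : ∀ i, Measurable (p i))
    (J : Ω → Fin n) (hJ : Measurable J)
    (hsimplex : ∀ i ω, p i ω ∈ stdSimplex ℝ (Fin n))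
    (hppos : ∀ i, ∀ᵐ ω ∂μ, ∀ l, 0 < p i ω l)
    (hcal : ∀ (i : Fin m) (j : Fin n),
      (μ[(fun ω => if J ω = j then (1:ℝ) else 0) |
          MeasurableSpace.comap (p i) inferInstance]) =ᵐ[μ] fun ω => p i ω j)
    (w : Fin m → ℝ) (hw : w ∈ stdSimplex ℝ (Fin m))
    (i : Fin m) (ζ : ℝ) (hζ : 0 ≤ ζ) :
    (μ {ω | ζ ≤ (∑ l, logPool (fun k => p k ω) w l * Real.log (p i ω l))
        - Real.log (p i ω (J ω))}).toReal ≤ n * Real.exp (-ζ) :=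
  stmt8_general μ p hpm J hJ hsimplex hcal w i ζ
end

section
/- Let p^1, …, p^m be measurable random variables taking values in Δ^n whose coordinates are almost surely strictly positive, and let J be a measurable random variable taking values in [n], on a common probability space; assume every expert is calibrated. Fix a weight vector w ∈ Δ^m with w_i > 0, an index i ∈ [m], and ζ ≥ 0, and let G_i denote the random variable ∑_{ℓ=1}^n p*_ℓ(w) ln p^i_ℓ − ln p^i_J, where p*(w) is the logarithmic pool of the random forecasts p^1, …, p^m with weights w. Then P(G_i ≤ −ζ/w_i) ≤ m n² e^{−ζ/n}. -/
open Finset MeasureTheory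

/-!
On the event `G_i ≤ -ζ / w_i`, the quantity `ζ` is at most `-w_i G_i`, and since all logarithms
of forecasts are nonpositive this is at most the `p*`-average of `-∑ₖ wₖ log p^k_ℓ`. Because
`∑ₖ wₖ log p^k_ℓ = log p*_ℓ + log Z` for the normaliser `Z ≥ ∏ₖ (p^k_J)^{wₖ}`, this average is at
most `H(p*) - ∑ₖ wₖ log p^k_J ≤ log n - ∑ₖ wₖ log p^k_J`. Hence some expert satisfies
`p^k_J ≤ n e^{-ζ}`. Calibration gives `P(J = j, p^k_j ≤ c) = E[p^k_j ; p^k_j ≤ c] ≤ c`, and a union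
bound over the `m n` pairs `(k, j)` yields `P(G_i ≤ -ζ / w_i) ≤ m n² e^{-ζ} ≤ m n² e^{-ζ/n}`.
-/

open Real

lemma sum_negMulLog_le_log_card {ι : Type*} [Fintype ι] {q : ι → ℝ} (hq : ∀ i, 0 ≤ q i)
    (hsum : ∑ i, q i = 1) : ∑ i, negMulLog (q i) ≤ log (Fintype.card ι) := by
  have hN : (0 : ℝ) < Fintype.card ι := by
    have : Nonempty ι := by
      by_contra h
      simp [not_nonempty_iff.mp h] at hsum
    exact_mod_cast Fintype.card_pos
  have hjensen := concaveOn_negMulLog.le_map_sum (t := univ)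
    (w := fun _ => (Fintype.card ι : ℝ)⁻¹) (p := q) (fun _ _ => by positivity)
    (by simp [hN.ne']) (fun i _ => hq i)
  simp only [smul_eq_mul, ← mul_sum, hsum, mul_one] at hjensen
  rw [negMulLog, log_inv] at hjensen
  have := mul_le_mul_of_nonneg_left hjensen hN.le
  field_simp at this
  linarith

section LogPool

variable {m n : ℕ} {p : Fin m → Fin n → ℝ} (w : Fin m → ℝ)

lemma prod_rpow_pos (hp : ∀ k l, 0 < p k l) (l : Fin n) : 0 < ∏ k, p k l ^ w k :=
  prod_pos fun k _ => rpow_pos_of_pos (hp k l) _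

lemma log_prod_rpow (hp : ∀ k l, 0 < p k l) (l : Fin n) :
    log (∏ k, p k l ^ w k) = ∑ k, w k * log (p k l) := by
  rw [log_prod fun k _ => (rpow_pos_of_pos (hp k l) _).ne']
  exact sum_congr rfl fun k _ => log_rpow (hp k l) _

lemma logPool_pos (hp : ∀ k l, 0 < p k l) (l : Fin n) : 0 < logPool p w l :=
  div_pos (prod_rpow_pos w hp l) (sum_pos (fun l' _ => prod_rpow_pos w hp l') ⟨l, mem_univ l⟩)

lemma sum_logPool (hp : ∀ k l, 0 < p k l) [Nonempty (Fin n)] : ∑ l, logPool p w l = 1 := by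
  simp only [logPool]
  rw [← sum_div, div_self (sum_pos (fun l _ => prod_rpow_pos w hp l) univ_nonempty).ne']

lemma log_logPool_le (hp : ∀ k l, 0 < p k l) (j l : Fin n) :
    log (logPool p w l) ≤ ∑ k, w k * log (p k l) - ∑ k, w k * log (p k j) := by
  have hZ : ∏ k, p k j ^ w k ≤ ∑ l', ∏ k, p k l' ^ w k :=
    single_le_sum (fun l' _ => (prod_rpow_pos w hp l').le) (mem_univ j)
  rw [logPool, log_div (prod_rpow_pos w hp l).ne' (prod_rpow_pos w hp j |>.trans_le hZ).ne',
    ← log_prod_rpow w hp, ← log_prod_rpow w hp]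
  gcongr
  exact prod_rpow_pos w hp j

/-- The paper's `G_i` at outcome `j`: the partial derivative in `w i` of `-log (logPool p w j)`. -/
noncomputable def logPoolGradient (p : Fin m → Fin n → ℝ) (w : Fin m → ℝ) (i : Fin m)
    (j : Fin n) : ℝ :=
  ∑ l, logPool p w l * log (p i l) - log (p i j)

variable {w}

lemma neg_mul_logPoolGradient_le (hsimplex : ∀ k, p k ∈ stdSimplex ℝ (Fin n))
    (hp : ∀ k l, 0 < p k l) (hw : w ∈ stdSimplex ℝ (Fin m)) (i : Fin m) (j : Fin n) :
    -(w i * logPoolGradient p w i j) ≤ log n - ∑ k, w k * log (p k j) := by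
  have : Nonempty (Fin n) := ⟨j⟩
  set q := logPool p w
  have hlog_nonpos : ∀ k l, log (p k l) ≤ 0 := fun k l =>
    log_nonpos (hp k l).le (stdSimplex.le_one ⟨_, hsimplex k⟩ l)
  have hsingle : ∀ l, w i * -log (p i l) ≤ -∑ k, w k * log (p k l) := by
    intro l
    rw [← sum_neg_distrib]
    simp only [← mul_neg]
    exact single_le_sum (f := fun k => w k * -log (p k l))
      (fun k _ => mul_nonneg (hw.1 k) (neg_nonneg.2 (hlog_nonpos k l))) (mem_univ i)
  calc -(w i * logPoolGradient p w i j)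
      = w i * log (p i j) + ∑ l, q l * (w i * -log (p i l)) := by
        simp only [logPoolGradient, mul_sub, mul_sum, mul_neg, sum_neg_distrib,
          mul_left_comm (q _)]
        ring
    _ ≤ ∑ l, q l * -∑ k, w k * log (p k l) := by
        refine add_le_of_nonpos_of_le (mul_nonpos_of_nonneg_of_nonpos (hw.1 i) (hlog_nonpos i j))
          (sum_le_sum fun l _ => ?_)
        exact mul_le_mul_of_nonneg_left (hsingle l) (logPool_pos w hp l).le
    _ ≤ ∑ l, (negMulLog (q l) - q l * ∑ k, w k * log (p k j)) := by
        refine sum_le_sum fun l _ => ?_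
        have := mul_le_mul_of_nonneg_left (log_logPool_le w hp j l) (logPool_pos w hp l).le
        rw [negMulLog]
        linarith
    _ = ∑ l, negMulLog (q l) - ∑ k, w k * log (p k j) := by
        rw [sum_sub_distrib, ← sum_mul, sum_logPool w hp, one_mul]
    _ ≤ log n - ∑ k, w k * log (p k j) := by
        gcongr
        simpa using sum_negMulLog_le_log_card (fun l => (logPool_pos w hp l).le) (sum_logPool w hp)

lemma exists_le_mul_exp_of_logPoolGradient_le (hsimplex : ∀ k, p k ∈ stdSimplex ℝ (Fin n))
    (hp : ∀ k l, 0 < p k l) (hw : w ∈ stdSimplex ℝ (Fin m)) {i : Fin m} (hwi : 0 < w i)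
    {j : Fin n} {ζ : ℝ} (h : logPoolGradient p w i j ≤ -ζ / w i) :
    ∃ k, p k j ≤ n * exp (-ζ) := by
  have hζ : ζ ≤ log n - ∑ k, w k * log (p k j) := by
    have := (le_div_iff₀ hwi).1 h
    linarith [neg_mul_logPoolGradient_le hsimplex hp hw i j]
  obtain ⟨k, -, hk⟩ := exists_min_image univ (fun k => p k j) ⟨i, mem_univ i⟩
  have hk_log : log (p k j) ≤ ∑ k', w k' * log (p k' j) :=
    calc log (p k j) = ∑ k', w k' * log (p k j) := by rw [← sum_mul, hw.2, one_mul]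
      _ ≤ ∑ k', w k' * log (p k' j) := sum_le_sum fun k' _ =>
        mul_le_mul_of_nonneg_left (log_le_log (hp k j) (hk k' (mem_univ k'))) (hw.1 k')
  have hn : (0 : ℝ) < n := by exact_mod_cast j.pos
  refine ⟨k, ?_⟩
  calc p k j = exp (log (p k j)) := (exp_log (hp k j)).symm
    _ ≤ exp (log n - ζ) := exp_le_exp.2 (by linarith)
    _ = n * exp (-ζ) := by rw [sub_eq_add_neg, exp_add, exp_log hn]

end LogPool

lemma measureReal_inter_setOf_le_le_of_condExp_indicator_ae_eq {Ω : Type*}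
    {m m₀ : MeasurableSpace Ω} {μ : Measure Ω} [IsFiniteMeasure μ] (hm : m ≤ m₀)
    {s : Set Ω} (hs : MeasurableSet s) {q : Ω → ℝ} (hq : Measurable[m] q)
    (hcal : μ[s.indicator 1 | m] =ᵐ[μ] q) (c : ℝ) :
    μ.real (s ∩ {ω | q ω ≤ c}) ≤ c * μ.real {ω | q ω ≤ c} := by
  set t := {ω | q ω ≤ c}
  have ht : MeasurableSet[m] t := measurableSet_le hq measurable_const
  have hq_int : Integrable q μ := integrable_condExp.congr hcal
  calc μ.real (s ∩ t) = ∫ ω in t, s.indicator 1 ω ∂μ := by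
        rw [integral_indicator_one hs, measureReal_restrict_apply hs]
    _ = ∫ ω in t, q ω ∂μ := by
        rw [← setIntegral_condExp hm ((integrable_const 1).indicator hs) ht]
        exact setIntegral_congr_ae (hm t ht) (hcal.mono fun _ h _ => h)
    _ ≤ ∫ _ in t, c ∂μ :=
        setIntegral_mono_on hq_int.integrableOn (integrable_const c).integrableOn (hm t ht)
          fun _ h => h
    _ = c * μ.real t := by rw [setIntegral_const, smul_eq_mul, mul_comm]

lemma measureReal_calibrated_le {n : ℕ} {Ω : Type*} [MeasurableSpace Ω] {μ : Measure Ω}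
    [IsProbabilityMeasure μ] {q : Ω → Fin n → ℝ} (hq : Measurable q) {J : Ω → Fin n}
    (hJ : Measurable J) {j : Fin n}
    (hcal : μ[(fun ω => if J ω = j then (1:ℝ) else 0) |
      MeasurableSpace.comap q inferInstance] =ᵐ[μ] fun ω => q ω j)
    {c : ℝ} (hc : 0 ≤ c) :
    μ.real {ω | J ω = j ∧ q ω j ≤ c} ≤ c := by
  have hind : (fun ω => if J ω = j then (1:ℝ) else 0) = {ω | J ω = j}.indicator 1 := by
    ext ω; simp [Set.indicator_apply]
  rw [hind] at hcal
  calc μ.real {ω | J ω = j ∧ q ω j ≤ c}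
      ≤ c * μ.real {ω | q ω j ≤ c} :=
        measureReal_inter_setOf_le_le_of_condExp_indicator_ae_eq hq.comap_le
          (hJ (measurableSet_singleton j))
          ((measurable_pi_apply j).comp (comap_measurable q)) hcal c
    _ ≤ c := mul_le_of_le_one_right hc measureReal_le_one

lemma neg_le_neg_div_natCast {ζ : ℝ} (hζ : 0 ≤ ζ) (n : ℕ) : -ζ ≤ -ζ / n := by
  rcases Nat.eq_zero_or_pos n with rfl | hn
  · simpa using hζ
  · rw [neg_div, neg_le_neg_iff]
    exact div_le_self hζ (by exact_mod_cast hn)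

theorem stmt9_general {m n : ℕ}
    {Ω : Type*} [MeasurableSpace Ω] (μ : Measure Ω) [IsProbabilityMeasure μ]
    (p : Fin m → Ω → Fin n → ℝ) (hpm : ∀ i, Measurable (p i))
    (J : Ω → Fin n) (hJ : Measurable J)
    (hsimplex : ∀ i ω, p i ω ∈ stdSimplex ℝ (Fin n))
    (hppos : ∀ i, ∀ᵐ ω ∂μ, ∀ l, 0 < p i ω l)
    (hcal : ∀ (i : Fin m) (j : Fin n),
      (μ[(fun ω => if J ω = j then (1:ℝ) else 0) |
          MeasurableSpace.comap (p i) inferInstance]) =ᵐ[μ] fun ω => p i ω j)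
    (w : Fin m → ℝ) (hw : w ∈ stdSimplex ℝ (Fin m))
    (i : Fin m) (hwi : 0 < w i) (ζ : ℝ) (hζ : 0 ≤ ζ) :
    (μ {ω | (∑ l, logPool (fun k => p k ω) w l * Real.log (p i ω l))
        - Real.log (p i ω (J ω)) ≤ -ζ / w i}).toReal ≤
      m * n^2 * Real.exp (-ζ / n) := by
  set c := (n : ℝ) * exp (-ζ)
  set A : Fin m × Fin n → Set Ω := fun kj => {ω | J ω = kj.2 ∧ p kj.1 ω kj.2 ≤ c}
  have hcover : ∀ᵐ ω ∂μ,
      logPoolGradient (fun k => p k ω) w i (J ω) ≤ -ζ / w i → ω ∈ ⋃ kj, A kj := by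
    filter_upwards [ae_all_iff.2 hppos] with ω hω hωE
    obtain ⟨k, hk⟩ :=
      exists_le_mul_exp_of_logPoolGradient_le (fun k => hsimplex k ω) hω hw hwi hωE
    exact Set.mem_iUnion.2 ⟨(k, J ω), rfl, hk⟩
  calc (μ {ω | logPoolGradient (fun k => p k ω) w i (J ω) ≤ -ζ / w i}).toReal
      ≤ μ.real (⋃ kj, A kj) := ENNReal.toReal_mono (measure_ne_top _ _) (measure_mono_ae hcover)
    _ ≤ ∑ kj, μ.real (A kj) := measureReal_iUnion_fintype_le A
    _ ≤ ∑ _kj : Fin m × Fin n, c :=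
        sum_le_sum fun kj _ => measureReal_calibrated_le (hpm kj.1) hJ (hcal kj.1 kj.2)
          (by positivity)
    _ = m * n ^ 2 * exp (-ζ) := by simp [c]; ring
    _ ≤ m * n ^ 2 * exp (-ζ / n) := by gcongr; exact neg_le_neg_div_natCast hζ n

/-- Lemma (lower tail of the gradient): if every expert is calibrated, then for any
weight vector `w` with `w_i > 0`, expert `i` and `ζ ≥ 0`, the probability that
`G_i = ∑ ℓ, p*_ℓ(w) ln p^i_ℓ - ln p^i_J` is at most `-ζ/w_i` is at most
`m n² e^{-ζ/n}`. -/
theorem stmt9 {m n : ℕ} (hm : 0 < m) (hn : 0 < n)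
    {Ω : Type*} [MeasurableSpace Ω] (μ : Measure Ω) [IsProbabilityMeasure μ]
    (p : Fin m → Ω → Fin n → ℝ) (hpm : ∀ i, Measurable (p i))
    (J : Ω → Fin n) (hJ : Measurable J)
    (hsimplex : ∀ i ω, p i ω ∈ stdSimplex ℝ (Fin n))
    (hppos : ∀ i, ∀ᵐ ω ∂μ, ∀ l, 0 < p i ω l)
    (hcal : ∀ (i : Fin m) (j : Fin n),
      (μ[(fun ω => if J ω = j then (1:ℝ) else 0) |
          MeasurableSpace.comap (p i) inferInstance]) =ᵐ[μ] fun ω => p i ω j)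
    (w : Fin m → ℝ) (hw : w ∈ stdSimplex ℝ (Fin m))
    (i : Fin m) (hwi : 0 < w i) (ζ : ℝ) (hζ : 0 ≤ ζ) :
    (μ {ω | (∑ l, logPool (fun k => p k ω) w l * Real.log (p i ω l))
        - Real.log (p i ω (J ω)) ≤ -ζ / w i}).toReal ≤
      m * n^2 * Real.exp (-ζ / n) :=
  stmt9_general μ p hpm J hJ hsimplex hppos hcal w hw i hwi ζ hζ
end

section
/- Let p^1, …, p^m be measurable random variables taking values in Δ^n and let J be a measurable random variable taking values in [n], on a common probability space; assume every expert is calibrated. Then for every q ≥ 0, P(for every j ∈ [n] there exists i ∈ [m] with p^i_j ≤ q) ≤ m n q. -/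
/-
Let `A = {p^i_j ≤ q}`. Since `A` is determined by `p^i`, calibration gives
`P(A ∩ {J = j}) = E[1_{J = j}; A] = E[p^i_j; A] ≤ q`. If every outcome is assigned
probability at most `q` by some expert, then in particular the realised outcome `J` is,
so the event in question is covered by the `m n` events `{p^i_j ≤ q} ∩ {J = j}`.
-/

open Finset MeasureTheory

theorem measureReal_inter_le_of_condExp_indicator_eq_s10 {Ω : Type*} {m m₀ : MeasurableSpace Ω}
    {μ : Measure Ω} [IsFiniteMeasure μ] (hm : m ≤ m₀) {B : Set Ω} (hB : MeasurableSet B)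
    {f : Ω → ℝ} (hf : Measurable[m] f) (hcal : μ[B.indicator 1 | m] =ᵐ[μ] f) (q : ℝ) :
    μ.real ({ω | f ω ≤ q} ∩ B) ≤ q * μ.real {ω | f ω ≤ q} := by
  set A := {ω | f ω ≤ q}
  have hA : MeasurableSet[m] A := measurableSet_le hf measurable_const
  have hf_int : Integrable f μ := integrable_condExp.congr hcal
  calc μ.real (A ∩ B) = ∫ ω in A, B.indicator 1 ω ∂μ := by
        rw [setIntegral_indicator hB]
        simp only [Pi.one_apply, setIntegral_const, smul_eq_mul, mul_one]
    _ = ∫ ω in A, f ω ∂μ := by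
        rw [← setIntegral_condExp hm ((integrable_const 1).indicator hB) hA]
        exact setIntegral_congr_ae (hm A hA) (hcal.mono fun ω h _ => h)
    _ ≤ ∫ ω in A, q ∂μ :=
        setIntegral_mono_on hf_int.integrableOn (integrableOn_const (measure_ne_top μ A))
          (hm A hA) fun ω hω => hω
    _ = q * μ.real A := by rw [setIntegral_const, smul_eq_mul, mul_comm]

theorem stmt10_general {m n : ℕ}
    {Ω : Type*} [MeasurableSpace Ω] (μ : Measure Ω) [IsProbabilityMeasure μ]
    (p : Fin m → Ω → Fin n → ℝ) (hpm : ∀ i, Measurable (p i))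
    (J : Ω → Fin n) (hJ : Measurable J)
    (hcal : ∀ (i : Fin m) (j : Fin n),
      (μ[(fun ω => if J ω = j then (1:ℝ) else 0) |
          MeasurableSpace.comap (p i) inferInstance]) =ᵐ[μ] fun ω => p i ω j)
    (q : ℝ) (hq : 0 ≤ q) :
    (μ {ω | ∀ j, ∃ i, p i ω j ≤ q}).toReal ≤ m * n * q := by
  set S : Fin n → Fin m → Set Ω := fun j i => {ω | p i ω j ≤ q} ∩ {ω | J ω = j}
  have hS : ∀ j i, μ.real (S j i) ≤ q := fun j i => by
    have hind : (fun ω => if J ω = j then (1:ℝ) else 0) = {ω | J ω = j}.indicator 1 := by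
      ext ω; simp [Set.indicator_apply]
    refine (measureReal_inter_le_of_condExp_indicator_eq_s10 (hpm i).comap_le
      (hJ (measurableSet_singleton j)) ((measurable_pi_apply j).comp (comap_measurable (p i)))
      (hind ▸ hcal i j) q).trans ?_
    exact mul_le_of_le_one_right hq measureReal_le_one
  have hcover : {ω | ∀ j, ∃ i, p i ω j ≤ q} ⊆ ⋃ j, ⋃ i, S j i := fun ω hω => by
    obtain ⟨i, hi⟩ := hω (J ω)
    exact Set.mem_iUnion₂.2 ⟨J ω, i, hi, rfl⟩
  calc μ.real {ω | ∀ j, ∃ i, p i ω j ≤ q} ≤ μ.real (⋃ j, ⋃ i, S j i) := measureReal_mono hcover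
    _ ≤ ∑ j, ∑ i, μ.real (S j i) := (measureReal_iUnion_fintype_le _).trans <|
        sum_le_sum fun j _ => measureReal_iUnion_fintype_le _
    _ ≤ ∑ _j : Fin n, ∑ _i : Fin m, q := sum_le_sum fun j _ => sum_le_sum fun i _ => hS j i
    _ = m * n * q := by simp only [sum_const, card_univ, Fintype.card_fin, nsmul_eq_mul]; ring

/-- Lemma: if every expert is calibrated, then for every `q ≥ 0`, the probability
that for every outcome `j` some expert assigns probability at most `q` to `j` is
at most `m n q`. -/
theorem stmt10 {m n : ℕ} (hm : 0 < m) (hn : 0 < n)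
    {Ω : Type*} [MeasurableSpace Ω] (μ : Measure Ω) [IsProbabilityMeasure μ]
    (p : Fin m → Ω → Fin n → ℝ) (hpm : ∀ i, Measurable (p i))
    (J : Ω → Fin n) (hJ : Measurable J)
    (hsimplex : ∀ i ω, p i ω ∈ stdSimplex ℝ (Fin n))
    (hcal : ∀ (i : Fin m) (j : Fin n),
      (μ[(fun ω => if J ω = j then (1:ℝ) else 0) |
          MeasurableSpace.comap (p i) inferInstance]) =ᵐ[μ] fun ω => p i ω j)
    (q : ℝ) (hq : 0 ≤ q) :
    (μ {ω | ∀ j, ∃ i, p i ω j ≤ q}).toReal ≤ m * n * q :=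
  stmt10_general μ p hpm J hJ hcal q hq
end

section
/- Let p^1, …, p^m be measurable random variables taking values in Δ^n whose coordinates are almost surely strictly positive, and let J be a measurable random variable taking values in [n], on a common probability space; assume every expert is calibrated. Fix a weight vector w ∈ Δ^m, indices i ∈ [m] and j ∈ [n], and q > 0, and let p*(w) be the logarithmic pool of the random forecasts p^1, …, p^m with weights w. Then P(p*_j(w) ≥ (p^i_j)^{w_i} / q) ≤ m n q. -/
open Finset MeasureTheory

/-!
If `p*_j ≥ (p^i_j)^{w_i} / q`, then, since the numerator `∏_k (p^k_j)^{w_k}` of `p*_j` is at most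
`(p^i_j)^{w_i}`, the normalising constant `Z = ∑_l ∏_k (p^k_l)^{w_k}` is at most `q`. Each summand
of `Z` is a weighted geometric mean, hence at least the smallest of its factors; taking `l = J`,
some expert `k` gave the realised outcome probability `p^k_J ≤ q`. By calibration,
`P(J = l, p^k_l ≤ q) = E[p^k_l ; p^k_l ≤ q] ≤ q`, and a union bound over the `m n` pairs `(k, l)`
concludes.
-/

section WeightedProducts

variable {ι : Type*} [Fintype ι] {x w : ι → ℝ}

lemma prod_rpow_le_rpow_of_le_one (hx : ∀ k, x k ∈ Set.Icc (0 : ℝ) 1) (hw : ∀ k, 0 ≤ w k)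
    (i : ι) : ∏ k, x k ^ w k ≤ x i ^ w i := by
  classical
  rw [← mul_prod_erase univ _ (mem_univ i)]
  refine mul_le_of_le_one_right (Real.rpow_nonneg (hx i).1 _) ?_
  exact prod_le_one (fun k _ => Real.rpow_nonneg (hx k).1 _)
    fun k _ => Real.rpow_le_one (hx k).1 (hx k).2 (hw k)

lemma exists_le_prod_rpow [Nonempty ι] (hx : ∀ k, 0 < x k) (hw : w ∈ stdSimplex ℝ ι) :
    ∃ k, x k ≤ ∏ k', x k' ^ w k' := by
  obtain ⟨k, -, hk⟩ := exists_min_image univ x univ_nonempty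
  refine ⟨k, ?_⟩
  calc x k = x k ^ ∑ k', w k' := by rw [hw.2, Real.rpow_one]
    _ = ∏ k', x k ^ w k' := Real.rpow_sum_of_pos (hx k) _ _
    _ ≤ ∏ k', x k' ^ w k' := prod_le_prod (fun k' _ => Real.rpow_nonneg (hx k).le _)
        fun k' _ => Real.rpow_le_rpow (hx k).le (hk k' (mem_univ k')) (hw.1 k')

end WeightedProducts

section LogPool

variable {m n : ℕ} {p : Fin m → Fin n → ℝ} {w : Fin m → ℝ}

lemma sum_prod_rpow_le_of_rpow_div_le_logPool (hpos : ∀ k l, 0 < p k l)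
    (hp : ∀ k, p k ∈ stdSimplex ℝ (Fin n)) (hw : ∀ k, 0 ≤ w k) {i : Fin m} {j : Fin n}
    {q : ℝ} (hq : 0 < q) (h : p i j ^ w i / q ≤ logPool p w j) :
    ∑ l, ∏ k, p k l ^ w k ≤ q := by
  have hZ : 0 < ∑ l, ∏ k, p k l ^ w k :=
    sum_pos (fun l _ => prod_pos fun k _ => Real.rpow_pos_of_pos (hpos k l) _) ⟨j, mem_univ j⟩
  have hpij : 0 < p i j ^ w i := Real.rpow_pos_of_pos (hpos i j) _
  have hnum := prod_rpow_le_rpow_of_le_one (x := fun k => p k j)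
    (fun k => mem_Icc_of_mem_stdSimplex (hp k) j) hw i
  have : p i j ^ w i / q ≤ p i j ^ w i / ∑ l, ∏ k, p k l ^ w k :=
    h.trans (div_le_div_of_nonneg_right hnum hZ.le)
  exact (div_le_div_iff_of_pos_left hpij hq hZ).1 this

lemma exists_le_of_rpow_div_le_logPool (hpos : ∀ k l, 0 < p k l)
    (hp : ∀ k, p k ∈ stdSimplex ℝ (Fin n)) (hw : w ∈ stdSimplex ℝ (Fin m)) {i : Fin m}
    {j : Fin n} {q : ℝ} (hq : 0 < q) (h : p i j ^ w i / q ≤ logPool p w j) (l : Fin n) :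
    ∃ k, p k l ≤ q := by
  have : Nonempty (Fin m) := ⟨i⟩
  obtain ⟨k, hk⟩ := exists_le_prod_rpow (x := fun k => p k l) (fun k => hpos k l) hw
  refine ⟨k, hk.trans ((single_le_sum (f := fun l => ∏ k, p k l ^ w k) ?_ (mem_univ l)).trans
    (sum_prod_rpow_le_of_rpow_div_le_logPool hpos hp hw.1 hq h))⟩
  exact fun l _ => prod_nonneg fun k _ => Real.rpow_nonneg (hpos k l).le _

end LogPool

section Calibration

variable {Ω : Type*} {m m₀ : MeasurableSpace Ω} {μ : Measure Ω}

lemma measureReal_inter_le_of_condExp_indicator_eq_s11 [IsFiniteMeasure μ] (hm : m ≤ m₀)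
    {A B : Set Ω} (hA : MeasurableSet A) (hB : MeasurableSet[m] B) {Y : Ω → ℝ} {c : ℝ}
    (hY : μ[A.indicator (1 : Ω → ℝ) | m] =ᵐ[μ] Y) (hYc : ∀ ω ∈ B, Y ω ≤ c) :
    μ.real (A ∩ B) ≤ c * μ.real B := by
  have hYint : Integrable Y μ := integrable_condExp.congr hY
  calc μ.real (A ∩ B) = ∫ ω in B, A.indicator (1 : Ω → ℝ) ω ∂μ := by
        rw [integral_indicator_one hA, measureReal_restrict_apply hA]
    _ = ∫ ω in B, Y ω ∂μ := by
        rw [← setIntegral_condExp hm ((integrable_const 1).indicator hA) hB]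
        exact setIntegral_congr_ae (hm B hB) (hY.mono fun ω h _ => h)
    _ ≤ ∫ _ in B, c ∂μ :=
        setIntegral_mono_on hYint.integrableOn (integrable_const c).integrableOn (hm B hB) hYc
    _ = c * μ.real B := by rw [setIntegral_const, smul_eq_mul, mul_comm]

lemma measureReal_eq_and_le_of_calibrated [IsProbabilityMeasure μ] {n : ℕ}
    {X : Ω → Fin n → ℝ} (hX : Measurable X) {J : Ω → Fin n} (hJ : Measurable J) {l : Fin n}
    (hcal : μ[(fun ω => if J ω = l then (1 : ℝ) else 0) | MeasurableSpace.comap X inferInstance]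
      =ᵐ[μ] fun ω => X ω l)
    {q : ℝ} (hq : 0 ≤ q) :
    μ.real {ω | J ω = l ∧ X ω l ≤ q} ≤ q := by
  have hind : (fun ω => if J ω = l then (1 : ℝ) else 0) = (J ⁻¹' {l}).indicator 1 := by
    funext ω
    by_cases h : J ω = l <;> simp [h]
  have hB : MeasurableSet[MeasurableSpace.comap X inferInstance] {ω | X ω l ≤ q} :=
    ⟨{x | x l ≤ q}, measurableSet_le (measurable_pi_apply l) measurable_const, rfl⟩
  calc μ.real {ω | J ω = l ∧ X ω l ≤ q} = μ.real (J ⁻¹' {l} ∩ {ω | X ω l ≤ q}) := rfl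
    _ ≤ q * μ.real {ω | X ω l ≤ q} :=
        measureReal_inter_le_of_condExp_indicator_eq_s11 hX.comap_le (hJ (measurableSet_singleton l))
          hB (hind ▸ hcal) fun _ hω => hω
    _ ≤ q := mul_le_of_le_one_right hq measureReal_le_one

end Calibration

theorem stmt11_general {m n : ℕ}
    {Ω : Type*} [MeasurableSpace Ω] (μ : Measure Ω) [IsProbabilityMeasure μ]
    (p : Fin m → Ω → Fin n → ℝ) (hpm : ∀ i, Measurable (p i))
    (J : Ω → Fin n) (hJ : Measurable J)
    (hsimplex : ∀ i ω, p i ω ∈ stdSimplex ℝ (Fin n))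
    (hppos : ∀ i, ∀ᵐ ω ∂μ, ∀ l, 0 < p i ω l)
    (hcal : ∀ (i : Fin m) (j : Fin n),
      (μ[(fun ω => if J ω = j then (1:ℝ) else 0) |
          MeasurableSpace.comap (p i) inferInstance]) =ᵐ[μ] fun ω => p i ω j)
    (w : Fin m → ℝ) (hw : w ∈ stdSimplex ℝ (Fin m))
    (i : Fin m) (j : Fin n) (q : ℝ) (hq : 0 < q) :
    (μ {ω | (p i ω j) ^ (w i) / q ≤ logPool (fun k => p k ω) w j}).toReal ≤ m * n * q := by
  set E : Fin m × Fin n → Set Ω := fun kl => {ω | J ω = kl.2 ∧ p kl.1 ω kl.2 ≤ q}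
  have hcover : {ω | (p i ω j) ^ (w i) / q ≤ logPool (fun k => p k ω) w j} ≤ᵐ[μ] ⋃ kl, E kl := by
    filter_upwards [ae_all_iff.2 hppos] with ω hpos hω
    obtain ⟨k, hk⟩ := exists_le_of_rpow_div_le_logPool hpos (fun k => hsimplex k ω) hw hq hω (J ω)
    exact Set.mem_iUnion.2 ⟨(k, J ω), rfl, hk⟩
  calc (μ {ω | (p i ω j) ^ (w i) / q ≤ logPool (fun k => p k ω) w j}).toReal
      ≤ μ.real (⋃ kl, E kl) := ENNReal.toReal_mono (measure_ne_top _ _) (measure_mono_ae hcover)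
    _ ≤ ∑ kl, μ.real (E kl) := measureReal_iUnion_fintype_le E
    _ ≤ ∑ _kl : Fin m × Fin n, q :=
        sum_le_sum fun kl _ => measureReal_eq_and_le_of_calibrated (hpm kl.1) hJ (hcal _ _) hq.le
    _ = m * n * q := by simp [mul_assoc]

/-- Corollary: if every expert is calibrated, then for any weight vector `w`,
expert `i`, outcome `j` and `q > 0`, the probability that the logarithmic pool
satisfies `p*_j(w) ≥ (p^i_j)^{w_i} / q` is at most `m n q`. -/
theorem stmt11 {m n : ℕ} (hm : 0 < m) (hn : 0 < n)
    {Ω : Type*} [MeasurableSpace Ω] (μ : Measure Ω) [IsProbabilityMeasure μ]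
    (p : Fin m → Ω → Fin n → ℝ) (hpm : ∀ i, Measurable (p i))
    (J : Ω → Fin n) (hJ : Measurable J)
    (hsimplex : ∀ i ω, p i ω ∈ stdSimplex ℝ (Fin n))
    (hppos : ∀ i, ∀ᵐ ω ∂μ, ∀ l, 0 < p i ω l)
    (hcal : ∀ (i : Fin m) (j : Fin n),
      (μ[(fun ω => if J ω = j then (1:ℝ) else 0) |
          MeasurableSpace.comap (p i) inferInstance]) =ᵐ[μ] fun ω => p i ω j)
    (w : Fin m → ℝ) (hw : w ∈ stdSimplex ℝ (Fin m))
    (i : Fin m) (j : Fin n) (q : ℝ) (hq : 0 < q) :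
    (μ {ω | (p i ω j) ^ (w i) / q ≤ logPool (fun k => p k ω) w j}).toReal ≤ m * n * q :=
  stmt11_general μ p hpm J hJ hsimplex hppos hcal w hw i j q hq
end

section
/- Let −1 < a < 0 and g ∈ ℝ^m. Then there exists a unique c ∈ ℝ with c > −min_i g_i (so that g_i + c > 0 for all i ∈ [m]) such that ∑_{i=1}^m (g_i + c)^{1/a} = 1. -/
/-!
For `p < 0` the function `F c = ∑ i, (g i + c) ^ p` is continuous and strictly decreasing on the
half-line `c > -min g` where all the bases are positive. It tends to `+∞` at the left endpoint,
because the term of a minimal `g i` blows up, and to `0` as `c → ∞`. By the intermediate value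
theorem it therefore takes every positive value, and by strict monotonicity exactly once.
-/

open Finset Filter Topology

section

variable {ι : Type*} [Fintype ι] (g : ι → ℝ) {p : ℝ}

lemma tendsto_sum_rpow_add_atTop (hp : p < 0) :
    Tendsto (fun c ↦ ∑ i, (g i + c) ^ p) atTop (𝓝 0) := by
  have h_pow : Tendsto (fun x : ℝ ↦ x ^ p) atTop (𝓝 0) := by
    simpa using tendsto_rpow_neg_atTop (neg_pos.2 hp)
  simpa using tendsto_finsetSum univ fun i _ ↦
    h_pow.comp (tendsto_atTop_add_const_left _ (g i) tendsto_id)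

variable [Nonempty ι]

lemma forall_pos_add_iff_neg_inf'_lt (c : ℝ) :
    (∀ i, 0 < g i + c) ↔ -univ.inf' univ_nonempty g < c := by
  simp only [neg_lt, lt_inf'_iff, mem_univ, forall_const, neg_lt_iff_pos_add]

lemma strictAntiOn_sum_rpow_add (hp : p < 0) :
    StrictAntiOn (fun c ↦ ∑ i, (g i + c) ^ p) (Set.Ioi (-univ.inf' univ_nonempty g)) := by
  intro x hx y _ hxy
  have hx' := (forall_pos_add_iff_neg_inf'_lt g x).2 hx
  exact sum_lt_sum_of_nonempty univ_nonempty fun i _ ↦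
    Real.rpow_lt_rpow_of_neg (hx' i) (by linarith) hp

lemma continuousOn_sum_rpow_add :
    ContinuousOn (fun c ↦ ∑ i, (g i + c) ^ p) (Set.Ioi (-univ.inf' univ_nonempty g)) := by
  refine continuousOn_finsetSum _ fun i _ ↦ ?_
  refine (continuousOn_const.add continuousOn_id).rpow_const fun c hc ↦ Or.inl ?_
  exact ((forall_pos_add_iff_neg_inf'_lt g c).2 hc i).ne'

lemma tendsto_sum_rpow_add_nhdsGT (hp : p < 0) :
    Tendsto (fun c ↦ ∑ i, (g i + c) ^ p) (𝓝[>] (-univ.inf' univ_nonempty g)) atTop := by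
  obtain ⟨i₀, -, hi₀⟩ := exists_mem_eq_inf' univ_nonempty g
  have h_base : Tendsto (fun c ↦ g i₀ + c) (𝓝[>] (-g i₀)) (𝓝[>] 0) := by
    refine tendsto_nhdsWithin_iff.2 ⟨?_, eventually_nhdsWithin_of_forall fun c hc ↦ ?_⟩
    · have h_lim : Tendsto (fun c ↦ g i₀ + c) (𝓝 (-g i₀)) (𝓝 (g i₀ + -g i₀)) :=
        tendsto_const_nhds.add tendsto_id
      rw [add_neg_cancel] at h_lim
      exact h_lim.mono_left nhdsWithin_le_nhds
    · simp only [Set.mem_Ioi] at hc ⊢; linarith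
  rw [hi₀]
  refine tendsto_atTop_mono' _ ?_ ((tendsto_rpow_neg_nhdsGT_zero hp).comp h_base)
  filter_upwards [self_mem_nhdsWithin] with c hc
  rw [← hi₀] at hc
  exact single_le_sum (fun i _ ↦ (Real.rpow_pos_of_pos
    ((forall_pos_add_iff_neg_inf'_lt g c).2 hc i) p).le) (mem_univ i₀)

theorem existsUnique_sum_rpow_add_eq (hp : p < 0) {y : ℝ} (hy : 0 < y) :
    ∃! c, -univ.inf' univ_nonempty g < c ∧ ∑ i, (g i + c) ^ p = y := by
  obtain ⟨c, hc, hcy⟩ := isPreconnected_Ioi.intermediate_value_Ioi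
    (le_principal_iff.2 (Ioi_mem_atTop _)) (le_principal_iff.2 self_mem_nhdsWithin)
    (continuousOn_sum_rpow_add g) (tendsto_sum_rpow_add_atTop g hp)
    (tendsto_sum_rpow_add_nhdsGT g hp) hy
  exact ⟨c, ⟨hc, hcy⟩, fun c' hc' ↦
    (strictAntiOn_sum_rpow_add g hp).injOn hc'.1 hc (hc'.2.trans hcy.symm)⟩

end

/-- Lemma: for `-1 < a < 0` and `g ∈ ℝ^m`, there is a unique `c ∈ ℝ` with
`g_i + c > 0` for all `i` (i.e. `c > -min_i g_i`) such that `∑_i (g_i + c)^{1/a} = 1`. -/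
theorem stmt14 {m : ℕ} (hm : 0 < m) (a : ℝ) (ha : a ∈ Set.Ioo (-1 : ℝ) 0)
    (g : Fin m → ℝ) :
    ∃! c : ℝ, (∀ i, 0 < g i + c) ∧ ∑ i, (g i + c) ^ (1 / a) = 1 := by
  have : Nonempty (Fin m) := ⟨⟨0, hm⟩⟩
  simpa only [forall_pos_add_iff_neg_inf'_lt] using
    existsUnique_sum_rpow_add_eq g (one_div_neg.2 ha.2) one_pos
end

section
/- Let −1 < a < 0, g ∈ ℝ^m, v ∈ Δ^m with all coordinates strictly positive, and κ ≥ 0. Let c be the unique real number with g_i + c > 0 for all i and ∑_{i=1}^m (g_i + c)^{1/a} = 1. Then: (i) if g_i ≤ v_i^a + κ for all i ∈ [m], then c ≥ −κ; and (ii) if g_i ≥ v_i^a − κ/v_i for all i ∈ [m], then c ≤ κ / (min_i v_i). -/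
open Finset

/-!
With `p = 1/a < 0`, the map `t ↦ t ^ p` is strictly decreasing on `(0, ∞)` and
`∑ (v_i ^ a) ^ p = ∑ v_i = 1 = ∑ (g_i + c) ^ p`. Two families with equal `p`-power sums
cannot be strictly ordered termwise, so some `i` has `v_i ^ a ≤ g_i + c` and some `j` has
`g_j + c ≤ v_j ^ a`; the respective hypothesis at that index gives the bound on `c`.
-/

theorem Finset.exists_le_of_sum_rpow_le_of_neg {ι : Type*} {s : Finset ι} (hs : s.Nonempty)
    {p : ℝ} (hp : p < 0) {x y : ι → ℝ} (hx : ∀ i ∈ s, 0 < x i)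
    (h : ∑ i ∈ s, x i ^ p ≤ ∑ i ∈ s, y i ^ p) : ∃ i ∈ s, y i ≤ x i := by
  obtain ⟨i, hi, hle⟩ := exists_le_of_sum_le hs h
  refine ⟨i, hi, le_of_not_gt fun hlt => ?_⟩
  exact (Real.rpow_lt_rpow_of_neg (hx i hi) hlt hp).not_ge hle

/-- Lemma (bounds on the normalizing constant): let `-1 < a < 0`, `v ∈ Δ^m` with
strictly positive coordinates, `κ ≥ 0`, and let `c` be the unique real with
`g_i + c > 0` for all `i` and `∑_i (g_i + c)^{1/a} = 1`.  Then
(i) if `g_i ≤ v_i^a + κ` for all `i`, then `c ≥ -κ`; and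
(ii) if `g_i ≥ v_i^a - κ/v_i` for all `i`, then `c ≤ κ / min_i v_i`. -/
theorem stmt15 {m : ℕ} (hm : 0 < m) (a : ℝ) (ha : a ∈ Set.Ioo (-1 : ℝ) 0)
    (g v : Fin m → ℝ) (hv : v ∈ stdSimplex ℝ (Fin m)) (hvpos : ∀ i, 0 < v i)
    (κ : ℝ) (hκ : 0 ≤ κ)
    (c : ℝ) (hcpos : ∀ i, 0 < g i + c) (hsum : ∑ i, (g i + c) ^ (1 / a) = 1) :
    ((∀ i, g i ≤ (v i) ^ a + κ) → -κ ≤ c) ∧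
    ((∀ i, (v i) ^ a - κ / v i ≤ g i) →
      c ≤ κ / (Finset.univ.inf'
        (Finset.univ_nonempty_iff.mpr (Fin.pos_iff_nonempty.mp hm)) v)) := by
  have hp : 1 / a < 0 := one_div_neg.mpr ha.2
  have hvsum : ∑ i, (v i ^ a) ^ (1 / a) = 1 := by
    simp_rw [one_div, fun i => Real.rpow_rpow_inv (hvpos i).le ha.2.ne]
    exact hv.2
  have hne := Finset.univ_nonempty_iff.mpr (Fin.pos_iff_nonempty.mp hm)
  constructor
  · intro hg
    obtain ⟨i, -, hi⟩ := exists_le_of_sum_rpow_le_of_neg hne hp (fun i _ => hcpos i)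
      (hsum.trans hvsum.symm).le
    linarith [hg i]
  · intro hg
    obtain ⟨i, -, hi⟩ := exists_le_of_sum_rpow_le_of_neg hne hp
      (fun i _ => Real.rpow_pos_of_pos (hvpos i) a) (hvsum.trans hsum.symm).le
    calc c ≤ κ / v i := by linarith [hg i]
      _ ≤ κ / univ.inf' hne v :=
        div_le_div_of_nonneg_left hκ ((lt_inf'_iff hne).mpr fun j _ => hvpos j)
          (inf'_le v (mem_univ i))
end

section
/- Let −1 < a < 0, g ∈ ℝ^m, v ∈ Δ^m with all coordinates strictly positive, and κ ≥ 0. Let c be the unique real number with g_i + c > 0 for all i and ∑_{i=1}^m (g_i + c)^{1/a} = 1. If g_i ≥ v_i^a − κ/v_i and κ ≤ a² v_i^{a+1} for all i ∈ [m], then c ≤ m κ. -/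
/-!
Put `F t = (t ^ a + m κ - κ / t) ^ (1 / a)`. Since `(m⁻¹) ^ (-1) = m`, the `κ`-terms cancel at the
barycentre and `F (1 / m) = 1 / m`. The hypothesis `κ ≤ a² v_i ^ (a + 1)` makes `F` concave on
`[min v, ∞)`, so Jensen gives `∑ F (v i) ≤ m F (1 / m) = 1`. As `g i + m κ ≥ v_i ^ a - κ / v_i + m κ`
and `x ↦ x ^ (1 / a)` is decreasing, `∑ (g i + m κ) ^ (1 / a) ≤ 1 = ∑ (g i + c) ^ (1 / a)`,
which forces `c ≤ m κ`.
-/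

open Finset

/-- For `p ≤ 0`, `(X ^ p)'' = p X ^ (p - 2) (X X'' - (1 - p) X' ^ 2)`. -/
theorem concaveOn_rpow_comp_of_sq_deriv_le {s : Set ℝ} (hs : Convex ℝ s) {p : ℝ} (hp : p ≤ 0)
    {X X' X'' : ℝ → ℝ} (hX : ∀ t ∈ s, 0 < X t) (hX' : ∀ t ∈ s, HasDerivAt X (X' t) t)
    (hX'' : ∀ t ∈ interior s, HasDerivAt X' (X'' t) t)
    (hle : ∀ t ∈ interior s, (1 - p) * X' t ^ 2 ≤ X t * X'' t) :
    ConcaveOn ℝ s (fun t => X t ^ p) := by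
  have hF : ∀ t ∈ s, HasDerivAt (fun t => X t ^ p) (X' t * p * X t ^ (p - 1)) t := fun t ht =>
    (hX' t ht).rpow_const (Or.inl (hX t ht).ne')
  refine concaveOn_of_hasDerivWithinAt2_nonpos hs
    (fun t ht => (hF t ht).continuousAt.continuousWithinAt)
    (fun t ht => (hF t (interior_subset ht)).hasDerivWithinAt)
    (f'' := fun t => X'' t * p * X t ^ (p - 1) + X' t * p * (X' t * (p - 1) * X t ^ (p - 1 - 1)))
    (fun t ht => (((hX'' t ht).mul_const p).mul
      ((hX' t (interior_subset ht)).rpow_const (Or.inl (hX t (interior_subset ht)).ne')))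
        |>.hasDerivWithinAt) fun t ht => ?_
  have hXt := hX t (interior_subset ht)
  have hsplit : X t ^ (p - 1) = X t ^ (p - 1 - 1) * X t := by
    rw [← Real.rpow_add_one hXt.ne']; ring_nf
  have hfactor : X'' t * p * X t ^ (p - 1) + X' t * p * (X' t * (p - 1) * X t ^ (p - 1 - 1))
      = p * X t ^ (p - 1 - 1) * (X t * X'' t - (1 - p) * X' t ^ 2) := by
    rw [hsplit]; ring
  rw [hfactor]
  exact mul_nonpos_of_nonpos_of_nonneg
    (mul_nonpos_of_nonpos_of_nonneg hp (Real.rpow_pos_of_pos hXt _).le)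
    (sub_nonneg.mpr (hle t ht))

/-- With `A = t ^ a` and `b = κ / t`, this is `(1 - 1 / a) (t X') ^ 2 ≤ X (t ^ 2 X'')` for
`X t = t ^ a + K - κ / t`. -/
theorem one_sub_inv_mul_sq_le {a A b K : ℝ} (ha : a ∈ Set.Ioo (-1 : ℝ) 0) (hb : 0 ≤ b)
    (hbA : b ≤ a ^ 2 * A) (hK : 0 ≤ K) :
    (1 - 1 / a) * (a * A + b) ^ 2 ≤ (A + K - b) * (a * (a - 1) * A - 2 * b) := by
  obtain ⟨ha1, ha2⟩ := ha
  have ha0 : a ≠ 0 := ha2.ne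
  have hdiff : (A + K - b) * (a * (a - 1) * A - 2 * b) - (1 - 1 / a) * (a * A + b) ^ 2
      = (1 + a) * b / a * (b - a ^ 2 * A) + K * (a * (a - 1) * A - 2 * b) := by
    field_simp; ring
  have h1 : 0 ≤ (1 + a) * b / a * (b - a ^ 2 * A) :=
    mul_nonneg_of_nonpos_of_nonpos
      (div_nonpos_of_nonneg_of_nonpos (mul_nonneg (by linarith) hb) ha2.le) (by linarith)
  have h2 : 0 ≤ a * (a - 1) * A - 2 * b := by nlinarith
  nlinarith [mul_nonneg hK h2]

theorem mul_rpow_neg_one_le_sq_mul_rpow {a κ t₀ t : ℝ} (ha : -1 < a) (ht₀ : 0 < t₀) (ht : t₀ ≤ t)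
    (hκt₀ : κ ≤ a ^ 2 * t₀ ^ (a + 1)) : κ * t ^ (-1 : ℝ) ≤ a ^ 2 * t ^ a := by
  have htpos : 0 < t := ht₀.trans_le ht
  calc κ * t ^ (-1 : ℝ) ≤ a ^ 2 * t ^ (a + 1) * t ^ (-1 : ℝ) := by
        gcongr
        exact hκt₀.trans (by gcongr; linarith)
    _ = a ^ 2 * t ^ a := by
        rw [mul_assoc, ← Real.rpow_add htpos]; ring_nf

theorem rpow_add_sub_mul_rpow_neg_one_pos {a κ K t₀ t : ℝ} (ha : a ∈ Set.Ioo (-1 : ℝ) 0)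
    (hK : 0 ≤ K) (ht₀ : 0 < t₀) (ht : t₀ ≤ t) (hκt₀ : κ ≤ a ^ 2 * t₀ ^ (a + 1)) :
    0 < t ^ a + K - κ * t ^ (-1 : ℝ) := by
  have hA : 0 < t ^ a := Real.rpow_pos_of_pos (ht₀.trans_le ht) a
  have ha_sq : a ^ 2 < 1 := by nlinarith [ha.1, ha.2]
  nlinarith [mul_rpow_neg_one_le_sq_mul_rpow ha.1 ht₀ ht hκt₀, mul_lt_mul_of_pos_right ha_sq hA]

theorem concaveOn_rpow_add_sub_mul_rpow_neg_one {a κ K t₀ : ℝ} (ha : a ∈ Set.Ioo (-1 : ℝ) 0)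
    (hκ : 0 ≤ κ) (hK : 0 ≤ K) (ht₀ : 0 < t₀) (hκt₀ : κ ≤ a ^ 2 * t₀ ^ (a + 1)) :
    ConcaveOn ℝ (Set.Ici t₀) (fun t => (t ^ a + K - κ * t ^ (-1 : ℝ)) ^ (1 / a)) := by
  have hpos : ∀ t ∈ Set.Ici t₀, 0 < t := fun t ht => ht₀.trans_le ht
  refine concaveOn_rpow_comp_of_sq_deriv_le (convex_Ici t₀)
    (div_nonpos_of_nonneg_of_nonpos zero_le_one ha.2.le)
    (X' := fun t => a * t ^ (a - 1) + κ * t ^ ((-1 : ℝ) - 1))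
    (X'' := fun t => a * ((a - 1) * t ^ (a - 1 - 1)) + κ * ((-1 - 1) * t ^ ((-1 : ℝ) - 1 - 1)))
    (fun t ht => rpow_add_sub_mul_rpow_neg_one_pos ha hK ht₀ ht hκt₀) (fun t ht => ?_)
    (fun t ht => ?_) (fun t ht => ?_)
  · exact (((Real.hasDerivAt_rpow_const (Or.inl (hpos t ht).ne')).add_const K).sub
      ((Real.hasDerivAt_rpow_const (Or.inl (hpos t ht).ne')).const_mul κ)).congr_deriv (by ring)
  · have ht' : 0 < t := hpos t (interior_subset ht)
    exact ((Real.hasDerivAt_rpow_const (Or.inl ht'.ne')).const_mul a).add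
      ((Real.hasDerivAt_rpow_const (Or.inl ht'.ne')).const_mul κ)
  · have ht' : 0 < t := hpos t (interior_subset ht)
    have key := one_sub_inv_mul_sq_le ha (mul_nonneg hκ (Real.rpow_nonneg ht'.le _))
      (mul_rpow_neg_one_le_sq_mul_rpow ha.1 ht₀ (interior_subset ht) hκt₀) hK
    simp only [Real.rpow_sub_one ht'.ne']
    calc _ = (1 - 1 / a) * (a * t ^ a + κ * t ^ (-1 : ℝ)) ^ 2 / t ^ 2 := by ring
      _ ≤ (t ^ a + K - κ * t ^ (-1 : ℝ)) * (a * (a - 1) * t ^ a - 2 * (κ * t ^ (-1 : ℝ)))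
          / t ^ 2 := by gcongr
      _ = _ := by ring

theorem ConcaveOn.sum_le_card_mul_of_mem_stdSimplex {ι : Type*} [Fintype ι] [Nonempty ι]
    {s : Set ℝ} {f : ℝ → ℝ} (hf : ConcaveOn ℝ s f) {v : ι → ℝ} (hv : v ∈ stdSimplex ℝ ι)
    (hvs : ∀ i, v i ∈ s) : ∑ i, f (v i) ≤ Fintype.card ι * f (Fintype.card ι)⁻¹ := by
  have hn : (0 : ℝ) < Fintype.card ι := Nat.cast_pos.mpr Fintype.card_pos
  have hJ := hf.le_map_sum (t := univ) (w := fun _ => (Fintype.card ι : ℝ)⁻¹)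
    (fun _ _ => inv_nonneg.mpr hn.le) (by simp [hn.ne']) (fun i _ => hvs i)
  rw [← smul_sum, ← smul_sum, hv.2, smul_eq_mul, smul_eq_mul, mul_one] at hJ
  rwa [inv_mul_le_iff₀ hn] at hJ

theorem le_of_sum_rpow_add_le_sum_rpow_add {ι : Type*} [Fintype ι] [Nonempty ι] {g : ι → ℝ}
    {p c d : ℝ} (hp : p < 0) (hd : ∀ i, 0 < g i + d)
    (hle : ∑ i, (g i + d) ^ p ≤ ∑ i, (g i + c) ^ p) : c ≤ d := by
  by_contra! hdc
  refine hle.not_gt (sum_lt_sum_of_nonempty univ_nonempty fun i _ => ?_)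
  exact Real.rpow_lt_rpow_of_neg (hd i) (by linarith) hp

theorem stmt16_general {m : ℕ} (hm : 0 < m) (a : ℝ) (ha : a ∈ Set.Ioo (-1 : ℝ) 0)
    (g v : Fin m → ℝ) (hv : v ∈ stdSimplex ℝ (Fin m)) (hvpos : ∀ i, 0 < v i)
    (κ : ℝ) (hκ : 0 ≤ κ)
    (c : ℝ) (hsum : ∑ i, (g i + c) ^ (1 / a) = 1)
    (hg : ∀ i, (v i) ^ a - κ / v i ≤ g i)
    (hκ' : ∀ i, κ ≤ a ^ 2 * (v i) ^ (a + 1)) :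
    c ≤ m * κ := by
  have : Nonempty (Fin m) := ⟨⟨0, hm⟩⟩
  have hκm : 0 ≤ κ * m := by positivity
  obtain ⟨i₀, -, hmin⟩ := exists_min_image univ v univ_nonempty
  have hXpos (i : Fin m) : 0 < v i ^ a + κ * m - κ * v i ^ (-1 : ℝ) :=
    rpow_add_sub_mul_rpow_neg_one_pos ha hκm (hvpos i) le_rfl (hκ' i)
  have hXle (i : Fin m) : v i ^ a + κ * m - κ * v i ^ (-1 : ℝ) ≤ g i + m * κ := by
    rw [Real.rpow_neg_one, ← div_eq_mul_inv]; linarith [hg i]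
  have hbarycentre : ((m : ℝ)⁻¹ ^ a + κ * m - κ * (m : ℝ)⁻¹ ^ (-1 : ℝ)) ^ (1 / a) = (m : ℝ)⁻¹ := by
    rw [Real.rpow_neg_one, inv_inv, add_sub_cancel_right, ← Real.rpow_mul (by positivity),
      mul_one_div_cancel ha.2.ne, Real.rpow_one]
  refine le_of_sum_rpow_add_le_sum_rpow_add (one_div_neg.mpr ha.2)
    (fun i => (hXpos i).trans_le (hXle i)) ?_
  calc ∑ i, (g i + m * κ) ^ (1 / a)
      ≤ ∑ i, (v i ^ a + κ * m - κ * v i ^ (-1 : ℝ)) ^ (1 / a) := sum_le_sum fun i _ =>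
        Real.rpow_le_rpow_of_nonpos (hXpos i) (hXle i) (one_div_neg.mpr ha.2).le
    _ ≤ m * (m : ℝ)⁻¹ := by
        simpa only [Fintype.card_fin, hbarycentre] using
          (concaveOn_rpow_add_sub_mul_rpow_neg_one ha hκ hκm (hvpos i₀) (hκ' i₀)
            ).sum_le_card_mul_of_mem_stdSimplex hv fun i => hmin i (mem_univ i)
    _ = ∑ i, (g i + c) ^ (1 / a) := by rw [hsum, mul_inv_cancel₀ (by positivity)]

/-- Lemma (refined upper bound on the normalizing constant): let `-1 < a < 0`,
`v ∈ Δ^m` with strictly positive coordinates, `κ ≥ 0`, and let `c` be the unique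
real with `g_i + c > 0` for all `i` and `∑_i (g_i + c)^{1/a} = 1`.  If
`g_i ≥ v_i^a - κ/v_i` and `κ ≤ a² v_i^{a+1}` for all `i`, then `c ≤ m κ`. -/
theorem stmt16 {m : ℕ} (hm : 0 < m) (a : ℝ) (ha : a ∈ Set.Ioo (-1 : ℝ) 0)
    (g v : Fin m → ℝ) (hv : v ∈ stdSimplex ℝ (Fin m)) (hvpos : ∀ i, 0 < v i)
    (κ : ℝ) (hκ : 0 ≤ κ)
    (c : ℝ) (hcpos : ∀ i, 0 < g i + c) (hsum : ∑ i, (g i + c) ^ (1 / a) = 1)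
    (hg : ∀ i, (v i) ^ a - κ / v i ≤ g i)
    (hκ' : ∀ i, κ ≤ a ^ 2 * (v i) ^ (a + 1)) :
    c ≤ m * κ :=
  stmt16_general hm a ha g v hv hvpos κ hκ c hsum hg hκ'
end

section
/- Let −1 < a < 0 and κ, c ≥ 0, and define f(x) = (x^a − κ/x + c)^{1/a}. Then for every x > 0 with a² x^{a+1} ≥ κ, the quantity x^a − κ/x + c is strictly positive (so f is defined), and f is concave on the set {x > 0 : a² x^{a+1} ≥ κ}, which is an interval of the form [(κ/a²)^{1/(a+1)}, ∞) intersected with (0, ∞). -/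
/-!
Write `g x = x ^ a - κ / x + c` and `p = 1 / a < 0`. On the constraint set `κ / x ≤ a² x^a`, so
`g x ≥ (1 - a²) x^a + c > 0`. Since `(g ^ p)'' = p g^(p-2) (g g'' + (p - 1) g'²)`, concavity reduces
to `a g g'' + (1 - a) g'² ≤ 0`; multiplied by `x⁴` this is a polynomial inequality in `u = x^(a+1)`
and `c x`, which follows from `κ ≤ a² u` and `-1 < a < 0`. The constraint set is an up-ray because
`x ↦ x^(a+1)` is increasing, so it is convex.
-/

lemma setOf_le_mul_rpow_eq {b m κ : ℝ} (hb : 0 < b) (hm : 0 < m) (hκ : 0 ≤ κ) :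
    {x : ℝ | 0 < x ∧ κ ≤ m * x ^ b} = Set.Ici ((κ / m) ^ (1 / b)) ∩ Set.Ioi 0 := by
  ext x
  simp only [Set.mem_ofPred_eq, Set.mem_inter_iff, Set.mem_Ici, Set.mem_Ioi]
  rw [and_comm]
  refine and_congr_left fun hx => ?_
  rw [one_div, Real.rpow_inv_le_iff_of_pos (by positivity) hx.le hb, div_le_iff₀' hm]

lemma rpow_sub_div_add_pos {a κ c x : ℝ} (ha : a ^ 2 < 1) (hc : 0 ≤ c) (hx : 0 < x)
    (hκx : κ ≤ a ^ 2 * x ^ (a + 1)) : 0 < x ^ a - κ / x + c := by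
  have hxa : 0 < x ^ a := Real.rpow_pos_of_pos hx a
  have hκx' : κ / x ≤ a ^ 2 * x ^ a := by
    rw [div_le_iff₀ hx, mul_assoc, ← Real.rpow_add_one hx.ne']
    exact hκx
  nlinarith [mul_pos (sub_pos.2 ha) hxa]

lemma concaveOn_rpow_of_hasDerivAt2 {s : Set ℝ} (hs : Convex ℝ s) {g g' g'' : ℝ → ℝ} {p : ℝ}
    (hp : p ≤ 0) (hg : ContinuousOn g s) (hg₀ : ∀ x ∈ s, 0 < g x)
    (hg' : ∀ x ∈ interior s, HasDerivAt g (g' x) x)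
    (hg'' : ∀ x ∈ interior s, HasDerivAt g' (g'' x) x)
    (hB : ∀ x ∈ interior s, 0 ≤ g x * g'' x + (p - 1) * g' x ^ 2) :
    ConcaveOn ℝ s (fun x => g x ^ p) := by
  have hpos : ∀ x ∈ interior s, 0 < g x := fun x hx => hg₀ x (interior_subset hx)
  refine concaveOn_of_hasDerivWithinAt2_nonpos hs
    (hg.rpow_const fun x hx => Or.inl (hg₀ x hx).ne')
    (f' := fun x => g' x * p * g x ^ (p - 1))
    (f'' := fun x => g'' x * p * g x ^ (p - 1) + g' x * p * (g' x * (p - 1) * g x ^ (p - 1 - 1)))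
    (fun x hx => ((hg' x hx).rpow_const (Or.inl (hpos x hx).ne')).hasDerivWithinAt)
    (fun x hx => (((hg'' x hx).mul_const p).mul
      ((hg' x hx).rpow_const (Or.inl (hpos x hx).ne'))).hasDerivWithinAt) fun x hx => ?_
  have hsplit : g x ^ (p - 1) = g x ^ (p - 1 - 1) * g x := by
    rw [← Real.rpow_add_one (hpos x hx).ne', sub_add_cancel]
  calc _ = p * g x ^ (p - 1 - 1) * (g x * g'' x + (p - 1) * g' x ^ 2) := by
        rw [hsplit]; ring
    _ ≤ 0 := mul_nonpos_of_nonpos_of_nonneg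
        (mul_nonpos_of_nonpos_of_nonneg hp (Real.rpow_pos_of_pos (hpos x hx) _).le) (hB x hx)

lemma hasDerivAt_rpow_sub_div_add (a κ c : ℝ) {x : ℝ} (hx : 0 < x) :
    HasDerivAt (fun x => x ^ a - κ / x + c) (a * x ^ (a - 1) + κ / x ^ 2) x := by
  simp only [div_eq_mul_inv]
  exact (((Real.hasDerivAt_rpow_const (Or.inl hx.ne')).fun_sub
    ((hasDerivAt_inv hx.ne').const_mul κ)).add_const c).congr_deriv (by ring)

lemma hasDerivAt_mul_rpow_add_div_sq (a κ : ℝ) {x : ℝ} (hx : 0 < x) :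
    HasDerivAt (fun x => a * x ^ (a - 1) + κ / x ^ 2)
      (a * (a - 1) * x ^ (a - 2) - 2 * κ / x ^ 3) x := by
  simp only [div_eq_mul_inv]
  refine (((Real.hasDerivAt_rpow_const (Or.inl hx.ne')).const_mul a).fun_add
    (((hasDerivAt_pow 2 x).inv (by positivity)).const_mul κ)).congr_deriv ?_
  rw [show a - 1 - 1 = a - 2 by ring]
  field_simp
  ring

lemma one_sub_mul_sq_add_mul_mul_nonpos {a κ d u : ℝ} (ha : a ∈ Set.Ioo (-1 : ℝ) 0) (hκ : 0 ≤ κ)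
    (hd : 0 ≤ d) (hu : 0 < u) (hκu : κ ≤ a ^ 2 * u) :
    (1 - a) * (a * u + κ) ^ 2 + a * (u - κ + d) * (a * (a - 1) * u - 2 * κ) ≤ 0 := by
  obtain ⟨ha₁, ha₀⟩ := ha
  have hfac : 0 ≤ a * (a - 1) * u - 2 * κ := by
    nlinarith [mul_nonneg (mul_nonneg (by linarith : (0 : ℝ) ≤ -a)
      (by linarith : (0 : ℝ) ≤ 1 + a)) hu.le]
  nlinarith [mul_nonneg (mul_nonneg (by linarith : (0 : ℝ) ≤ 1 + a) hκ)
      (by linarith : (0 : ℝ) ≤ a ^ 2 * u - κ),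
    mul_nonneg (mul_nonneg (by linarith : (0 : ℝ) ≤ -a) hd) hfac]

lemma rpow_sub_div_add_mul_deriv2_add_sq_nonneg {a κ c x : ℝ} (ha : a ∈ Set.Ioo (-1 : ℝ) 0)
    (hκ : 0 ≤ κ) (hc : 0 ≤ c) (hx : 0 < x) (hκx : κ ≤ a ^ 2 * x ^ (a + 1)) :
    0 ≤ (x ^ a - κ / x + c) * (a * (a - 1) * x ^ (a - 2) - 2 * κ / x ^ 3)
      + (1 / a - 1) * (a * x ^ (a - 1) + κ / x ^ 2) ^ 2 := by
  refine nonneg_of_mul_nonpos_right ?_ ha.2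
  rw [Real.rpow_add_one hx.ne'] at hκx
  have hnum := one_sub_mul_sq_add_mul_mul_nonpos ha hκ (mul_nonneg hc hx.le)
    (mul_pos (Real.rpow_pos_of_pos hx a) hx) hκx
  rw [Real.rpow_sub_one hx.ne', show a - 2 = a - (2 : ℕ) by norm_num,
    Real.rpow_sub_natCast hx.ne']
  generalize x ^ a = y at hnum ⊢
  have ha₀ : a ≠ 0 := ha.2.ne
  calc _ = ((1 - a) * (a * (y * x) + κ) ^ 2
        + a * (y * x - κ + c * x) * (a * (a - 1) * (y * x) - 2 * κ)) / x ^ 4 := by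
        field_simp
        ring
    _ ≤ 0 := div_nonpos_of_nonpos_of_nonneg hnum (by positivity)

/-- Claim: for `-1 < a < 0` and `κ, c ≥ 0`, the function
`f(x) = (x^a - κ/x + c)^{1/a}` is defined (its base is strictly positive) at every
`x > 0` with `a² x^{a+1} ≥ κ`, and `f` is concave on the set
`{x > 0 : a² x^{a+1} ≥ κ}`, which equals `[(κ/a²)^{1/(a+1)}, ∞) ∩ (0, ∞)`. -/
theorem stmt17 (a κ c : ℝ) (ha : a ∈ Set.Ioo (-1 : ℝ) 0) (hκ : 0 ≤ κ) (hc : 0 ≤ c) :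
    (∀ x : ℝ, 0 < x → κ ≤ a ^ 2 * x ^ (a + 1) → 0 < x ^ a - κ / x + c) ∧
    ConcaveOn ℝ {x : ℝ | 0 < x ∧ κ ≤ a ^ 2 * x ^ (a + 1)}
      (fun x => (x ^ a - κ / x + c) ^ (1 / a)) ∧
    {x : ℝ | 0 < x ∧ κ ≤ a ^ 2 * x ^ (a + 1)} =
      Set.Ici ((κ / a ^ 2) ^ (1 / (a + 1))) ∩ Set.Ioi (0 : ℝ) := by
  have hsq : a ^ 2 < 1 := by nlinarith [ha.1, ha.2]
  have hbase : ∀ x : ℝ, 0 < x → κ ≤ a ^ 2 * x ^ (a + 1) → 0 < x ^ a - κ / x + c :=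
    fun x hx hκx => rpow_sub_div_add_pos hsq hc hx hκx
  have hset := setOf_le_mul_rpow_eq (b := a + 1) (m := a ^ 2) (by linarith [ha.1])
    (by positivity [ha.2.ne]) hκ
  refine ⟨hbase, ?_, hset⟩
  set S := {x : ℝ | 0 < x ∧ κ ≤ a ^ 2 * x ^ (a + 1)}
  have hsub : interior S ⊆ S := interior_subset
  exact concaveOn_rpow_of_hasDerivAt2 (hset ▸ (convex_Ici _).inter (convex_Ioi 0))
    (one_div_neg.2 ha.2).le
    (fun x hx => (hasDerivAt_rpow_sub_div_add a κ c hx.1).continuousAt.continuousWithinAt)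
    (fun x hx => hbase x hx.1 hx.2)
    (fun x hx => hasDerivAt_rpow_sub_div_add a κ c (hsub hx).1)
    (fun x hx => hasDerivAt_mul_rpow_add_div_sq a κ (hsub hx).1)
    (fun x hx => rpow_sub_div_add_mul_deriv2_add_sq_nonneg ha hκ hc (hsub hx).1 (hsub hx).2)
end

section
/- Fix x > 0 and −1 < a < 0, and define f(y) = (x^a + y)^{1/a} for y > −x^a. Then for every c with −1 < c ≤ 0 and every y with c x^a ≤ y ≤ 0, f(y) − x ≤ (1/a) (1 + c)^{1/a − 1} x^{1−a} y. -/
/-! With `u = x^a`, `p = 1/a` and `t = u + y`, the claim is a secant bound for `t ↦ t^p` on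
`[(1 + c) u, u]`. For `p ≤ 0` the derivative `p t^(p-1)` is increasing, so by the mean value
theorem `u^p - t^p ≥ p m^(p-1) (u - t)` where `m = (1 + c) u` is the left end of the interval;
finally `u^p = x` and `m^(p-1) = (1 + c)^(1/a - 1) x^(1-a)`. -/

open Real Set

lemma mul_rpow_sub_one_le_of_nonpos {p m s : ℝ} (hp : p ≤ 0) (hm : 0 < m) (hms : m ≤ s) :
    p * m ^ (p - 1) ≤ p * s ^ (p - 1) :=
  mul_le_mul_of_nonpos_left (rpow_le_rpow_of_nonpos hm hms (by linarith)) hp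

lemma rpow_sub_rpow_le_of_nonpos {p m t u : ℝ} (hp : p ≤ 0) (hm : 0 < m) (hmt : m ≤ t)
    (htu : t ≤ u) : t ^ p - u ^ p ≤ p * m ^ (p - 1) * (t - u) := by
  have hderiv : ∀ s ∈ interior (Ici m), p * m ^ (p - 1) ≤ deriv (fun s ↦ s ^ p) s := by
    intro s hs
    rw [interior_Ici, mem_Ioi] at hs
    rw [Real.deriv_rpow_const]
    exact mul_rpow_sub_one_le_of_nonpos hp hm hs.le
  have hpos : ∀ s ∈ Ici m, s ≠ 0 := fun s hs ↦ (hm.trans_le hs).ne'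
  have := (convex_Ici m).mul_sub_le_image_sub_of_le_deriv
    (continuousOn_id.rpow_const fun s hs ↦ Or.inl (hpos s hs))
    (fun s hs ↦ (differentiableAt_rpow_const_of_ne p
      (hpos s (interior_subset hs))).differentiableWithinAt)
    hderiv t hmt u (hmt.trans htu) htu
  simp only [id] at this
  linarith

/-- Claim (second part): for `x > 0`, `-1 < a < 0` and `f(y) = (x^a + y)^{1/a}`,
for every `-1 < c ≤ 0` and every `y` with `c x^a ≤ y ≤ 0`, we have
`f(y) - x ≤ (1/a) (1 + c)^{1/a - 1} x^{1-a} y`. -/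
theorem stmt19 (x a : ℝ) (hx : 0 < x) (ha : a ∈ Set.Ioo (-1 : ℝ) 0) :
    ∀ c : ℝ, -1 < c → c ≤ 0 →
      ∀ y : ℝ, c * x ^ a ≤ y → y ≤ 0 →
        (x ^ a + y) ^ (1 / a) - x ≤ (1 / a) * (1 + c) ^ (1 / a - 1) * x ^ (1 - a) * y := by
  intro c hc _ y hcy hy
  have hxa : 0 < x ^ a := rpow_pos_of_pos hx a
  have hc' : 0 < 1 + c := by linarith
  have hu : (x ^ a) ^ (1 / a) = x := by rw [one_div, rpow_rpow_inv hx.le ha.2.ne]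
  have hm : ((1 + c) * x ^ a) ^ (1 / a - 1) = (1 + c) ^ (1 / a - 1) * x ^ (1 - a) := by
    rw [mul_rpow hc'.le hxa.le, ← rpow_mul hx.le]
    congr 2
    field_simp [ha.2.ne]
  have hsecant := rpow_sub_rpow_le_of_nonpos (p := 1 / a) (u := x ^ a)
    (one_div_neg.2 ha.2).le (mul_pos hc' hxa) (by linarith) (by linarith : x ^ a + y ≤ x ^ a)
  rw [hu, hm, add_sub_cancel_left] at hsecant
  linarith
end
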